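/- arXiv:1909.09412 — 10 statements merged into one kernel-verified Lean document; each statement's English description precedes it below -/
import Mathlib

section
/- Suppose Assumptions (No Dynamics), (Latent Unconfoundedness) and the outcome model hold, and let ω ∈ 𝕎_outc. Then the estimand τ(ω) := E[(1/T)·Σ_{t=1}^T Y_t · ω_{k(i)t}] equals E[τ(U)·ξ], where ξ := (1/T)·Σ_{t=1}^T ω_{k(i)t}·𝐖_{k(i)t} satisfies ξ ≥ 0 almost surely and E[ξ] = 1; in particular τ(ω) is a convex combination of the conditional treatment effects τ(U). -/
/-!
On each fibre `{k(i) = k}` of the assignment, latent unconfoundedness lets one replace every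
potential outcome `Y_t(w)` by its conditional mean `α(U) + λ_t + τ(U)·w` without changing the
integral: for `Z` measurable with respect to the potential outcomes and `h = P(W ∈ A | U)`,
`∫_{W ∈ A} Z = ∫ h·Z = ∫ h·E[Z | U] = ∫_{W ∈ A} E[Z | U]`, the first equality because
the measures `1_{W ∈ A}·μ` and `h·μ` agree on `σ(Y)` by conditional independence.
After the replacement the row constraints `Σ_t ω_{kt} = 0` remove `α(U)`, the column
constraints `Σ_k π_k ω_{kt} = 0` remove `λ_t` once the fibres are summed, and `τ(U)·ξ` is
what remains.
-/

open MeasureTheory ProbabilityTheory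

namespace MeasureTheory

section Trim

variable {Ω : Type*} {m mΩ : MeasurableSpace Ω} {μ : Measure Ω}

lemma setIntegral_eq_integral_mul_of_forall_measureReal_inter [IsFiniteMeasure μ] (hm : m ≤ mΩ)
    {s : Set Ω} {h : Ω → ℝ} (hh_meas : Measurable h) (hh_int : Integrable h μ)
    (hh_nonneg : 0 ≤ᵐ[μ] h)
    (hsh : ∀ B, MeasurableSet[m] B → μ.real (s ∩ B) = ∫ ω in B, h ω ∂μ)
    {Z : Ω → ℝ} (hZ : StronglyMeasurable[m] Z) :
    ∫ ω in s, Z ω ∂μ = ∫ ω, h ω * Z ω ∂μ := by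
  set ρ : Ω → ENNReal := fun ω => ENNReal.ofReal (h ω)
  have htrim : (μ.restrict s).trim hm = (μ.withDensity ρ).trim hm := by
    refine @Measure.ext _ m _ _ fun B hB => ?_
    rw [trim_measurableSet_eq hm hB, trim_measurableSet_eq hm hB,
      Measure.restrict_apply (hm B hB), withDensity_apply _ (hm B hB),
      ← ofReal_integral_eq_lintegral_ofReal hh_int.restrict (ae_restrict_of_ae hh_nonneg),
      ← hsh B hB, Set.inter_comm, ofReal_measureReal]
  calc ∫ ω in s, Z ω ∂μ = ∫ ω, Z ω ∂(μ.withDensity ρ) := by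
        rw [integral_trim hm hZ, htrim, ← integral_trim hm hZ]
    _ = ∫ ω, (ρ ω).toReal • Z ω ∂μ :=
        integral_withDensity_eq_integral_toReal_smul (ENNReal.measurable_ofReal.comp hh_meas)
          (.of_forall fun _ => ENNReal.ofReal_lt_top) Z
    _ = ∫ ω, h ω * Z ω ∂μ :=
        integral_congr_ae (hh_nonneg.mono fun ω hω => by simp [ρ, ENNReal.toReal_ofReal hω])

lemma condExp_indicator_mem_Icc [IsFiniteMeasure μ] (hm : m ≤ mΩ) {s : Set Ω}
    (hs : MeasurableSet s) :
    ∀ᵐ ω ∂μ, (μ⟦s | m⟧) ω ∈ Set.Icc (0 : ℝ) 1 := by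
  have h_nonneg : 0 ≤ᵐ[μ] μ⟦s | m⟧ :=
    condExp_nonneg (.of_forall fun ω => Set.indicator_nonneg (fun _ _ => zero_le_one) ω)
  have h_le : μ⟦s | m⟧ ≤ᵐ[μ] μ[fun _ => (1 : ℝ) | m] :=
    condExp_mono ((integrable_const 1).indicator hs) (integrable_const 1)
      (.of_forall fun ω => Set.indicator_le_self' (fun _ _ => zero_le_one) ω)
  rw [condExp_const hm] at h_le
  filter_upwards [h_nonneg, h_le] with ω h0 h1 using ⟨h0, h1⟩

lemma setIntegral_eq_integral_condExp_indicator_mul [IsFiniteMeasure μ] (hm : m ≤ mΩ)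
    {s : Set Ω} (hs : MeasurableSet s) {f : Ω → ℝ} (hf : StronglyMeasurable[m] f) :
    ∫ ω in s, f ω ∂μ = ∫ ω, (μ⟦s | m⟧) ω * f ω ∂μ := by
  refine setIntegral_eq_integral_mul_of_forall_measureReal_inter hm
    (stronglyMeasurable_condExp.mono hm).measurable integrable_condExp
    ((condExp_indicator_mem_Icc hm hs).mono fun _ h => h.1) (fun B hB => ?_) hf
  rw [setIntegral_condExp hm ((integrable_const 1).indicator hs) hB,
    integral_indicator_const _ hs, measureReal_restrict_apply hs, Set.inter_comm, smul_eq_mul,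
    mul_one]

end Trim

section Fibres

variable {Ω ι κ : Type*} {mΩ : MeasurableSpace Ω} {μ : Measure Ω}
  [Fintype κ] [MeasurableSpace κ] [MeasurableSingletonClass κ] {X : Ω → κ}

lemma integral_comp_eq_sum_setIntegral (hX : Measurable X) {G : κ → Ω → ℝ}
    (hG : ∀ k, Integrable (G k) μ) :
    ∫ ω, G (X ω) ω ∂μ = ∑ k, ∫ ω in X ⁻¹' {k}, G k ω ∂μ := by
  have h_split : (fun ω => G (X ω) ω) = fun ω => ∑ k, (X ⁻¹' {k}).indicator (G k) ω := by
    classical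
    funext ω
    simp [Set.indicator_apply]
  rw [h_split, integral_finsetSum _ fun k _ => (hG k).indicator (hX (measurableSet_singleton k))]
  exact Finset.sum_congr rfl fun k _ => integral_indicator (hX (measurableSet_singleton k))

lemma integral_comp_eq_sum_measureReal_mul [IsFiniteMeasure μ] (hX : Measurable X)
    (φ : κ → ℝ) :
    ∫ ω, φ (X ω) ∂μ = ∑ k, μ.real (X ⁻¹' {k}) * φ k := by
  rw [integral_comp_eq_sum_setIntegral hX (G := fun k _ => φ k) fun _ => integrable_const _]
  simp only [setIntegral_const, smul_eq_mul]

variable [Fintype ι]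

lemma integral_const_mul_sum_observed (c : ℝ) (W w : ι → ℝ) {Y0 Y1 : ι → Ω → ℝ}
    (hY0 : ∀ t, Integrable (Y0 t) μ) (hY1 : ∀ t, Integrable (Y1 t) μ) :
    ∫ ω, c * ∑ t, (W t * Y1 t ω + (1 - W t) * Y0 t ω) * w t ∂μ
      = c * ∑ t, (W t * ∫ ω, Y1 t ω ∂μ + (1 - W t) * ∫ ω, Y0 t ω ∂μ) * w t := by
  have h_int : ∀ t, Integrable (fun ω => W t * Y1 t ω + (1 - W t) * Y0 t ω) μ := fun t =>
    ((hY1 t).const_mul _).add ((hY0 t).const_mul _)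
  rw [integral_const_mul, integral_finsetSum _ fun t _ => (h_int t).mul_const _]
  congr 1
  refine Finset.sum_congr rfl fun t _ => ?_
  rw [integral_mul_const, integral_add ((hY1 t).const_mul _) ((hY0 t).const_mul _),
    integral_const_mul, integral_const_mul]

end Fibres

end MeasureTheory

namespace ProbabilityTheory

variable {Ω β γ : Type*} {m' mΩ : MeasurableSpace Ω} [StandardBorelSpace Ω] {hm' : m' ≤ mΩ}
  {μ : Measure Ω} [IsFiniteMeasure μ] [MeasurableSpace β] [mγ : MeasurableSpace γ]
  {X : Ω → β} {g : Ω → γ} {A : Set β}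

lemma CondIndepFun.measureReal_inter_preimage_eq_setIntegral_condExp
    (hindep : CondIndepFun m' hm' X g μ) (hX : Measurable X) (hg : Measurable g)
    (hA : MeasurableSet A) {t : Set γ} (ht : MeasurableSet t) :
    μ.real (X ⁻¹' A ∩ g ⁻¹' t) = ∫ ω in g ⁻¹' t, (μ⟦X ⁻¹' A | m'⟧) ω ∂μ := by
  have hB : MeasurableSet (g ⁻¹' t) := hg ht
  have h_eq : μ⟦X ⁻¹' A | m'⟧ * (g ⁻¹' t).indicator (fun _ => (1 : ℝ))
      = (g ⁻¹' t).indicator (μ⟦X ⁻¹' A | m'⟧) := by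
    ext ω; by_cases hω : ω ∈ g ⁻¹' t <;> simp [hω]
  calc μ.real (X ⁻¹' A ∩ g ⁻¹' t) = ∫ ω, (μ⟦X ⁻¹' A ∩ g ⁻¹' t | m'⟧) ω ∂μ := by
        rw [integral_condExp hm', integral_indicator_const _ ((hX hA).inter hB), smul_eq_mul,
          mul_one]
    _ = ∫ ω, (μ⟦X ⁻¹' A | m'⟧) ω * (μ⟦g ⁻¹' t | m'⟧) ω ∂μ :=
        integral_congr_ae
          ((condIndepFun_iff_condExp_inter_preimage_eq_mul hX hg).mp hindep A t hA ht)
    _ = ∫ ω, (μ[μ⟦X ⁻¹' A | m'⟧ * (g ⁻¹' t).indicator (fun _ => 1) | m']) ω ∂μ :=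
        integral_congr_ae (condExp_mul_of_stronglyMeasurable_left stronglyMeasurable_condExp
          (h_eq ▸ integrable_condExp.indicator hB) ((integrable_const 1).indicator hB)).symm
    _ = ∫ ω in g ⁻¹' t, (μ⟦X ⁻¹' A | m'⟧) ω ∂μ := by
        rw [integral_condExp hm', h_eq, integral_indicator hB]

lemma CondIndepFun.setIntegral_preimage_eq_integral_condExp_mul
    (hindep : CondIndepFun m' hm' X g μ) (hX : Measurable X) (hg : Measurable g)
    (hA : MeasurableSet A) {Z : Ω → ℝ} (hZ : StronglyMeasurable[mγ.comap g] Z) :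
    ∫ ω in X ⁻¹' A, Z ω ∂μ = ∫ ω, (μ⟦X ⁻¹' A | m'⟧) ω * Z ω ∂μ := by
  refine setIntegral_eq_integral_mul_of_forall_measureReal_inter hg.comap_le
    (stronglyMeasurable_condExp.mono hm').measurable integrable_condExp
    ((condExp_indicator_mem_Icc hm' (hX hA)).mono fun _ h => h.1) ?_ hZ
  rintro _ ⟨t, ht, rfl⟩
  exact hindep.measureReal_inter_preimage_eq_setIntegral_condExp hX hg hA ht

theorem CondIndepFun.setIntegral_preimage_eq_setIntegral_condExp
    (hindep : CondIndepFun m' hm' X g μ) (hX : Measurable X) (hg : Measurable g)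
    (hA : MeasurableSet A) {Z : Ω → ℝ} (hZ : StronglyMeasurable[mγ.comap g] Z)
    (hZ_int : Integrable Z μ) :
    ∫ ω in X ⁻¹' A, Z ω ∂μ = ∫ ω in X ⁻¹' A, (μ[Z | m']) ω ∂μ := by
  have h_bound : ∀ᵐ ω ∂μ, ‖(μ⟦X ⁻¹' A | m'⟧) ω‖ ≤ 1 :=
    (condExp_indicator_mem_Icc hm' (hX hA)).mono fun _ h =>
      (Real.norm_of_nonneg h.1).trans_le h.2
  calc ∫ ω in X ⁻¹' A, Z ω ∂μ = ∫ ω, (μ⟦X ⁻¹' A | m'⟧) ω * Z ω ∂μ :=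
        hindep.setIntegral_preimage_eq_integral_condExp_mul hX hg hA hZ
    _ = ∫ ω, (μ[(μ⟦X ⁻¹' A | m'⟧) * Z | m']) ω ∂μ := (integral_condExp hm').symm
    _ = ∫ ω, (μ⟦X ⁻¹' A | m'⟧) ω * (μ[Z | m']) ω ∂μ :=
        integral_congr_ae (condExp_stronglyMeasurable_mul_of_bound hm' stronglyMeasurable_condExp
          hZ_int 1 h_bound)
    _ = ∫ ω in X ⁻¹' A, (μ[Z | m']) ω ∂μ :=
        (setIntegral_eq_integral_condExp_indicator_mul hm' (hX hA)
          stronglyMeasurable_condExp).symm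

end ProbabilityTheory

section WeightAlgebra

variable {ι κ : Type*} [Fintype ι] [Fintype κ]

lemma sum_mul_const_mul_sum (π : κ → ℝ) (c : ℝ) (f : κ → ι → ℝ) :
    ∑ k, π k * (c * ∑ t, f k t) = c * ∑ k, ∑ t, π k * f k t := by
  simp only [Finset.mul_sum]
  exact Finset.sum_congr rfl fun k _ => Finset.sum_congr rfl fun t _ => by ring

lemma sum_mul_const_mul_sum_eq_zero {π : κ → ℝ} {w : κ → ι → ℝ}
    (hw : ∀ t, ∑ k, π k * w k t = 0) (c : ℝ) (lam : ι → ℝ) :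
    ∑ k, π k * (c * ∑ t, lam t * w k t) = 0 := by
  rw [sum_mul_const_mul_sum, Finset.sum_comm]
  have h_col : ∀ t, ∑ k, π k * (lam t * w k t) = lam t * ∑ k, π k * w k t := fun t => by
    rw [Finset.mul_sum]; exact Finset.sum_congr rfl fun k _ => by ring
  simp only [h_col, hw, mul_zero, Finset.sum_const_zero]

lemma sum_observed_twoWay_eq (c α τ : ℝ) (W w lam : ι → ℝ) (hw : ∑ t, w t = 0) :
    c * ∑ t, (W t * (α + lam t + τ) + (1 - W t) * (α + lam t)) * w t
      = c * ∑ t, lam t * w t + τ * (c * ∑ t, w t * W t) := by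
  have h_term : ∀ t, (W t * (α + lam t + τ) + (1 - W t) * (α + lam t)) * w t
      = α * w t + (lam t * w t + τ * (w t * W t)) := fun t => by ring
  simp only [h_term, Finset.sum_add_distrib, ← Finset.mul_sum, hw]
  ring

end WeightAlgebra

section ObservedOutcome

variable {Ω ι κ : Type*} {mΩ : MeasurableSpace Ω} {μ : Measure Ω} [IsFiniteMeasure μ]
  [Fintype ι] [Fintype κ] [MeasurableSpace κ] [MeasurableSingletonClass κ]

lemma integral_observed_eq_of_setIntegral_twoWay {X : Ω → κ} (hX : Measurable X)
    {Y0 Y1 : ι → Ω → ℝ} (hY0 : ∀ t, Integrable (Y0 t) μ) (hY1 : ∀ t, Integrable (Y1 t) μ)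
    {α τ : Ω → ℝ} (hα : Integrable α μ) (hτ : Integrable τ μ) (lam : ι → ℝ)
    (h_fiber0 : ∀ k t, ∫ ω in X ⁻¹' {k}, Y0 t ω ∂μ = ∫ ω in X ⁻¹' {k}, α ω + lam t ∂μ)
    (h_fiber1 : ∀ k t, ∫ ω in X ⁻¹' {k}, Y1 t ω ∂μ = ∫ ω in X ⁻¹' {k}, α ω + lam t + τ ω ∂μ)
    (c : ℝ) (W w : κ → ι → ℝ) (h_row : ∀ k, ∑ t, w k t = 0)
    (h_col : ∀ t, ∑ k, μ.real (X ⁻¹' {k}) * w k t = 0) :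
    ∫ ω, c * ∑ t, (W (X ω) t * Y1 t ω + (1 - W (X ω) t) * Y0 t ω) * w (X ω) t ∂μ
      = ∫ ω, τ ω * (c * ∑ t, w (X ω) t * W (X ω) t) ∂μ := by
  have hM0 : ∀ t, Integrable (fun ω => α ω + lam t) μ := fun t => hα.add (integrable_const _)
  have hM1 : ∀ t, Integrable (fun ω => α ω + lam t + τ ω) μ := fun t => (hM0 t).add hτ
  calc _ = ∑ k, ∫ ω in X ⁻¹' {k},
          c * ∑ t, (W k t * Y1 t ω + (1 - W k t) * Y0 t ω) * w k t ∂μ :=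
        integral_comp_eq_sum_setIntegral hX fun k => by fun_prop
    _ = ∑ k, ∫ ω in X ⁻¹' {k},
          c * ∑ t, (W k t * (α ω + lam t + τ ω) + (1 - W k t) * (α ω + lam t)) * w k t ∂μ := by
        refine Finset.sum_congr rfl fun k _ => ?_
        rw [integral_const_mul_sum_observed _ _ _ (fun t => (hY0 t).restrict)
            (fun t => (hY1 t).restrict),
          integral_const_mul_sum_observed _ _ _ (fun t => (hM0 t).restrict)
            (fun t => (hM1 t).restrict)]
        simp only [h_fiber0, h_fiber1]
    _ = ∑ k, ∫ ω in X ⁻¹' {k},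
          (c * ∑ t, lam t * w k t + τ ω * (c * ∑ t, w k t * W k t)) ∂μ := by
        simp only [sum_observed_twoWay_eq _ _ _ _ _ _ (h_row _)]
    _ = ∑ k, μ.real (X ⁻¹' {k}) * (c * ∑ t, lam t * w k t)
          + ∑ k, ∫ ω in X ⁻¹' {k}, τ ω * (c * ∑ t, w k t * W k t) ∂μ := by
        rw [← Finset.sum_add_distrib]
        refine Finset.sum_congr rfl fun k _ => ?_
        rw [integral_add (integrable_const _) (hτ.mul_const _).restrict, setIntegral_const,
          smul_eq_mul]
    _ = _ := by
        rw [sum_mul_const_mul_sum_eq_zero h_col, zero_add]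
        exact (integral_comp_eq_sum_setIntegral hX
          (G := fun k ω => τ ω * (c * ∑ t, w k t * W k t)) fun k => hτ.mul_const _).symm

end ObservedOutcome

theorem outcome_model_identification_general
    {Ωs 𝓤 : Type*} [MeasurableSpace Ωs] [StandardBorelSpace Ωs]
    [MeasurableSpace 𝓤]
    (μ : Measure Ωs) [IsProbabilityMeasure μ]
    (T K : ℕ)
    -- the assignment support: `K` distinct rows of a matrix with entries in {0,1}
    (Wmat : Fin K → Fin T → ℝ)
    -- the realized assignment, identified by its (random) row index `k(i)`
    (kidx : Ωs → Fin K) (hkidx : Measurable kidx)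
    -- potential outcomes `Y_t(0)` and `Y_t(1)`, integrable
    (Y0 Y1 : Fin T → Ωs → ℝ)
    (hY0meas : ∀ t, Measurable (Y0 t)) (hY1meas : ∀ t, Measurable (Y1 t))
    (hY0int : ∀ t, Integrable (Y0 t) μ) (hY1int : ∀ t, Integrable (Y1 t) μ)
    -- the unobserved confounder
    (U : Ωs → 𝓤) (hU : Measurable U)
    -- Latent Unconfoundedness: W ⫫ {Y_t(w)} | U
    (hunconf : CondIndepFun (MeasurableSpace.comap U inferInstance) hU.comap_le
      kidx (fun ω => ((fun t => Y0 t ω), (fun t => Y1 t ω))) μ)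
    -- Outcome model: E[Y_t(w)|U] = α(U) + λ_t + τ(U)·w
    (a tau : 𝓤 → ℝ) (lam : Fin T → ℝ)
    (haint : Integrable (fun ω => a (U ω)) μ)
    (htauint : Integrable (fun ω => tau (U ω)) μ)
    (hmodel0 : ∀ t, μ[Y0 t | MeasurableSpace.comap U inferInstance]
      =ᵐ[μ] fun ω => a (U ω) + lam t)
    (hmodel1 : ∀ t, μ[Y1 t | MeasurableSpace.comap U inferInstance]
      =ᵐ[μ] fun ω => a (U ω) + lam t + tau (U ω))
    -- weights ω ∈ 𝕎_outc
    (w : Fin K → Fin T → ℝ)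
    (hw1 : (1 / (T : ℝ)) * ∑ k, ∑ t,
      (μ {ω | kidx ω = k}).toReal * w k t * Wmat k t = 1)
    (hw2 : ∀ k, 0 ≤ (1 / (T : ℝ)) * ∑ t, w k t * Wmat k t)
    (hw3 : ∀ k, ∑ t, w k t = 0)
    (hw4 : ∀ t, ∑ k, (μ {ω | kidx ω = k}).toReal * w k t = 0) :
    -- ξ ≥ 0 a.s., E[ξ] = 1, and τ(ω) = E[τ(U)·ξ]
    (∀ᵐ ω ∂μ, 0 ≤ (1 / (T : ℝ)) * ∑ t, w (kidx ω) t * Wmat (kidx ω) t) ∧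
    (∫ ω, (1 / (T : ℝ)) * ∑ t, w (kidx ω) t * Wmat (kidx ω) t ∂μ = 1) ∧
    (∫ ω, (1 / (T : ℝ)) * ∑ t,
        (Wmat (kidx ω) t * Y1 t ω + (1 - Wmat (kidx ω) t) * Y0 t ω) * w (kidx ω) t ∂μ
      = ∫ ω, tau (U ω) * ((1 / (T : ℝ)) * ∑ t, w (kidx ω) t * Wmat (kidx ω) t) ∂μ) := by
  have hg : Measurable fun ω => ((fun t => Y0 t ω), (fun t => Y1 t ω)) := by fun_prop
  have hg_comap := comap_measurable (m := inferInstance)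
    fun ω => ((fun t => Y0 t ω), (fun t => Y1 t ω))
  refine ⟨.of_forall fun ω => hw2 (kidx ω), ?_, integral_observed_eq_of_setIntegral_twoWay hkidx
    hY0int hY1int haint htauint lam (fun k t => ?_) (fun k t => ?_) _ Wmat w hw3 hw4⟩
  · rw [integral_comp_eq_sum_measureReal_mul hkidx
      (fun k => (1 / (T : ℝ)) * ∑ t, w k t * Wmat k t), sum_mul_const_mul_sum]
    simp only [mul_assoc] at hw1
    exact hw1
  · have hY0 := ((measurable_pi_apply t).comp measurable_fst).comp hg_comap
    exact (hunconf.setIntegral_preimage_eq_setIntegral_condExp hkidx hg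
      (measurableSet_singleton k) hY0.stronglyMeasurable (hY0int t)).trans
      (integral_congr_ae (ae_restrict_of_ae (hmodel0 t)))
  · have hY1 := ((measurable_pi_apply t).comp measurable_snd).comp hg_comap
    exact (hunconf.setIntegral_preimage_eq_setIntegral_condExp hkidx hg
      (measurableSet_singleton k) hY1.stronglyMeasurable (hY1int t)).trans
      (integral_congr_ae (ae_restrict_of_ae (hmodel1 t)))

/-- **Proposition 1 (Identification through the outcome model).**
Under No Dynamics (potential outcomes indexed by the contemporaneous binary
treatment only), Latent Unconfoundedness and the two-way outcome model
`E[Y_t(w) | U] = α(U) + λ_t + τ(U)·w`, for any weights `w ∈ 𝕎_outc` the estimand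
`τ(ω) = E[(1/T)·Σ_t Y_t · ω_{k(i)t}]` equals `E[τ(U)·ξ]` where
`ξ = (1/T)·Σ_t ω_{k(i)t}·𝐖_{k(i)t} ≥ 0` a.s. and `E[ξ] = 1`. -/
theorem outcome_model_identification
    {Ωs 𝓤 : Type*} [MeasurableSpace Ωs] [StandardBorelSpace Ωs] [Nonempty Ωs]
    [MeasurableSpace 𝓤]
    (μ : Measure Ωs) [IsProbabilityMeasure μ]
    (T K : ℕ) (hT : 0 < T) (hK : 0 < K)
    -- the assignment support: `K` distinct rows of a matrix with entries in {0,1}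
    (Wmat : Fin K → Fin T → ℝ)
    (hW01 : ∀ k t, Wmat k t = 0 ∨ Wmat k t = 1)
    (hWdistinct : Function.Injective Wmat)
    -- the realized assignment, identified by its (random) row index `k(i)`
    (kidx : Ωs → Fin K) (hkidx : Measurable kidx)
    -- all rows have positive probability
    (hπpos : ∀ k, 0 < (μ {ω | kidx ω = k}).toReal)
    -- potential outcomes `Y_t(0)` and `Y_t(1)`, integrable
    (Y0 Y1 : Fin T → Ωs → ℝ)
    (hY0meas : ∀ t, Measurable (Y0 t)) (hY1meas : ∀ t, Measurable (Y1 t))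
    (hY0int : ∀ t, Integrable (Y0 t) μ) (hY1int : ∀ t, Integrable (Y1 t) μ)
    -- the unobserved confounder
    (U : Ωs → 𝓤) (hU : Measurable U)
    -- Latent Unconfoundedness: W ⫫ {Y_t(w)} | U
    (hunconf : CondIndepFun (MeasurableSpace.comap U inferInstance) hU.comap_le
      kidx (fun ω => ((fun t => Y0 t ω), (fun t => Y1 t ω))) μ)
    -- Outcome model: E[Y_t(w)|U] = α(U) + λ_t + τ(U)·w
    (a tau : 𝓤 → ℝ) (lam : Fin T → ℝ)
    (haint : Integrable (fun ω => a (U ω)) μ)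
    (htauint : Integrable (fun ω => tau (U ω)) μ)
    (hmodel0 : ∀ t, μ[Y0 t | MeasurableSpace.comap U inferInstance]
      =ᵐ[μ] fun ω => a (U ω) + lam t)
    (hmodel1 : ∀ t, μ[Y1 t | MeasurableSpace.comap U inferInstance]
      =ᵐ[μ] fun ω => a (U ω) + lam t + tau (U ω))
    -- weights ω ∈ 𝕎_outc
    (w : Fin K → Fin T → ℝ)
    (hw1 : (1 / (T : ℝ)) * ∑ k, ∑ t,
      (μ {ω | kidx ω = k}).toReal * w k t * Wmat k t = 1)
    (hw2 : ∀ k, 0 ≤ (1 / (T : ℝ)) * ∑ t, w k t * Wmat k t)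
    (hw3 : ∀ k, ∑ t, w k t = 0)
    (hw4 : ∀ t, ∑ k, (μ {ω | kidx ω = k}).toReal * w k t = 0) :
    -- ξ ≥ 0 a.s., E[ξ] = 1, and τ(ω) = E[τ(U)·ξ]
    (∀ᵐ ω ∂μ, 0 ≤ (1 / (T : ℝ)) * ∑ t, w (kidx ω) t * Wmat (kidx ω) t) ∧
    (∫ ω, (1 / (T : ℝ)) * ∑ t, w (kidx ω) t * Wmat (kidx ω) t ∂μ = 1) ∧
    (∫ ω, (1 / (T : ℝ)) * ∑ t,
        (Wmat (kidx ω) t * Y1 t ω + (1 - Wmat (kidx ω) t) * Y0 t ω) * w (kidx ω) t ∂μ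
      = ∫ ω, tau (U ω) * ((1 / (T : ℝ)) * ∑ t, w (kidx ω) t * Wmat (kidx ω) t) ∂μ) :=
  outcome_model_identification_general μ T K Wmat kidx hkidx Y0 Y1 hY0meas hY1meas hY0int hY1int U
    hU hunconf a tau lam haint htauint hmodel0 hmodel1 w hw1 hw2 hw3 hw4
end

section
/- Suppose W is conditionally independent of (Y(0), Y(1)) given U, and W is conditionally independent of U given S, where S = s(W) for a measurable map s. Then for every assignment value w̲, the indicator 1{W = w̲} is conditionally independent of (Y(0), Y(1)) given S; that is, for all measurable sets A₀, A₁, E[1{W = w̲}·1{Y(0) ∈ A₀, Y(1) ∈ A₁} | S] = E[1{W = w̲} | S]·E[1{Y(0) ∈ A₀, Y(1) ∈ A₁} | S] almost surely. -/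
/-!
Write `P_S`, `P_U`, `P_W` for conditional expectation given `S`, `U`, `W`, `A = {W = w̲}` and
`B = {Y(0) ∈ A₀, Y(1) ∈ A₁}`. Each conditional independence becomes a tower identity:
`P_W 1_B = P_W P_U 1_B` and `P_U 1_A = P_U P_S 1_A`. Moving the `W`-measurable functions
`P_S 1_A` and `1_A` across these projections gives `E[P_S 1_A · 1_B] = E[1_A · 1_B]`.
Since `S = s(W)` is constant on `A`, every `S`-event contains or misses `A`, so `1_t · P_S 1_A`
is a constant multiple of `P_S 1_A` for each `S`-event `t`, and the identity localises to every
`S`-event.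
-/

open MeasureTheory ProbabilityTheory
open scoped ENNReal

section CondExp

variable {Ω : Type*} {m m0 : MeasurableSpace Ω} {μ : Measure[m0] Ω} [IsFiniteMeasure μ]

lemma integral_mul_condExp_of_stronglyMeasurable (hm : m ≤ m0) {h f : Ω → ℝ}
    (hh : StronglyMeasurable[m] h) (hh_bdd : MemLp h ∞ μ) (hf : Integrable f μ) :
    ∫ ω, h ω * μ[f|m] ω ∂μ = ∫ ω, h ω * f ω ∂μ :=
  calc ∫ ω, h ω * μ[f|m] ω ∂μ = ∫ ω, μ[h * f|m] ω ∂μ :=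
        integral_congr_ae (condExp_mul_of_stronglyMeasurable_left hh
          (hf.mul_of_top_right hh_bdd) hf).symm
    _ = ∫ ω, h ω * f ω ∂μ := integral_condExp hm

lemma integral_mul_eq_of_condExp_ae_eq (hm : m ≤ m0) {h f g : Ω → ℝ}
    (hh : StronglyMeasurable[m] h) (hh_bdd : MemLp h ∞ μ) (hf : Integrable f μ)
    (hg : Integrable g μ) (hfg : μ[f|m] =ᵐ[μ] μ[g|m]) :
    ∫ ω, h ω * f ω ∂μ = ∫ ω, h ω * g ω ∂μ := by
  rw [← integral_mul_condExp_of_stronglyMeasurable hm hh hh_bdd hf,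
    ← integral_mul_condExp_of_stronglyMeasurable hm hh hh_bdd hg]
  exact integral_congr_ae (Filter.EventuallyEq.rfl.mul hfg)

lemma condExp_indicator_ae_eq_condExp_condExp_of_condIndep [StandardBorelSpace Ω]
    {m' m₁ m₂ : MeasurableSpace Ω} {hm' : m' ≤ m0} (hm₁ : m₁ ≤ m0)
    (hm₂ : m₂ ≤ m0) (hind : CondIndep m' m₁ m₂ hm' μ) {B : Set Ω}
    (hB : MeasurableSet[m₂] B) :
    μ⟦B | m₁⟧ =ᵐ[μ] μ[(μ⟦B | m'⟧)|m₁] := by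
  refine ae_eq_condExp_of_forall_setIntegral_eq hm₁ integrable_condExp
    (fun _ _ _ => integrable_condExp.integrableOn) (fun t ht _ => ?_)
    stronglyMeasurable_condExp.aestronglyMeasurable
  have hB_int : Integrable (B.indicator fun _ => (1 : ℝ)) μ :=
    (integrable_const 1).indicator (hm₂ B hB)
  calc ∫ ω in t, (μ⟦B | m₁⟧) ω ∂μ
      = ∫ ω, (t ∩ B).indicator (fun _ => (1 : ℝ)) ω ∂μ := by
        rw [setIntegral_condExp hm₁ hB_int ht, ← integral_indicator (hm₁ t ht),
          Set.indicator_indicator]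
    _ = ∫ ω, (μ⟦t | m'⟧) ω * (μ⟦B | m'⟧) ω ∂μ := by
        rw [← integral_condExp hm']
        exact integral_congr_ae ((condIndep_iff m' m₁ m₂ hm' hm₁ hm₂ μ).mp hind t B ht hB)
    _ = ∫ ω, (μ⟦B | m'⟧) ω * t.indicator (fun _ => (1 : ℝ)) ω ∂μ := by
        simp only [mul_comm ((μ⟦t | m'⟧) _)]
        exact integral_mul_condExp_of_stronglyMeasurable hm' stronglyMeasurable_condExp
          (((memLp_top_const (1 : ℝ)).indicator (hm₂ B hB)).condExp le_top)
          ((integrable_const 1).indicator (hm₁ t ht))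
    _ = ∫ ω in t, (μ⟦B | m'⟧) ω ∂μ := by
        simp only [← integral_indicator (hm₁ t ht), ← Set.indicator_mul_right, mul_one]

lemma integral_condExp_mul_eq_integral_mul {mS mU mW : MeasurableSpace Ω}
    (hmU : mU ≤ m0) (hmW : mW ≤ m0) (hSW : mS ≤ mW) {f g : Ω → ℝ}
    (hf_meas : StronglyMeasurable[mW] f) (hf : MemLp f ∞ μ) (hg : MemLp g ∞ μ)
    (hf_tower : μ[f|mU] =ᵐ[μ] μ[μ[f|mS]|mU]) (hg_tower : μ[g|mW] =ᵐ[μ] μ[μ[g|mU]|mW]) :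
    ∫ ω, μ[f|mS] ω * g ω ∂μ = ∫ ω, f ω * g ω ∂μ := by
  have hφ_meas : StronglyMeasurable[mW] (μ[f|mS]) := stronglyMeasurable_condExp.mono hSW
  have hφ := hf.condExp (m := mS) le_top
  have hγ := hg.condExp (m := mU) le_top
  calc ∫ ω, μ[f|mS] ω * g ω ∂μ = ∫ ω, μ[f|mS] ω * μ[g|mU] ω ∂μ :=
        integral_mul_eq_of_condExp_ae_eq hmW hφ_meas hφ (hg.integrable le_top)
          integrable_condExp hg_tower
    _ = ∫ ω, μ[g|mU] ω * μ[f|mS] ω ∂μ := by simp only [mul_comm]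
    _ = ∫ ω, μ[g|mU] ω * f ω ∂μ :=
        integral_mul_eq_of_condExp_ae_eq hmU stronglyMeasurable_condExp hγ integrable_condExp
          (hf.integrable le_top) hf_tower.symm
    _ = ∫ ω, f ω * μ[g|mU] ω ∂μ := by simp only [mul_comm]
    _ = ∫ ω, f ω * g ω ∂μ :=
        (integral_mul_eq_of_condExp_ae_eq hmW hf_meas hf (hg.integrable le_top)
          integrable_condExp hg_tower).symm

lemma condExp_mul_ae_eq_mul_condExp_of_indicator_eq_smul (hm : m ≤ m0) {f g : Ω → ℝ}
    (hf : MemLp f ∞ μ) (hg : MemLp g ∞ μ)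
    (hatom : ∀ t, MeasurableSet[m] t → ∃ c : ℝ, t.indicator f = c • f)
    (hfg : ∫ ω, μ[f|m] ω * g ω ∂μ = ∫ ω, f ω * g ω ∂μ) :
    μ[f * g|m] =ᵐ[μ] μ[f|m] * μ[g|m] := by
  have hf_int := hf.integrable le_top
  refine (ae_eq_condExp_of_forall_setIntegral_eq hm (hf_int.mul_of_top_left hg)
    (fun _ _ _ => (integrable_condExp.mul_of_top_left (hg.condExp le_top)).integrableOn)
    (fun t ht _ => ?_)
    (stronglyMeasurable_condExp.mul stronglyMeasurable_condExp).aestronglyMeasurable).symm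
  obtain ⟨c, hc⟩ := hatom t ht
  have hφ : t.indicator (μ[f|m]) =ᵐ[μ] c • μ[f|m] :=
    (condExp_indicator hf_int ht).symm.trans (hc ▸ condExp_smul c f m)
  calc ∫ ω in t, (μ[f|m] * μ[g|m]) ω ∂μ
      = ∫ ω, t.indicator μ[f|m] ω * μ[g|m] ω ∂μ := by
        simp only [← integral_indicator (hm t ht), Pi.mul_apply, Set.indicator_mul_left]
    _ = ∫ ω, t.indicator μ[f|m] ω * g ω ∂μ :=
        integral_mul_condExp_of_stronglyMeasurable hm (stronglyMeasurable_condExp.indicator ht)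
          ((hf.condExp le_top).indicator (hm t ht)) (hg.integrable le_top)
    _ = ∫ ω, (c • μ[f|m]) ω * g ω ∂μ :=
        integral_congr_ae (hφ.mul Filter.EventuallyEq.rfl)
    _ = c * ∫ ω, f ω * g ω ∂μ := by
        simp only [Pi.smul_apply, smul_eq_mul, mul_assoc, integral_const_mul, hfg]
    _ = ∫ ω, t.indicator f ω * g ω ∂μ := by
        simp only [hc, Pi.smul_apply, smul_eq_mul, mul_assoc, integral_const_mul]
    _ = ∫ ω in t, (f * g) ω ∂μ := by
        simp only [← integral_indicator (hm t ht), Pi.mul_apply, Set.indicator_mul_left]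

end CondExp

lemma exists_indicator_eq_smul_indicator_preimage_singleton {Ω α β : Type*} [MeasurableSpace β]
    (X : Ω → α) (s : α → β) (a : α) {t : Set Ω}
    (ht : MeasurableSet[MeasurableSpace.comap (fun ω => s (X ω)) inferInstance] t) :
    ∃ c : ℝ, t.indicator ((X ⁻¹' {a}).indicator fun _ => 1)
      = c • (X ⁻¹' {a}).indicator fun _ => (1 : ℝ) := by
  obtain ⟨D, -, rfl⟩ := ht
  refine ⟨D.indicator (fun _ => 1) (s a), funext fun ω => ?_⟩
  simp only [Set.indicator, Set.mem_preimage, Set.mem_singleton_iff, Pi.smul_apply, smul_eq_mul]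
  split_ifs <;> simp_all

/-- **Proposition 2 (feasible unconfoundedness).**
If `W ⫫ (Y(0), Y(1)) | U` (latent unconfoundedness) and `W ⫫ U | S` with
`S = s(W)` (sufficiency), then for every assignment value `w̲`, the indicator
`1{W = w̲}` is conditionally independent of `(Y(0), Y(1))` given `S`: for all
measurable `A₀, A₁`,
`E[1{W = w̲}·1{Y(0) ∈ A₀, Y(1) ∈ A₁} | S] = E[1{W = w̲} | S]·E[1{Y(0) ∈ A₀, Y(1) ∈ A₁} | S]` a.s. -/
theorem design_unconfoundedness
    {Ωs 𝓤 𝕊 : Type*} [MeasurableSpace Ωs] [StandardBorelSpace Ωs] [Nonempty Ωs]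
    [MeasurableSpace 𝓤] [MeasurableSpace 𝕊]
    (μ : Measure Ωs) [IsProbabilityMeasure μ]
    (T : ℕ)
    -- the assignment, a random vector with values in {0,1}^T
    (W : Ωs → Fin T → Bool) (hW : Measurable W)
    -- potential outcome vectors under control and treatment
    (Y0 Y1 : Ωs → Fin T → ℝ) (hY0 : Measurable Y0) (hY1 : Measurable Y1)
    -- the unobserved confounder
    (U : Ωs → 𝓤) (hU : Measurable U)
    -- the sufficient statistic S = s(W)
    (s : (Fin T → Bool) → 𝕊) (hs : Measurable s)
    -- Latent Unconfoundedness: W ⫫ (Y(0), Y(1)) | U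
    (hunconf : CondIndepFun (MeasurableSpace.comap U inferInstance) hU.comap_le
      W (fun ω => (Y0 ω, Y1 ω)) μ)
    -- Sufficiency: W ⫫ U | S
    (hsuff : CondIndepFun (MeasurableSpace.comap (fun ω => s (W ω)) inferInstance)
      ((hs.comp hW).comap_le) W U μ) :
    ∀ (wbar : Fin T → Bool) (A0 A1 : Set (Fin T → ℝ)),
      MeasurableSet A0 → MeasurableSet A1 →
      μ[(fun ω => (if W ω = wbar then (1 : ℝ) else 0) *
            Set.indicator {ω' : Ωs | Y0 ω' ∈ A0 ∧ Y1 ω' ∈ A1} (fun _ => (1 : ℝ)) ω) |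
          MeasurableSpace.comap (fun ω => s (W ω)) inferInstance]
        =ᵐ[μ]
      (fun ω =>
        ((μ[(fun ω' => if W ω' = wbar then (1 : ℝ) else 0) |
            MeasurableSpace.comap (fun ω'' => s (W ω'')) inferInstance]) ω) *
        ((μ[(fun ω' => Set.indicator {ω'' : Ωs | Y0 ω'' ∈ A0 ∧ Y1 ω'' ∈ A1}
              (fun _ => (1 : ℝ)) ω') |
            MeasurableSpace.comap (fun ω'' => s (W ω'')) inferInstance]) ω)) := by
  intro wbar A0 A1 hA0 hA1
  set A := W ⁻¹' {wbar}
  set B := {ω | Y0 ω ∈ A0 ∧ Y1 ω ∈ A1}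
  have hite : ∀ ω, (if W ω = wbar then (1 : ℝ) else 0) = A.indicator (fun _ => 1) ω :=
    fun ω => by simp [A, Set.indicator]
  simp only [hite]
  have hA : MeasurableSet[MeasurableSpace.comap W inferInstance] A :=
    ⟨{wbar}, measurableSet_singleton wbar, rfl⟩
  have hB : MeasurableSet[MeasurableSpace.comap (fun ω => (Y0 ω, Y1 ω)) inferInstance] B :=
    ⟨A0 ×ˢ A1, hA0.prod hA1, rfl⟩
  have hA_bdd : MemLp (A.indicator fun _ => (1 : ℝ)) ∞ μ :=
    (memLp_top_const 1).indicator (hW.comap_le A hA)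
  have hB_bdd : MemLp (B.indicator fun _ => (1 : ℝ)) ∞ μ :=
    (memLp_top_const 1).indicator ((hY0.prodMk hY1).comap_le B hB)
  have hSW : MeasurableSpace.comap (fun ω => s (W ω)) inferInstance
      ≤ MeasurableSpace.comap W inferInstance :=
    (hs.comp (comap_measurable W)).comap_le
  refine condExp_mul_ae_eq_mul_condExp_of_indicator_eq_smul (hs.comp hW).comap_le
    hA_bdd hB_bdd (fun _ => exists_indicator_eq_smul_indicator_preimage_singleton W s wbar)
    (integral_condExp_mul_eq_integral_mul hU.comap_le hW.comap_le hSW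
      (stronglyMeasurable_const.indicator hA) hA_bdd hB_bdd ?_ ?_)
  · exact condExp_indicator_ae_eq_condExp_condExp_of_condIndep hU.comap_le hW.comap_le
      ((condIndepFun_iff_condIndep _ _ _ _ _).mp hsuff).symm hA
  · exact condExp_indicator_ae_eq_condExp_condExp_of_condIndep hW.comap_le
      (hY0.prodMk hY1).comap_le ((condIndepFun_iff_condIndep _ _ _ _ _).mp hunconf) hB
end

section
/- Suppose Assumptions (No Dynamics), (Latent Unconfoundedness), (Latent Overlap) and (Sufficiency) hold, and let ω ∈ 𝕎_design. Then τ(ω) := E[(1/T)·Σ_{t=1}^T Y_t · ω_{k(i)t}] = Σ_{σ,t} c_{σt} · E[τ_t | S = σ], where c_{σt} := (1/T)·Σ_{k : s(k)=σ} π_k ω_{kt} 𝐖_{kt} ≥ 0 and Σ_{σ,t} c_{σt} = 1; in particular τ(ω) is a convex combination of conditional average treatment effects. -/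
/-!
Sufficiency makes `P(W = k | U)` equal to `π_k / P(S = s k)` times `P(S = s k | U)`: given `S`,
the event `{W = k}` is a fixed fraction of the atom `{S = s k}`, and conditioning further on `U`
does not change that fraction. Latent unconfoundedness then transfers this proportionality from
events of `U` to events of the potential outcomes, so their mean on `{W = k}` is `π_k` times their
conditional mean given `S = s k`. Expanding `τ(ω)` row by row and grouping the rows by
`σ = s k`, the `Y_t(0)` terms carry the total weight `Σ_{s k = σ} π_k ω_{kt}`, which vanishes
for design weights, and what remains is `Σ_{σ,t} c_{σt} E[τ_t | S = σ]`.
-/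

open MeasureTheory ProbabilityTheory

lemma sum_regroup_fiberwise_of_balanced {ι κ 𝕊 : Type*} [Fintype ι] [Fintype κ] [Fintype 𝕊]
    [DecidableEq 𝕊] (s : ι → 𝕊) (C : ℝ) (π : ι → ℝ) (w a : ι → κ → ℝ) (f g : 𝕊 → κ → ℝ)
    (hw : ∀ σ t, ∑ k with s k = σ, π k * w k t = 0) :
    ∑ k, C * ∑ t, (w k t * a k t * (π k * f (s k) t) + w k t * (π k * g (s k) t)) =
      ∑ σ, ∑ t, (C * ∑ k with s k = σ, π k * w k t * a k t) * f σ t := by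
  rw [← Finset.sum_fiberwise Finset.univ s]
  refine Finset.sum_congr rfl fun σ _ => ?_
  have hfiber : ∀ k ∈ Finset.univ.filter (fun k => s k = σ),
      C * ∑ t, (w k t * a k t * (π k * f (s k) t) + w k t * (π k * g (s k) t)) =
        ∑ t, (C * (π k * w k t * a k t) * f σ t + C * g σ t * (π k * w k t)) := by
    intro k hk
    rw [(Finset.mem_filter.1 hk).2, Finset.mul_sum]
    exact Finset.sum_congr rfl fun t _ => by ring
  rw [Finset.sum_congr rfl hfiber, Finset.sum_comm]
  refine Finset.sum_congr rfl fun t _ => ?_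
  rw [Finset.sum_add_distrib, ← Finset.mul_sum, hw σ t, mul_zero, add_zero, ← Finset.sum_mul,
    ← Finset.mul_sum]

namespace MeasureTheory

variable {Ω β : Type*} {mΩ : MeasurableSpace Ω} {mβ : MeasurableSpace β} {μ : Measure Ω}

lemma integral_eq_sum_setIntegral_fiber {ι : Type*} [Fintype ι] [MeasurableSpace ι]
    [DiscreteMeasurableSpace ι] {W : Ω → ι} (hW : Measurable W) {F : ι → Ω → ℝ}
    (hF : ∀ k, Integrable (F k) μ) :
    ∫ ω, F (W ω) ω ∂μ = ∑ k, ∫ ω in {ω | W ω = k}, F k ω ∂μ := by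
  have hfiber (k : ι) : MeasurableSet {ω | W ω = k} := hW (.singleton k)
  have hsplit : (fun ω => F (W ω) ω) = fun ω => ∑ k, {ω | W ω = k}.indicator (F k) ω := by
    funext ω
    rw [Finset.sum_eq_single (W ω)
      (fun k _ hk => Set.indicator_of_notMem (show ω ∉ {ω | W ω = k} from Ne.symm hk) (F k))
      (absurd (Finset.mem_univ _)), Set.indicator_of_mem (show ω ∈ {ω' | W ω' = W ω} from rfl)]
  rw [hsplit, integral_finsetSum _ fun k _ => (hF k).indicator (hfiber k)]
  exact Finset.sum_congr rfl fun k _ => integral_indicator (hfiber k)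

lemma setIntegral_sum_observed_mul {κ : Type*} [Fintype κ] (A : Set Ω) (a w : κ → ℝ)
    {Y0 Y1 : κ → Ω → ℝ}
    (hY0 : ∀ t, Integrable (Y0 t) μ) (hY1 : ∀ t, Integrable (Y1 t) μ) :
    ∫ ω in A, ∑ t, (a t * Y1 t ω + (1 - a t) * Y0 t ω) * w t ∂μ =
      ∑ t, (w t * a t * ∫ ω in A, (Y1 t ω - Y0 t ω) ∂μ + w t * ∫ ω in A, Y0 t ω ∂μ) := by
  have hsplit : ∀ t ω, (a t * Y1 t ω + (1 - a t) * Y0 t ω) * w t =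
      w t * a t * (Y1 t ω - Y0 t ω) + w t * Y0 t ω := fun _ _ => by ring
  simp only [hsplit]
  have hτ (t : κ) : IntegrableOn (fun ω => w t * a t * (Y1 t ω - Y0 t ω)) A μ :=
    (((hY1 t).sub (hY0 t)).const_mul _).integrableOn
  have h0 (t : κ) : IntegrableOn (fun ω => w t * Y0 t ω) A μ := ((hY0 t).const_mul _).integrableOn
  have hsum (t : κ) :
      IntegrableOn (fun ω => w t * a t * (Y1 t ω - Y0 t ω) + w t * Y0 t ω) A μ :=
    (hτ t).add (h0 t)
  rw [integral_finsetSum _ fun t _ => hsum t]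
  refine Finset.sum_congr rfl fun t _ => ?_
  rw [integral_add (hτ t) (h0 t), integral_const_mul, integral_const_mul]

lemma setIntegral_comp_eq_const_mul [IsFiniteMeasure μ] {A A' : Set Ω} {Y : Ω → β}
    (hY : Measurable Y) {c : ℝ} (hc : 0 ≤ c)
    (h : ∀ B, MeasurableSet B → μ.real (A ∩ Y ⁻¹' B) = c * μ.real (A' ∩ Y ⁻¹' B))
    {φ : β → ℝ} (hφ : Measurable φ) :
    ∫ ω in A, φ (Y ω) ∂μ = c * ∫ ω in A', φ (Y ω) ∂μ := by
  have hlaw : (μ.restrict A).map Y = ENNReal.ofReal c • (μ.restrict A').map Y := by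
    ext B hB
    rw [Measure.map_apply hY hB, Measure.smul_apply, Measure.map_apply hY hB,
      Measure.restrict_apply (hY hB), Measure.restrict_apply (hY hB), smul_eq_mul,
      Set.inter_comm, Set.inter_comm _ A', ← ofReal_measureReal, ← ofReal_measureReal,
      h B hB, ENNReal.ofReal_mul hc]
  rw [← integral_map hY.aemeasurable hφ.aestronglyMeasurable, hlaw, integral_smul_measure,
    ENNReal.toReal_ofReal hc, integral_map hY.aemeasurable hφ.aestronglyMeasurable, smul_eq_mul]

end MeasureTheory

namespace ProbabilityTheory

variable {Ω β γ : Type*} {m mΩ : MeasurableSpace Ω} {μ : Measure Ω} [IsFiniteMeasure μ]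

lemma condExp_indicator_ae_eq_const_mul (hm : m ≤ mΩ) {A B : Set Ω}
    (hA : MeasurableSet A) (hB : MeasurableSet B) (c : ℝ)
    (h : ∀ E, MeasurableSet[m] E → μ.real (A ∩ E) = c * μ.real (B ∩ E)) :
    μ⟦A | m⟧ =ᵐ[μ] fun ω => c * (μ⟦B | m⟧) ω := by
  refine (ae_eq_condExp_of_forall_setIntegral_eq hm ((integrable_const (1 : ℝ)).indicator hA)
    (fun E _ _ => (integrable_condExp.const_mul c).integrableOn) (fun E hE _ => ?_)
    (stronglyMeasurable_condExp.const_mul c).aestronglyMeasurable).symm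
  rw [integral_const_mul, setIntegral_condExp hm ((integrable_const (1 : ℝ)).indicator hB) hE,
    setIntegral_indicator hB, setIntegral_indicator hA, setIntegral_const, setIntegral_const,
    Set.inter_comm E, Set.inter_comm E, h E hE]
  simp

lemma condExp_indicator_ae_eq_of_subset_fiber {𝕊 : Type*} [MeasurableSpace 𝕊] {S : Ω → 𝕊}
    (hS : Measurable S) {σ : 𝕊} (hσ : MeasurableSet (S ⁻¹' {σ})) {A : Set Ω}
    (hA : MeasurableSet A) (hAσ : A ⊆ S ⁻¹' {σ}) :
    μ⟦A | MeasurableSpace.comap S inferInstance⟧ =ᵐ[μ]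
      fun ω => μ.real A / μ.real (S ⁻¹' {σ}) *
        (μ⟦S ⁻¹' {σ} | MeasurableSpace.comap S inferInstance⟧) ω := by
  refine condExp_indicator_ae_eq_const_mul hS.comap_le hA hσ _ ?_
  rintro _ ⟨C, -, rfl⟩
  by_cases hσC : σ ∈ C
  · have hfiber : S ⁻¹' {σ} ⊆ S ⁻¹' C := Set.preimage_mono (Set.singleton_subset_iff.2 hσC)
    rw [Set.inter_eq_left.2 (hAσ.trans hfiber), Set.inter_eq_left.2 hfiber]
    rcases eq_or_ne (μ.real (S ⁻¹' {σ})) 0 with h0 | h0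
    · have : μ.real A = 0 := le_antisymm (h0 ▸ measureReal_mono hAσ) measureReal_nonneg
      simp [this]
    · exact (div_mul_cancel₀ _ h0).symm
  · have hfiber : Disjoint (S ⁻¹' {σ}) (S ⁻¹' C) := by
      simpa [Set.disjoint_left] using fun ω h => h ▸ hσC
    rw [Set.disjoint_iff_inter_eq_empty.1 hfiber,
      Set.disjoint_iff_inter_eq_empty.1 (hfiber.mono_left hAσ)]
    simp

variable [StandardBorelSpace Ω] {mβ : MeasurableSpace β} {mγ : MeasurableSpace γ}
  {f : Ω → β} {g : Ω → γ}

lemma CondIndepFun.measureReal_inter_preimage {hm : m ≤ mΩ} (h : CondIndepFun m hm f g μ)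
    (hf : Measurable f) (hg : Measurable g) {s : Set β} {t : Set γ}
    (hs : MeasurableSet s) (ht : MeasurableSet t) :
    μ.real (f ⁻¹' s ∩ g ⁻¹' t) = ∫ ω, (μ⟦f ⁻¹' s | m⟧) ω * (μ⟦g ⁻¹' t | m⟧) ω ∂μ := by
  rw [← integral_congr_ae ((condIndepFun_iff_condExp_inter_preimage_eq_mul hf hg).1 h s t hs ht),
    integral_condExp hm]
  exact (integral_indicator_one ((hf hs).inter (hg ht))).symm

lemma CondIndepFun.measureReal_inter_preimage_eq_const_mul {hm : m ≤ mΩ}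
    (h : CondIndepFun m hm f g μ) (hf : Measurable f) (hg : Measurable g) {s s' : Set β}
    (hs : MeasurableSet s) (hs' : MeasurableSet s') {c : ℝ}
    (hss' : μ⟦f ⁻¹' s | m⟧ =ᵐ[μ] fun ω => c * (μ⟦f ⁻¹' s' | m⟧) ω)
    {t : Set γ} (ht : MeasurableSet t) :
    μ.real (f ⁻¹' s ∩ g ⁻¹' t) = c * μ.real (f ⁻¹' s' ∩ g ⁻¹' t) := by
  rw [h.measureReal_inter_preimage hf hg hs ht, h.measureReal_inter_preimage hf hg hs' ht,
    ← integral_const_mul]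
  refine integral_congr_ae (hss'.mono fun ω hω => ?_)
  simp only [hω, mul_assoc]

variable {ι 𝕊 𝓤 : Type*} [MeasurableSpace ι] [DiscreteMeasurableSpace ι] [MeasurableSpace 𝕊]
  [MeasurableSpace 𝓤] {W : Ω → ι} {s : ι → 𝕊} {U : Ω → 𝓤}

lemma condExp_preimage_singleton_ae_eq_of_sufficient (hW : Measurable W)
    (hS : Measurable fun ω => s (W ω)) (hU : Measurable U)
    (hsuff : CondIndepFun (MeasurableSpace.comap (fun ω => s (W ω)) inferInstance)
      hS.comap_le W U μ) (k : ι) :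
    μ⟦W ⁻¹' {k} | MeasurableSpace.comap U inferInstance⟧ =ᵐ[μ] fun ω =>
      μ.real (W ⁻¹' {k}) / μ.real ((fun ω => s (W ω)) ⁻¹' {s k}) *
        (μ⟦(fun ω => s (W ω)) ⁻¹' {s k} | MeasurableSpace.comap U inferInstance⟧) ω := by
  have hfiber : W ⁻¹' {k} ⊆ W ⁻¹' (s ⁻¹' {s k}) :=
    Set.preimage_mono (Set.singleton_subset_iff.2 rfl)
  have hSk : MeasurableSet (W ⁻¹' (s ⁻¹' {s k})) := hW .of_discrete
  refine condExp_indicator_ae_eq_const_mul (A := W ⁻¹' {k}) (B := W ⁻¹' (s ⁻¹' {s k}))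
    hU.comap_le (hW .of_discrete) hSk _ ?_
  rintro _ ⟨C, hC, rfl⟩
  exact hsuff.measureReal_inter_preimage_eq_const_mul hW hU .of_discrete .of_discrete
    (condExp_indicator_ae_eq_of_subset_fiber hS hSk (hW .of_discrete) hfiber) hC

lemma setIntegral_fiber_eq_mul_of_sufficient (hW : Measurable W)
    (hS : Measurable fun ω => s (W ω)) (hU : Measurable U) {Y : Ω → β} (hY : Measurable Y)
    (hunconf : CondIndepFun (MeasurableSpace.comap U inferInstance) hU.comap_le W Y μ)
    (hsuff : CondIndepFun (MeasurableSpace.comap (fun ω => s (W ω)) inferInstance)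
      hS.comap_le W U μ) (k : ι) {φ : β → ℝ} (hφ : Measurable φ) :
    ∫ ω in {ω | W ω = k}, φ (Y ω) ∂μ = μ.real {ω | W ω = k} *
      ((∫ ω in {ω | s (W ω) = s k}, φ (Y ω) ∂μ) / μ.real {ω | s (W ω) = s k}) :=
  (setIntegral_comp_eq_const_mul (A := W ⁻¹' {k}) (A' := W ⁻¹' (s ⁻¹' {s k})) hY
    (div_nonneg measureReal_nonneg measureReal_nonneg) (fun _ hB =>
      hunconf.measureReal_inter_preimage_eq_const_mul hW hY .of_discrete .of_discrete
        (condExp_preimage_singleton_ae_eq_of_sufficient hW hS hU hsuff k) hB) hφ).trans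
    (by rw [div_mul_eq_mul_div, mul_div_assoc]; rfl)

end ProbabilityTheory

theorem design_identification_general
    {Ωs 𝓤 𝕊 : Type*} [MeasurableSpace Ωs] [StandardBorelSpace Ωs]
    [MeasurableSpace 𝓤] [MeasurableSpace 𝕊] [Fintype 𝕊] [DecidableEq 𝕊]
    (μ : Measure Ωs) [IsProbabilityMeasure μ]
    (T K : ℕ)
    -- the assignment support: `K` distinct rows with entries in {0,1}
    (Wmat : Fin K → Fin T → ℝ)
    -- the realized assignment, identified by its (random) row index `k(i)`
    (kidx : Ωs → Fin K) (hkidx : Measurable kidx)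
    -- potential outcomes, integrable
    (Y0 Y1 : Fin T → Ωs → ℝ)
    (hY0meas : ∀ t, Measurable (Y0 t)) (hY1meas : ∀ t, Measurable (Y1 t))
    (hY0int : ∀ t, Integrable (Y0 t) μ) (hY1int : ∀ t, Integrable (Y1 t) μ)
    -- the unobserved confounder
    (U : Ωs → 𝓤) (hU : Measurable U)
    -- Latent Unconfoundedness: W ⫫ {Y_t(w)} | U
    (hunconf : CondIndepFun (MeasurableSpace.comap U inferInstance) hU.comap_le
      kidx (fun ω => ((fun t => Y0 t ω), (fun t => Y1 t ω))) μ)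
    -- Sufficiency: the known statistic S = s(W) satisfies W ⫫ U | S
    (s : Fin K → 𝕊) (hS : Measurable (fun ω => s (kidx ω)))
    (hsuff : CondIndepFun (MeasurableSpace.comap (fun ω => s (kidx ω)) inferInstance)
      hS.comap_le kidx U μ)
    -- weights ω ∈ 𝕎_design
    (w : Fin K → Fin T → ℝ)
    (hw1 : (1 / (T : ℝ)) * ∑ k, ∑ t,
      (μ {ω | kidx ω = k}).toReal * w k t * Wmat k t = 1)
    (hw2 : ∀ (σ : 𝕊) (t : Fin T),
      0 ≤ ∑ k ∈ Finset.univ.filter (fun k => s k = σ),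
        (μ {ω | kidx ω = k}).toReal * w k t * Wmat k t)
    (hw3 : ∀ (σ : 𝕊) (t : Fin T),
      ∑ k ∈ Finset.univ.filter (fun k => s k = σ),
        (μ {ω | kidx ω = k}).toReal * w k t = 0) :
    -- c_{σt} ≥ 0, Σ_{σ,t} c_{σt} = 1, and τ(ω) = Σ_{σ,t} c_{σt}·E[τ_t | S = σ]
    (∀ (σ : 𝕊) (t : Fin T),
      0 ≤ (1 / (T : ℝ)) * ∑ k ∈ Finset.univ.filter (fun k => s k = σ),
        (μ {ω | kidx ω = k}).toReal * w k t * Wmat k t) ∧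
    (∑ σ : 𝕊, ∑ t, (1 / (T : ℝ)) * ∑ k ∈ Finset.univ.filter (fun k => s k = σ),
        (μ {ω | kidx ω = k}).toReal * w k t * Wmat k t = 1) ∧
    (∫ ω, (1 / (T : ℝ)) * ∑ t,
        (Wmat (kidx ω) t * Y1 t ω + (1 - Wmat (kidx ω) t) * Y0 t ω) * w (kidx ω) t ∂μ
      = ∑ σ : 𝕊, ∑ t,
          ((1 / (T : ℝ)) * ∑ k ∈ Finset.univ.filter (fun k => s k = σ),
            (μ {ω | kidx ω = k}).toReal * w k t * Wmat k t) *
          ((∫ ω in {ω | s (kidx ω) = σ}, (Y1 t ω - Y0 t ω) ∂μ) /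
            (μ {ω | s (kidx ω) = σ}).toReal)) := by
  have hY : Measurable fun ω => ((fun t => Y0 t ω), (fun t => Y1 t ω)) := by fun_prop
  have hτ : ∀ k t, ∫ ω in {ω | kidx ω = k}, (Y1 t ω - Y0 t ω) ∂μ = _ := fun k t =>
    setIntegral_fiber_eq_mul_of_sufficient hkidx hS hU hY hunconf hsuff k
      (φ := fun p => p.2 t - p.1 t) (by fun_prop)
  have h0 : ∀ k t, ∫ ω in {ω | kidx ω = k}, Y0 t ω ∂μ = _ := fun k t =>
    setIntegral_fiber_eq_mul_of_sufficient hkidx hS hU hY hunconf hsuff k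
      (φ := fun p => p.1 t) (by fun_prop)
  refine ⟨fun σ t => mul_nonneg (by positivity) (hw2 σ t), ?_, ?_⟩
  · refine Eq.trans ?_ hw1
    rw [Finset.mul_sum, ← Finset.sum_fiberwise Finset.univ s]
    simp only [Finset.mul_sum]
    exact Finset.sum_congr rfl fun σ _ => Finset.sum_comm
  · rw [integral_eq_sum_setIntegral_fiber hkidx (F := fun k ω =>
      1 / (T : ℝ) * ∑ t, (Wmat k t * Y1 t ω + (1 - Wmat k t) * Y0 t ω) * w k t) fun k =>
        (integrable_finsetSum _ fun t _ =>
          (((hY1int t).const_mul _).add ((hY0int t).const_mul _)).mul_const _).const_mul _]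
    simp only [integral_const_mul, setIntegral_sum_observed_mul _ _ _ hY0int hY1int, hτ, h0,
      measureReal_def]
    rw [← sum_regroup_fiberwise_of_balanced s _ _ w Wmat _ (fun σ t =>
      (∫ ω in {ω | s (kidx ω) = σ}, Y0 t ω ∂μ) / (μ {ω | s (kidx ω) = σ}).toReal) hw3]

/-- **Proposition 3 (Identification through design).**
Under No Dynamics, Latent Unconfoundedness, Latent Overlap and Sufficiency
(`W ⫫ U | S` with `S = s(W)` known), for any weights `ω ∈ 𝕎_design` the estimand
`τ(ω) = E[(1/T)·Σ_t Y_t·ω_{k(i)t}]` equals `Σ_{σ,t} c_{σt}·E[τ_t | S = σ]` where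
`c_{σt} = (1/T)·Σ_{k : s(k)=σ} π_k ω_{kt} 𝐖_{kt} ≥ 0` and `Σ_{σ,t} c_{σt} = 1`. -/
theorem design_identification
    {Ωs 𝓤 𝕊 : Type*} [MeasurableSpace Ωs] [StandardBorelSpace Ωs] [Nonempty Ωs]
    [MeasurableSpace 𝓤] [MeasurableSpace 𝕊] [Fintype 𝕊] [DecidableEq 𝕊]
    (μ : Measure Ωs) [IsProbabilityMeasure μ]
    (T K : ℕ) (hT : 0 < T) (hK : 0 < K)
    -- the assignment support: `K` distinct rows with entries in {0,1}
    (Wmat : Fin K → Fin T → ℝ)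
    (hW01 : ∀ k t, Wmat k t = 0 ∨ Wmat k t = 1)
    (hWdistinct : Function.Injective Wmat)
    -- the realized assignment, identified by its (random) row index `k(i)`
    (kidx : Ωs → Fin K) (hkidx : Measurable kidx)
    (hπpos : ∀ k, 0 < (μ {ω | kidx ω = k}).toReal)
    -- potential outcomes, integrable
    (Y0 Y1 : Fin T → Ωs → ℝ)
    (hY0meas : ∀ t, Measurable (Y0 t)) (hY1meas : ∀ t, Measurable (Y1 t))
    (hY0int : ∀ t, Integrable (Y0 t) μ) (hY1int : ∀ t, Integrable (Y1 t) μ)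
    -- the unobserved confounder
    (U : Ωs → 𝓤) (hU : Measurable U)
    -- Latent Unconfoundedness: W ⫫ {Y_t(w)} | U
    (hunconf : CondIndepFun (MeasurableSpace.comap U inferInstance) hU.comap_le
      kidx (fun ω => ((fun t => Y0 t ω), (fun t => Y1 t ω))) μ)
    -- Latent Overlap: a.s. no value of the assignment has conditional probability one given U
    (hoverlap : ∀ k, ∀ᵐ ω ∂μ,
      (μ[Set.indicator {ω' | kidx ω' = k} (fun _ => (1 : ℝ)) |
        MeasurableSpace.comap U inferInstance]) ω < 1)
    -- Sufficiency: the known statistic S = s(W) satisfies W ⫫ U | S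
    (s : Fin K → 𝕊) (hS : Measurable (fun ω => s (kidx ω)))
    (hsuff : CondIndepFun (MeasurableSpace.comap (fun ω => s (kidx ω)) inferInstance)
      hS.comap_le kidx U μ)
    -- weights ω ∈ 𝕎_design
    (w : Fin K → Fin T → ℝ)
    (hw1 : (1 / (T : ℝ)) * ∑ k, ∑ t,
      (μ {ω | kidx ω = k}).toReal * w k t * Wmat k t = 1)
    (hw2 : ∀ (σ : 𝕊) (t : Fin T),
      0 ≤ ∑ k ∈ Finset.univ.filter (fun k => s k = σ),
        (μ {ω | kidx ω = k}).toReal * w k t * Wmat k t)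
    (hw3 : ∀ (σ : 𝕊) (t : Fin T),
      ∑ k ∈ Finset.univ.filter (fun k => s k = σ),
        (μ {ω | kidx ω = k}).toReal * w k t = 0) :
    -- c_{σt} ≥ 0, Σ_{σ,t} c_{σt} = 1, and τ(ω) = Σ_{σ,t} c_{σt}·E[τ_t | S = σ]
    (∀ (σ : 𝕊) (t : Fin T),
      0 ≤ (1 / (T : ℝ)) * ∑ k ∈ Finset.univ.filter (fun k => s k = σ),
        (μ {ω | kidx ω = k}).toReal * w k t * Wmat k t) ∧
    (∑ σ : 𝕊, ∑ t, (1 / (T : ℝ)) * ∑ k ∈ Finset.univ.filter (fun k => s k = σ),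
        (μ {ω | kidx ω = k}).toReal * w k t * Wmat k t = 1) ∧
    (∫ ω, (1 / (T : ℝ)) * ∑ t,
        (Wmat (kidx ω) t * Y1 t ω + (1 - Wmat (kidx ω) t) * Y0 t ω) * w (kidx ω) t ∂μ
      = ∑ σ : 𝕊, ∑ t,
          ((1 / (T : ℝ)) * ∑ k ∈ Finset.univ.filter (fun k => s k = σ),
            (μ {ω | kidx ω = k}).toReal * w k t * Wmat k t) *
          ((∫ ω in {ω | s (kidx ω) = σ}, (Y1 t ω - Y0 t ω) ∂μ) /
            (μ {ω | s (kidx ω) = σ}).toReal)) :=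
  design_identification_general μ T K Wmat kidx hkidx Y0 Y1 hY0meas hY1meas hY0int hY1int U hU
    hunconf s hS hsuff w hw1 hw2 hw3
end

section
/- Suppose the conditional distribution of W given U has the exponential-family form: for every w in the finite support of W, ℙ(W = w | U) = exp(S(w)ᵀ·α(U) + β(U) + γ(w)) almost surely, where S : 𝒲 → ℝ^d and γ : 𝒲 → ℝ are known functions and α(U) ∈ ℝ^d, β(U) ∈ ℝ are measurable functions of U. Then W is conditionally independent of U given S(W): for every w, ℙ(W = w | U, S(W)) = ℙ(W = w | S(W)) almost surely. -/
/-! Write `ℙ(W = v | U) = h(U, S v) · c v`. On the event `{(U, S(W)) ∈ B, W = v}` the set `B`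
is only ever probed at its slice over `S v`, so the mass of this event is `J_B(S v) · c v` with a
factor `J_B` that depends on `v` only through `S v`. Hence, within a fibre of `S`, the values of
`W` are weighted by `c` regardless of `U`: `ℙ(W = w | U, S(W))` is
`1{S(W) = S w} · c w / ∑_{S v = S w} c v`. This is a function of `S(W)` alone, so by the tower
property it is also `ℙ(W = w | S(W))`. -/

open MeasureTheory ProbabilityTheory
open scoped BigOperators

theorem setIntegral_eq_of_condExp_ae_eq {Ω E : Type*} [NormedAddCommGroup E] [NormedSpace ℝ E]
    [CompleteSpace E] {m m₀ : MeasurableSpace Ω} {μ : Measure Ω} (hm : m ≤ m₀)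
    [SigmaFinite (μ.trim hm)] {f g : Ω → E} (hf : Integrable f μ) (hfg : μ[f | m] =ᵐ[μ] g)
    {s : Set Ω} (hs : MeasurableSet[m] s) :
    ∫ x in s, f x ∂μ = ∫ x in s, g x ∂μ := by
  rw [← setIntegral_condExp hm hf hs]
  exact setIntegral_congr_ae (hm s hs) (hfg.mono fun _ h _ => h)

theorem condExp_ae_eq_of_le_of_condExp_ae_eq {Ω E : Type*} [NormedAddCommGroup E]
    [NormedSpace ℝ E] [CompleteSpace E] {m₁ m₂ m₀ : MeasurableSpace Ω} {μ : Measure Ω}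
    (hm₁₂ : m₁ ≤ m₂) (hm₂ : m₂ ≤ m₀) [SigmaFinite (μ.trim hm₂)]
    [SigmaFinite (μ.trim (hm₁₂.trans hm₂))] {f g : Ω → E} (hg : AEStronglyMeasurable[m₁] g μ)
    (hgi : Integrable g μ) (hfg : μ[f | m₂] =ᵐ[μ] g) :
    μ[f | m₁] =ᵐ[μ] g :=
  (condExp_condExp_of_le hm₁₂ hm₂).symm.trans
    ((condExp_congr_ae hfg).trans (condExp_of_aestronglyMeasurable' _ hg hgi))

noncomputable def fiberProb {𝒲 𝒮 : Type*} [Fintype 𝒲] [DecidableEq 𝒮] (S : 𝒲 → 𝒮)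
    (c : 𝒲 → ℝ) (w : 𝒲) : 𝒮 → ℝ :=
  ({S w} : Set 𝒮).indicator fun _ => c w / ∑ v with S v = S w, c v

theorem sum_mul_fiberProb {𝒲 𝒮 : Type*} [Fintype 𝒲] [DecidableEq 𝒮] {S : 𝒲 → 𝒮}
    {c : 𝒲 → ℝ} (hc : ∀ v, 0 < c v) (F : 𝒮 → ℝ) (w : 𝒲) :
    ∑ v, F (S v) * c v * fiberProb S c w (S v) = F (S w) * c w := by
  set D := ∑ v with S v = S w, c v
  have hD : 0 < D := Finset.sum_pos (fun v _ => hc v) ⟨w, by simp⟩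
  calc ∑ v, F (S v) * c v * fiberProb S c w (S v)
      = ∑ v with S v = S w, F (S w) * c w / D * c v := by
        rw [Finset.sum_filter]
        refine Finset.sum_congr rfl fun v _ => ?_
        by_cases hv : S v = S w
        · rw [if_pos hv, fiberProb, hv, Set.indicator_of_mem (Set.mem_singleton _)]
          ring
        · simp [fiberProb, hv]
    _ = F (S w) * c w := by rw [← Finset.mul_sum, div_mul_cancel₀ _ hD.ne']

section Factorization

variable {Ω 𝒲 𝓤 𝒮 : Type*} [MeasurableSpace Ω] {μ : Measure Ω} [IsFiniteMeasure μ]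
  [Fintype 𝒲] [MeasurableSpace 𝒲] [MeasurableSingletonClass 𝒲] [MeasurableSpace 𝓤]
  [MeasurableSpace 𝒮] {W : Ω → 𝒲} {U : Ω → 𝓤} {S : 𝒲 → 𝒮}

theorem integrable_comp_of_finite (hW : Measurable W) (φ : 𝒲 → ℝ) :
    Integrable (fun ω => φ (W ω)) μ :=
  Integrable.of_finite.comp_measurable hW

variable [DecidableEq 𝒲]

theorem setIntegral_comp_eq_sum (hW : Measurable W) (φ : 𝒲 → ℝ) (A : Set Ω) :
    ∫ ω in A, φ (W ω) ∂μ = ∑ v, (∫ ω in A, (if W ω = v then (1 : ℝ) else 0) ∂μ) * φ v := by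
  have hsplit : (fun ω => φ (W ω)) = fun ω => ∑ v, (if W ω = v then (1 : ℝ) else 0) * φ v := by
    ext ω
    simp
  rw [hsplit, integral_finsetSum _ fun v _ =>
    ((integrable_comp_of_finite hW fun v' => if v' = v then (1 : ℝ) else 0).mul_const _).integrableOn]
  simp only [integral_mul_const]

def CondProbFactorizes (μ : Measure Ω) (W : Ω → 𝒲) (U : Ω → 𝓤) (S : 𝒲 → 𝒮) (h : 𝓤 → 𝒮 → ℝ)
    (c : 𝒲 → ℝ) : Prop :=
  ∀ v, μ[fun ω => if W ω = v then (1 : ℝ) else 0 | MeasurableSpace.comap U inferInstance]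
    =ᵐ[μ] fun ω => h (U ω) (S v) * c v

variable {h : 𝓤 → 𝒮 → ℝ} {c : 𝒲 → ℝ}

theorem setIntegral_ite_comap_prod_eq (hW : Measurable W) (hU : Measurable U)
    (hfac : CondProbFactorizes μ W U S h c)
    {B : Set (𝓤 × 𝒮)} (hB : MeasurableSet B) (v : 𝒲) :
    ∫ ω in (fun ω => (U ω, S (W ω))) ⁻¹' B, (if W ω = v then (1 : ℝ) else 0) ∂μ
      = (∫ ω in U ⁻¹' ((fun u => (u, S v)) ⁻¹' B), h (U ω) (S v) ∂μ) * c v := by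
  have hBv : MeasurableSet ((fun u => (u, S v)) ⁻¹' B) := measurable_prodMk_right hB
  have hP : Measurable fun ω => (U ω, S (W ω)) := hU.prodMk ((measurable_of_finite S).comp hW)
  calc ∫ ω in (fun ω => (U ω, S (W ω))) ⁻¹' B, (if W ω = v then (1 : ℝ) else 0) ∂μ
      = ∫ ω in U ⁻¹' ((fun u => (u, S v)) ⁻¹' B), (if W ω = v then (1 : ℝ) else 0) ∂μ := by
        rw [← integral_indicator (hP hB), ← integral_indicator (hU hBv)]
        congr 1
        ext ω
        classical
        by_cases hω : W ω = v <;> simp [Set.indicator_apply, hω]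
    _ = ∫ ω in U ⁻¹' ((fun u => (u, S v)) ⁻¹' B), h (U ω) (S v) * c v ∂μ :=
        setIntegral_eq_of_condExp_ae_eq hU.comap_le
          (integrable_comp_of_finite hW fun v' => if v' = v then (1 : ℝ) else 0) (hfac v)
          ⟨_, hBv, rfl⟩
    _ = _ := integral_mul_const _ _

variable [MeasurableSingletonClass 𝒮] [DecidableEq 𝒮]

theorem condExp_ite_comap_prod_ae_eq_fiberProb (hW : Measurable W) (hU : Measurable U)
    (hc : ∀ v, 0 < c v)
    (hfac : CondProbFactorizes μ W U S h c) (w : 𝒲) :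
    μ[fun ω => if W ω = w then (1 : ℝ) else 0 |
        MeasurableSpace.comap (fun ω => (U ω, S (W ω))) inferInstance]
      =ᵐ[μ] fun ω => fiberProb S c w (S (W ω)) := by
  have hP : Measurable fun ω => (U ω, S (W ω)) := hU.prodMk ((measurable_of_finite S).comp hW)
  have hg : Measurable[MeasurableSpace.comap (fun ω => (U ω, S (W ω))) inferInstance]
      fun ω => fiberProb S c w (S (W ω)) :=
    ((measurable_const.indicator (measurableSet_singleton _)).comp measurable_snd).comp
      (comap_measurable _)
  refine (ae_eq_condExp_of_forall_setIntegral_eq hP.comap_le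
    (integrable_comp_of_finite hW fun v : 𝒲 => if v = w then (1 : ℝ) else 0)
    (fun _ _ _ => (integrable_comp_of_finite hW fun v => fiberProb S c w (S v)).integrableOn)
    ?_ hg.stronglyMeasurable.aestronglyMeasurable).symm
  rintro _ ⟨B, hB, rfl⟩ -
  rw [setIntegral_comp_eq_sum hW fun v : 𝒲 => fiberProb S c w (S v)]
  simp only [setIntegral_ite_comap_prod_eq hW hU hfac hB]
  exact sum_mul_fiberProb hc (fun s => ∫ ω in U ⁻¹' ((fun u => (u, s)) ⁻¹' B), h (U ω) s ∂μ) w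

theorem condExp_ite_comap_stat_ae_eq_fiberProb (hW : Measurable W) (hU : Measurable U)
    (hc : ∀ v, 0 < c v)
    (hfac : CondProbFactorizes μ W U S h c) (w : 𝒲) :
    μ[fun ω => if W ω = w then (1 : ℝ) else 0 |
        MeasurableSpace.comap (fun ω => S (W ω)) inferInstance]
      =ᵐ[μ] fun ω => fiberProb S c w (S (W ω)) := by
  have hP : Measurable fun ω => (U ω, S (W ω)) := hU.prodMk ((measurable_of_finite S).comp hW)
  have hle : MeasurableSpace.comap (fun ω => S (W ω)) inferInstance
      ≤ MeasurableSpace.comap (fun ω => (U ω, S (W ω))) inferInstance :=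
    (measurable_snd.comp (comap_measurable fun ω => (U ω, S (W ω)))).comap_le
  have hg : Measurable[MeasurableSpace.comap (fun ω => S (W ω)) inferInstance]
      fun ω => fiberProb S c w (S (W ω)) :=
    (measurable_const.indicator (measurableSet_singleton _)).comp (comap_measurable _)
  exact condExp_ae_eq_of_le_of_condExp_ae_eq hle hP.comap_le
    hg.stronglyMeasurable.aestronglyMeasurable
    (integrable_comp_of_finite hW fun v => fiberProb S c w (S v))
    (condExp_ite_comap_prod_ae_eq_fiberProb hW hU hc hfac w)

end Factorization

theorem expfamily_sufficiency_general
    {Ωs 𝓤 : Type*} [MeasurableSpace Ωs] [MeasurableSpace 𝓤]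
    (μ : Measure Ωs) [IsProbabilityMeasure μ]
    (T d : ℕ)
    -- the assignment, a random vector with values in the finite set {0,1}^T
    (W : Ωs → Fin T → Bool) (hW : Measurable W)
    -- the unobserved confounder
    (U : Ωs → 𝓤) (hU : Measurable U)
    -- known functions S and γ, measurable functions α(U), β(U)
    (S : (Fin T → Bool) → Fin d → ℝ) (gam : (Fin T → Bool) → ℝ)
    (a : 𝓤 → Fin d → ℝ) (b : 𝓤 → ℝ)
    -- the exponential-family form of ℙ(W = w | U)
    (hexp : ∀ w : Fin T → Bool,
      μ[(fun ω => if W ω = w then (1 : ℝ) else 0) |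
          MeasurableSpace.comap U inferInstance]
        =ᵐ[μ] fun ω => Real.exp ((∑ j, S w j * a (U ω) j) + b (U ω) + gam w)) :
    ∀ w : Fin T → Bool,
      μ[(fun ω => if W ω = w then (1 : ℝ) else 0) |
          MeasurableSpace.comap (fun ω => (U ω, S (W ω))) inferInstance]
        =ᵐ[μ]
      μ[(fun ω => if W ω = w then (1 : ℝ) else 0) |
          MeasurableSpace.comap (fun ω => S (W ω)) inferInstance] := by
  intro w
  set h : 𝓤 → (Fin d → ℝ) → ℝ := fun u s => Real.exp (∑ j, s j * a u j + b u)
  set c : (Fin T → Bool) → ℝ := fun v => Real.exp (gam v)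
  have hc : ∀ v, 0 < c v := fun v => Real.exp_pos (gam v)
  have hfac : CondProbFactorizes μ W U S h c :=
    fun v => (hexp v).trans (.of_forall fun ω => Real.exp_add _ _)
  exact (condExp_ite_comap_prod_ae_eq_fiberProb hW hU hc hfac w).trans
    (condExp_ite_comap_stat_ae_eq_fiberProb hW hU hc hfac w).symm

/-- **Exponential-family sufficiency.**
If the conditional distribution of the assignment `W` given `U` has the
exponential-family form `ℙ(W = w | U) = exp(S(w)ᵀα(U) + β(U) + γ(w))` a.s. for
every `w` in the (finite) support, with known `S` and `γ`, then `W` is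
conditionally independent of `U` given `S(W)`: for every `w`,
`ℙ(W = w | U, S(W)) = ℙ(W = w | S(W))` a.s. -/
theorem expfamily_sufficiency
    {Ωs 𝓤 : Type*} [MeasurableSpace Ωs] [MeasurableSpace 𝓤]
    (μ : Measure Ωs) [IsProbabilityMeasure μ]
    (T d : ℕ)
    -- the assignment, a random vector with values in the finite set {0,1}^T
    (W : Ωs → Fin T → Bool) (hW : Measurable W)
    -- the unobserved confounder
    (U : Ωs → 𝓤) (hU : Measurable U)
    -- known functions S and γ, measurable functions α(U), β(U)
    (S : (Fin T → Bool) → Fin d → ℝ) (gam : (Fin T → Bool) → ℝ)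
    (a : 𝓤 → Fin d → ℝ) (b : 𝓤 → ℝ) (ha : Measurable a) (hb : Measurable b)
    -- the exponential-family form of ℙ(W = w | U)
    (hexp : ∀ w : Fin T → Bool,
      μ[(fun ω => if W ω = w then (1 : ℝ) else 0) |
          MeasurableSpace.comap U inferInstance]
        =ᵐ[μ] fun ω => Real.exp ((∑ j, S w j * a (U ω) j) + b (U ω) + gam w)) :
    ∀ w : Fin T → Bool,
      μ[(fun ω => if W ω = w then (1 : ℝ) else 0) |
          MeasurableSpace.comap (fun ω => (U ω, S (W ω))) inferInstance]
        =ᵐ[μ]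
      μ[(fun ω => if W ω = w then (1 : ℝ) else 0) |
          MeasurableSpace.comap (fun ω => S (W ω)) inferInstance] :=
  expfamily_sufficiency_general μ T d W hW U hU S gam a b hexp
end

section
/- In the static logit model — where the coordinates W_1, …, W_T are conditionally independent given U and ℙ(W_t = 1 | U) = exp(α(U)ᵀψ(t) + λ_t)/(1 + exp(α(U)ᵀψ(t) + λ_t)) for each t — the statistic S := (1/T)·Σ_{t=1}^T ψ(t)·W_t is sufficient for the assignment: W is conditionally independent of U given S. -/
open MeasureTheory ProbabilityTheory Set

/-!
Given `U`, the coordinates are independent with `ℙ(Wₜ = 1 | U) = pₜ(U)` logistic, so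
`ℙ(W = w | U) = ∏ₜ pₜ^wₜ (1 - pₜ)^(1 - wₜ) = exp (∑ₜ λₜ wₜ) · exp (α(U) ⬝ s(w)) / ∏ₜ (1 + exp (α(U) ⬝ ψ(t) + λₜ))`
with `s(w) = ∑ₜ ψ(t) wₜ = T · S`. Integrating over `{U ∈ B}` gives a Fisher–Neyman factorization
`ℙ(W = w, U ∈ B) = c(w) · G(S(w), B)`. As `S` takes finitely many values, `W ⫫ U | S` amounts to
`ℙ(S = v, W ∈ A, U ∈ B) ℙ(S = v) = ℙ(S = v, W ∈ A) ℙ(S = v, U ∈ B)` for every value `v`. Summing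
the factorization over the fibre gives `ℙ(S = v, W ∈ A, U ∈ B) = (∑_{w ∈ A, S(w) = v} c(w)) · G(v, B)`,
after which the identity is a ring identity.
-/

section DiscreteConditioning

variable {Ω γ : Type*} {mΩ : MeasurableSpace Ω} {mγ : MeasurableSpace γ} {μ : Measure Ω}
  {S : Ω → γ}

lemma ae_measure_preimage_singleton_ne_zero (hS : (range S).Countable) :
    ∀ᵐ ω ∂μ, μ (S ⁻¹' {S ω}) ≠ 0 := by
  have hnull : {ω | ¬μ (S ⁻¹' {S ω}) ≠ 0} = S ⁻¹' {v ∈ range S | μ (S ⁻¹' {v}) = 0} := by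
    ext ω; simp
  rw [ae_iff, hnull, measure_preimage_eq_zero_iff_of_countable (hS.mono (sep_subset _ _))]
  exact fun v hv => hv.2

variable [MeasurableSingletonClass γ]

lemma measurableSet_comap_preimage_of_finite_range (hS : (range S).Finite) (t : Set γ) :
    MeasurableSet[mγ.comap S] (S ⁻¹' t) :=
  ⟨t ∩ range S, (hS.subset inter_subset_right).measurableSet, preimage_inter_range⟩

lemma stronglyMeasurable_comap_comp_of_finite_range {β : Type*} [TopologicalSpace β]
    (hS : (range S).Finite) (h : γ → β) : StronglyMeasurable[mγ.comap S] (h ∘ S) :=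
  @SimpleFunc.stronglyMeasurable Ω β (mγ.comap S) _
    (@SimpleFunc.mk Ω (mγ.comap S) β (h ∘ S)
      (fun y => measurableSet_comap_preimage_of_finite_range hS (h ⁻¹' {y}))
      (range_comp h S ▸ hS.image h))

variable {E : Type*} [NormedAddCommGroup E] [NormedSpace ℝ E]

lemma setIntegral_preimage_eq_sum_fiber (hS : Measurable S) (hfin : (range S).Finite)
    {f : Ω → E} (hf : Integrable f μ) (t : Set γ) [DecidablePred (· ∈ t)] :
    ∫ ω in S ⁻¹' t, f ω ∂μ = ∑ v ∈ hfin.toFinset with v ∈ t, ∫ ω in S ⁻¹' {v}, f ω ∂μ := by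
  have hunion : S ⁻¹' t = ⋃ v ∈ hfin.toFinset.filter (· ∈ t), S ⁻¹' {v} := by
    ext ω; simp
  rw [hunion, integral_biUnion_finset _ (fun v _ => hS (measurableSet_singleton v))
    (pairwiseDisjoint_fiber S _) (fun _ _ => hf.integrableOn)]

lemma condExp_comap_ae_eq_of_finite_range [CompleteSpace E] [IsFiniteMeasure μ]
    (hS : Measurable S) (hfin : (range S).Finite) {f : Ω → E} (hf : Integrable f μ) :
    μ[f | mγ.comap S] =ᵐ[μ] fun ω => (μ.real (S ⁻¹' {S ω}))⁻¹ • ∫ x in S ⁻¹' {S ω}, f x ∂μ := by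
  classical
  set h : γ → E := fun v => (μ.real (S ⁻¹' {v}))⁻¹ • ∫ x in S ⁻¹' {v}, f x ∂μ
  have h_sm : StronglyMeasurable[mγ.comap S] (h ∘ S) :=
    stronglyMeasurable_comap_comp_of_finite_range hfin h
  have h_int : Integrable (h ∘ S) μ := by
    obtain ⟨C, hC⟩ := (hfin.image fun v => ‖h v‖).bddAbove
    exact .of_bound (h_sm.mono hS.comap_le).aestronglyMeasurable C
      (ae_of_all _ fun ω => hC ⟨S ω, mem_range_self ω, rfl⟩)
  have h_fiber : ∀ v, ∫ x in S ⁻¹' {v}, h (S x) ∂μ = ∫ x in S ⁻¹' {v}, f x ∂μ := by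
    intro v
    rw [setIntegral_congr_fun (hS (measurableSet_singleton v)) fun x (hx : S x = v) => by rw [hx],
      setIntegral_const, smul_smul]
    by_cases hv : μ (S ⁻¹' {v}) = 0
    · simp [Measure.restrict_eq_zero.2 hv]
    · rw [mul_inv_cancel₀ ((measureReal_ne_zero_iff).2 hv), one_smul]
  refine (ae_eq_condExp_of_forall_setIntegral_eq hS.comap_le hf
    (fun _ _ _ => h_int.integrableOn) ?_ h_sm.aestronglyMeasurable).symm
  rintro - ⟨t, -, rfl⟩ -
  rw [setIntegral_preimage_eq_sum_fiber hS hfin hf, setIntegral_preimage_eq_sum_fiber hS hfin h_int]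
  exact Finset.sum_congr rfl fun v _ => h_fiber v

lemma condIndepFun_comap_of_measureReal_fiber_inter [StandardBorelSpace Ω] [IsFiniteMeasure μ]
    {β β' : Type*} [MeasurableSpace β] [MeasurableSpace β'] {X : Ω → β} {Y : Ω → β'}
    (hS : Measurable S) (hfin : (range S).Finite) (hX : Measurable X) (hY : Measurable Y)
    (h : ∀ v s t, MeasurableSet s → MeasurableSet t →
      μ.real (S ⁻¹' {v} ∩ X ⁻¹' s ∩ Y ⁻¹' t) * μ.real (S ⁻¹' {v})
        = μ.real (S ⁻¹' {v} ∩ X ⁻¹' s) * μ.real (S ⁻¹' {v} ∩ Y ⁻¹' t)) :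
    CondIndepFun (mγ.comap S) hS.comap_le X Y μ := by
  have h_prob : ∀ A, MeasurableSet A → μ⟦A | mγ.comap S⟧
      =ᵐ[μ] fun ω => μ.real (S ⁻¹' {S ω} ∩ A) / μ.real (S ⁻¹' {S ω}) := by
    intro A hA
    filter_upwards [condExp_comap_ae_eq_of_finite_range hS hfin
      ((integrable_const (1 : ℝ)).indicator hA)] with ω hω
    rw [hω, integral_indicator_const _ hA, measureReal_restrict_apply hA, inter_comm,
      smul_eq_mul, smul_eq_mul, mul_one, inv_mul_eq_div]
  rw [condIndepFun_iff_condExp_inter_preimage_eq_mul hX hY]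
  intro s t hs ht
  filter_upwards [h_prob _ ((hX hs).inter (hY ht)), h_prob _ (hX hs), h_prob _ (hY ht),
    ae_measure_preimage_singleton_ne_zero hfin.countable] with ω hXY hX hY hpos
  rw [hXY, hX, hY, ← inter_assoc]
  have hpos' : μ.real (S ⁻¹' {S ω}) ≠ 0 := (measureReal_ne_zero_iff).2 hpos
  field_simp
  linear_combination h (S ω) s t hs ht

end DiscreteConditioning

section Factorization

variable {Ω α γ 𝓤 : Type*} {mΩ : MeasurableSpace Ω} [MeasurableSpace α] [Fintype α]
  [MeasurableSingletonClass α] [MeasurableSpace 𝓤] {μ : Measure Ω}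
  [IsFiniteMeasure μ] {W : Ω → α} {U : Ω → 𝓤} {f : α → γ} {c : α → ℝ} {G : γ → Set 𝓤 → ℝ}

open Classical in
lemma measureReal_fiber_inter_eq_of_factorization (hW : Measurable W) (hU : Measurable U)
    (hfac : ∀ w B, MeasurableSet B → μ.real (W ⁻¹' {w} ∩ U ⁻¹' B) = c w * G (f w) B)
    (v : γ) (A : Set α) {B : Set 𝓤} (hB : MeasurableSet B) :
    μ.real ((f ∘ W) ⁻¹' {v} ∩ W ⁻¹' A ∩ U ⁻¹' B) = (∑ w with f w = v ∧ w ∈ A, c w) * G v B := by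
  have hunion : (f ∘ W) ⁻¹' {v} ∩ W ⁻¹' A ∩ U ⁻¹' B
      = ⋃ w ∈ Finset.univ.filter (fun w => f w = v ∧ w ∈ A), W ⁻¹' {w} ∩ U ⁻¹' B := by
    ext ω; simp [and_assoc]
  rw [hunion, measureReal_biUnion_finset
    (fun w _ w' _ hww' => (pairwiseDisjoint_fiber W _ (mem_univ w) (mem_univ w') hww').mono
      inter_subset_left inter_subset_left)
    (fun w _ => (hW (measurableSet_singleton w)).inter (hU hB)), Finset.sum_mul]
  refine Finset.sum_congr rfl fun w hw => ?_
  rw [hfac w B hB, (Finset.mem_filter.1 hw).2.1]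

theorem condIndepFun_of_factorization [StandardBorelSpace Ω] [MeasurableSpace γ]
    [MeasurableSingletonClass γ] (hW : Measurable W) (hU : Measurable U)
    (hfac : ∀ w B, MeasurableSet B → μ.real (W ⁻¹' {w} ∩ U ⁻¹' B) = c w * G (f w) B)
    (hfW : Measurable (f ∘ W)) :
    CondIndepFun (MeasurableSpace.comap (f ∘ W) inferInstance) hfW.comap_le W U μ := by
  refine condIndepFun_comap_of_measureReal_fiber_inter hfW
    ((finite_range f).subset (range_comp_subset_range W f)) hW hU fun v A B _ hB => ?_
  have hfib := measureReal_fiber_inter_eq_of_factorization hW hU hfac v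
  have hA := hfib A MeasurableSet.univ
  have hB' := hfib univ hB
  have hv := hfib univ MeasurableSet.univ
  simp only [preimage_univ, inter_univ] at hA hB' hv
  rw [hfib A hB, hA, hB', hv]
  ring

end Factorization

section BernoulliCoordinates

lemma prod_ite_logistic {ι : Type*} [Fintype ι] (x : ι → ℝ) (w : ι → Bool) :
    ∏ i, (if w i then Real.exp (x i) / (1 + Real.exp (x i))
      else 1 - Real.exp (x i) / (1 + Real.exp (x i)))
      = Real.exp (∑ i, if w i then x i else 0) / ∏ i, (1 + Real.exp (x i)) := by
  rw [Real.exp_sum, ← Finset.prod_div_distrib]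
  refine Finset.prod_congr rfl fun i _ => ?_
  have : 1 + Real.exp (x i) ≠ 0 := by positivity
  cases w i
  · simp only [Bool.false_eq_true, if_false, Real.exp_zero]
    field_simp
    ring
  · simp

variable {Ω : Type*} {m mΩ : MeasurableSpace Ω} {μ : Measure Ω} [IsFiniteMeasure μ]

lemma condExp_preimage_singleton_ae_eq_of_condExp_ite (hm : m ≤ mΩ) {X : Ω → Bool}
    (hX : Measurable X) {p : Ω → ℝ} (hp : μ[fun ω => if X ω then (1 : ℝ) else 0 | m] =ᵐ[μ] p)
    (b : Bool) : μ⟦X ⁻¹' {b} | m⟧ =ᵐ[μ] fun ω => if b then p ω else 1 - p ω := by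
  have h_true : (X ⁻¹' {true}).indicator (fun _ => (1 : ℝ)) = fun ω => if X ω then 1 else 0 := by
    ext ω; simp [indicator]
  cases b
  · have h_false : (X ⁻¹' {false}).indicator (fun _ => (1 : ℝ))
        = (fun _ => 1) - fun ω => if X ω then 1 else 0 := by
      ext ω; cases hXω : X ω <;> simp [indicator, hXω]
    have h_int : Integrable (fun ω => if X ω then (1 : ℝ) else 0) μ :=
      h_true ▸ (integrable_const 1).indicator (hX (measurableSet_singleton true))
    filter_upwards [condExp_sub (m := m) (integrable_const (1 : ℝ)) h_int, hp] with ω h1 h2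
    simp [h_false, h1, h2, condExp_const hm]
  · simpa [h_true] using hp

lemma iCondIndepFun.condExp_preimage_singleton_ae_eq_prod [StandardBorelSpace Ω] {hm : m ≤ mΩ}
    {ι β : Type*} [Fintype ι] [MeasurableSpace β] [MeasurableSingletonClass β] {W : Ω → ι → β}
    (hW : ∀ i, Measurable fun ω => W ω i) (h : iCondIndepFun m hm (fun i ω => W ω i) μ)
    (w : ι → β) : μ⟦W ⁻¹' {w} | m⟧ =ᵐ[μ] ∏ i, μ⟦(fun ω => W ω i) ⁻¹' {w i} | m⟧ := by
  have h_inter : ⋂ i ∈ (Finset.univ : Finset ι), (fun ω => W ω i) ⁻¹' {w i} = W ⁻¹' {w} := by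
    ext ω; simp [funext_iff]
  rw [← h_inter]
  exact (iCondIndepFun_iff_condExp_inter_preimage_eq_mul _ _ hW).1 h Finset.univ
    fun i _ => measurableSet_singleton (w i)

end BernoulliCoordinates

lemma logit_measureReal_preimage_singleton_inter {Ω 𝓤 ι κ : Type*} [MeasurableSpace Ω]
    [StandardBorelSpace Ω] [MeasurableSpace 𝓤] [Fintype ι] [Fintype κ] {μ : Measure Ω}
    [IsFiniteMeasure μ] {W : Ω → ι → Bool} (hW : Measurable W) {U : Ω → 𝓤} (hU : Measurable U)
    {ψ : ι → κ → ℝ} {lam : ι → ℝ} {a : 𝓤 → κ → ℝ}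
    (hcondindep : iCondIndepFun (MeasurableSpace.comap U inferInstance) hU.comap_le
      (fun t ω => W ω t) μ)
    (hmarg : ∀ t, μ[(fun ω => if W ω t then (1 : ℝ) else 0) |
        MeasurableSpace.comap U inferInstance]
      =ᵐ[μ] fun ω =>
        Real.exp ((∑ j, a (U ω) j * ψ t j) + lam t) /
          (1 + Real.exp ((∑ j, a (U ω) j * ψ t j) + lam t)))
    (w : ι → Bool) {B : Set 𝓤} (hB : MeasurableSet B) :
    μ.real (W ⁻¹' {w} ∩ U ⁻¹' B)
      = Real.exp (∑ t, lam t * (if w t then 1 else 0)) *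
        ∫ ω in U ⁻¹' B, Real.exp (∑ j, a (U ω) j * ∑ t, ψ t j * (if w t then 1 else 0)) /
          ∏ t, (1 + Real.exp ((∑ j, a (U ω) j * ψ t j) + lam t)) ∂μ := by
  have hWt : ∀ t, Measurable fun ω => W ω t := fun t => (measurable_pi_apply t).comp hW
  have hW_w : MeasurableSet (W ⁻¹' {w}) := hW (measurableSet_singleton w)
  have h_density : μ⟦W ⁻¹' {w} | MeasurableSpace.comap U inferInstance⟧ =ᵐ[μ] fun ω =>
      Real.exp (∑ t, if w t then (∑ j, a (U ω) j * ψ t j) + lam t else 0) /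
        ∏ t, (1 + Real.exp ((∑ j, a (U ω) j * ψ t j) + lam t)) := by
    have h_coord := fun t => condExp_preimage_singleton_ae_eq_of_condExp_ite hU.comap_le (hWt t)
      (hmarg t) (w t)
    filter_upwards [iCondIndepFun.condExp_preimage_singleton_ae_eq_prod hWt hcondindep w,
      ae_all_iff.2 h_coord] with ω h_prod h_coord
    rw [h_prod, Finset.prod_apply, Finset.prod_congr rfl fun t _ => h_coord t, prod_ite_logistic]
  have h_exponent : ∀ u, ∑ t, (if w t then (∑ j, a u j * ψ t j) + lam t else 0)
      = (∑ t, lam t * (if w t then 1 else 0)) +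
        ∑ j, a u j * ∑ t, ψ t j * (if w t then 1 else 0) := by
    intro u
    simp only [mul_ite, mul_one, mul_zero, Finset.mul_sum]
    rw [Finset.sum_comm (γ := κ), ← Finset.sum_add_distrib]
    refine Finset.sum_congr rfl fun t _ => ?_
    cases w t <;> simp [add_comm]
  calc μ.real (W ⁻¹' {w} ∩ U ⁻¹' B)
      = ∫ ω in U ⁻¹' B, (μ⟦W ⁻¹' {w} | MeasurableSpace.comap U inferInstance⟧) ω ∂μ := by
        rw [setIntegral_condExp hU.comap_le ((integrable_const 1).indicator hW_w) ⟨B, hB, rfl⟩,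
          integral_indicator_const _ hW_w, measureReal_restrict_apply hW_w, smul_eq_mul, mul_one]
    _ = ∫ ω in U ⁻¹' B, Real.exp (∑ t, if w t then (∑ j, a (U ω) j * ψ t j) + lam t else 0) /
          ∏ t, (1 + Real.exp ((∑ j, a (U ω) j * ψ t j) + lam t)) ∂μ :=
        integral_congr_ae (ae_restrict_of_ae h_density)
    _ = _ := by
        simp only [h_exponent, Real.exp_add, mul_div_assoc, integral_const_mul]

lemma natCast_mul_one_div_mul_sum_fin (T : ℕ) (g : Fin T → ℝ) :
    (T : ℝ) * (1 / T * ∑ t, g t) = ∑ t, g t := by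
  rcases T with _ | T
  · simp
  · rw [← mul_assoc, mul_one_div_cancel (by positivity), one_mul]

theorem static_logit_sufficiency_general
    {Ωs 𝓤 : Type*} [MeasurableSpace Ωs] [StandardBorelSpace Ωs]
    [MeasurableSpace 𝓤]
    (μ : Measure Ωs) [IsProbabilityMeasure μ]
    (T d : ℕ)
    (W : Ωs → Fin T → Bool) (hW : Measurable W)
    (U : Ωs → 𝓤) (hU : Measurable U)
    (ψ : Fin T → Fin d → ℝ) (lam : Fin T → ℝ) (a : 𝓤 → Fin d → ℝ)
    -- the coordinates of W are conditionally independent given U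
    (hcondindep : iCondIndepFun (MeasurableSpace.comap U inferInstance) hU.comap_le
      (fun t ω => W ω t) μ)
    -- logistic conditional means
    (hmarg : ∀ t, μ[(fun ω => if W ω t then (1 : ℝ) else 0) |
        MeasurableSpace.comap U inferInstance]
      =ᵐ[μ] fun ω =>
        Real.exp ((∑ j, a (U ω) j * ψ t j) + lam t) /
          (1 + Real.exp ((∑ j, a (U ω) j * ψ t j) + lam t)))
    -- the sufficient statistic S = (1/T)·Σ_t ψ(t)·W_t
    (S : Ωs → Fin d → ℝ)
    (hSdef : ∀ ω j, S ω j = (1 / (T : ℝ)) * ∑ t, ψ t j * (if W ω t then 1 else 0))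
    (hS : Measurable S) :
    CondIndepFun (MeasurableSpace.comap S inferInstance) hS.comap_le W U μ := by
  set S₀ : (Fin T → Bool) → Fin d → ℝ := fun w j => 1 / T * ∑ t, ψ t j * (if w t then 1 else 0)
  obtain rfl : S = S₀ ∘ W := funext fun ω => funext (hSdef ω)
  refine condIndepFun_of_factorization hW hU
    (c := fun w => Real.exp (∑ t, lam t * (if w t then 1 else 0)))
    -- `T * S₀ w` recovers `s(w)`, also for `T = 0`, where `1 / T = 0` and `s(w)` is an empty sum.
    (G := fun v B => ∫ ω in U ⁻¹' B, Real.exp (∑ j, a (U ω) j * (T * v j)) /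
      ∏ t, (1 + Real.exp ((∑ j, a (U ω) j * ψ t j) + lam t)) ∂μ) (fun w B hB => ?_) hS
  simp only [S₀, natCast_mul_one_div_mul_sum_fin]
  exact logit_measureReal_preimage_singleton_inter hW hU hcondindep hmarg w hB

/-- **Static logit model sufficiency.**
If the coordinates `W_1, …, W_T` are conditionally independent given `U` with
`ℙ(W_t = 1 | U) = exp(α(U)ᵀψ(t) + λ_t)/(1 + exp(α(U)ᵀψ(t) + λ_t))`, then
`S = (1/T)·Σ_t ψ(t)·W_t` is sufficient for the assignment: `W ⫫ U | S`. -/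
theorem static_logit_sufficiency
    {Ωs 𝓤 : Type*} [MeasurableSpace Ωs] [StandardBorelSpace Ωs] [Nonempty Ωs]
    [MeasurableSpace 𝓤]
    (μ : Measure Ωs) [IsProbabilityMeasure μ]
    (T d : ℕ)
    (W : Ωs → Fin T → Bool) (hW : Measurable W)
    (U : Ωs → 𝓤) (hU : Measurable U)
    (ψ : Fin T → Fin d → ℝ) (lam : Fin T → ℝ) (a : 𝓤 → Fin d → ℝ)
    -- the coordinates of W are conditionally independent given U
    (hcondindep : iCondIndepFun (MeasurableSpace.comap U inferInstance) hU.comap_le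
      (fun t ω => W ω t) μ)
    -- logistic conditional means
    (hmarg : ∀ t, μ[(fun ω => if W ω t then (1 : ℝ) else 0) |
        MeasurableSpace.comap U inferInstance]
      =ᵐ[μ] fun ω =>
        Real.exp ((∑ j, a (U ω) j * ψ t j) + lam t) /
          (1 + Real.exp ((∑ j, a (U ω) j * ψ t j) + lam t)))
    -- the sufficient statistic S = (1/T)·Σ_t ψ(t)·W_t
    (S : Ωs → Fin d → ℝ)
    (hSdef : ∀ ω j, S ω j = (1 / (T : ℝ)) * ∑ t, ψ t j * (if W ω t then 1 else 0))
    (hS : Measurable S) :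
    CondIndepFun (MeasurableSpace.comap S inferInstance) hS.comap_le W U μ :=
  static_logit_sufficiency_general μ T d W hW U hU ψ lam a hcondindep hmarg S hSdef hS
end

section
/- In the time-homogeneous Markov logit model — where for t ≥ 2, ℙ(W_t = 1 | U, W_1,…,W_{t−1}) = exp(α(U) + γ(U)·W_{t−1})/(1 + exp(α(U) + γ(U)·W_{t−1})) and, given U and (W_1,…,W_{t−1}), W_t is conditionally independent of nothing further (i.e., the process is first-order Markov given U) — the statistic S := (Σ_{t=2}^{T−1} W_t, Σ_{t=2}^{T} W_t·W_{t−1}, W_1, W_T) is sufficient for the assignment: W is conditionally independent of U given S. -/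
/-! A Markov path probability `π(W₁) ∏ₜ P(W_{t-1}, W_t)` depends on the path only through `W₁`
and the transition counts `N_{ab} = #{t | (W_{t-1}, W_t) = (a, b)}`, and on `{0,1}` these are
functions of `S`: `N₁₁` is its second component, `N₁₀ + N₁₁` and `N₀₁ + N₁₁` count the ones among
`W₁, …, W_{T-1}` and `W₂, …, W_T` (the interior count plus `W₁`, resp. `W_T`), and all four add up
to `T - 1`. So paths with the same value of `S` have the same joint law with `U`, i.e. given `S`
the path is uniform on its fibre whatever `U` is. -/

open MeasureTheory ProbabilityTheory Finset

section MarkovPath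

variable {n : ℕ}

def markovStat (w : Fin (n + 1) → Bool) : ℕ × ℕ × Bool × Bool :=
  (∑ t : Fin (n + 1), (if t ≠ 0 ∧ t ≠ Fin.last n ∧ w t then 1 else 0),
   ∑ i : Fin n, (if w i.succ ∧ w i.castSucc then 1 else 0),
   w 0, w (Fin.last n))

def transitionCount (w : Fin (n + 1) → Bool) (a b : Bool) : ℕ :=
  #{i : Fin n | w i.castSucc = a ∧ w i.succ = b}

lemma prod_eq_prod_pow_transitionCount {M : Type*} [CommMonoid M] (w : Fin (n + 1) → Bool)
    (P : Bool → Bool → M) :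
    ∏ i : Fin n, P (w i.castSucc) (w i.succ) = ∏ a, ∏ b, P a b ^ transitionCount w a b := by
  calc ∏ i : Fin n, P (w i.castSucc) (w i.succ)
      = ∏ ab : Bool × Bool, ∏ i ∈ (univ : Finset (Fin n)) with (w i.castSucc, w i.succ) = ab,
          P ab.1 ab.2 :=
        (prod_fiberwise' univ (fun i : Fin n => (w i.castSucc, w i.succ))
          fun ab : Bool × Bool => P ab.1 ab.2).symm
    _ = _ := by simp [Fintype.prod_prod_type, transitionCount, Prod.ext_iff]

lemma sum_transitionCount (w : Fin (n + 1) → Bool) : ∑ a, ∑ b, transitionCount w a b = n := by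
  have := card_eq_sum_card_fiberwise (s := univ) (t := univ)
    (f := fun i : Fin n => (w i.castSucc, w i.succ)) fun _ _ => mem_univ _
  simpa [Fintype.sum_prod_type, transitionCount, Prod.ext_iff] using this.symm

lemma transitionCount_true_true (w : Fin (n + 1) → Bool) :
    transitionCount w true true = ∑ i : Fin n, if w i.succ ∧ w i.castSucc then 1 else 0 := by
  rw [transitionCount, card_filter]
  exact sum_congr rfl fun i _ => by simp only [and_comm]

lemma transitionCount_from_true_add_last (w : Fin (n + 1) → Bool) :
    transitionCount w true false + transitionCount w true true + (if w (Fin.last n) then 1 else 0)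
      = ∑ t, if w t then 1 else 0 := by
  rw [Fin.sum_univ_castSucc]
  simp only [transitionCount, card_filter, ← sum_add_distrib]
  congr 1
  refine sum_congr rfl fun i _ => ?_
  cases w i.castSucc <;> cases w i.succ <;> rfl

lemma transitionCount_to_true_add_first (w : Fin (n + 1) → Bool) :
    transitionCount w false true + transitionCount w true true + (if w 0 then 1 else 0)
      = ∑ t, if w t then 1 else 0 := by
  rw [Fin.sum_univ_succ, add_comm _ (∑ i : Fin n, _)]
  simp only [transitionCount, card_filter, ← sum_add_distrib]
  congr 1
  refine sum_congr rfl fun i _ => ?_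
  cases w i.castSucc <;> cases w i.succ <;> rfl

lemma sum_ite_eq_interior_add_first_add_last {m : ℕ} (w : Fin (m + 2) → Bool) :
    (∑ t, if w t then 1 else 0) = (∑ t, if t ≠ 0 ∧ t ≠ Fin.last (m + 1) ∧ w t then 1 else 0)
      + (if w 0 then 1 else 0) + (if w (Fin.last (m + 1)) then 1 else 0) := by
  rw [Fin.sum_univ_succ, Fin.sum_univ_castSucc, Fin.sum_univ_succ, Fin.sum_univ_castSucc]
  simp [Fin.succ_ne_zero, add_comm, add_left_comm]

lemma sum_ite_eq_of_markovStat_eq {w w' : Fin (n + 1) → Bool}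
    (h : markovStat w = markovStat w') :
    (∑ t, if w t then 1 else 0) = ∑ t, if w' t then 1 else 0 := by
  simp only [markovStat, Prod.mk.injEq] at h
  obtain ⟨hinterior, -, hfirst, hlast⟩ := h
  cases n with
  | zero => rw [Fin.sum_univ_one, Fin.sum_univ_one, hfirst]
  | succ m =>
    rw [sum_ite_eq_interior_add_first_add_last, sum_ite_eq_interior_add_first_add_last,
      hinterior, hfirst, hlast]

lemma transitionCount_eq_of_markovStat_eq {w w' : Fin (n + 1) → Bool}
    (h : markovStat w = markovStat w') (a b : Bool) :
    transitionCount w a b = transitionCount w' a b := by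
  have htotal := sum_ite_eq_of_markovStat_eq h
  simp only [markovStat, Prod.mk.injEq] at h
  obtain ⟨-, hpairs, hfirst, hlast⟩ := h
  have h11 : transitionCount w true true = transitionCount w' true true := by
    rw [transitionCount_true_true, transitionCount_true_true, hpairs]
  have h1x := transitionCount_from_true_add_last w
  have h1x' := transitionCount_from_true_add_last w'
  have hx1 := transitionCount_to_true_add_first w
  have hx1' := transitionCount_to_true_add_first w'
  have hn := sum_transitionCount w
  have hn' := sum_transitionCount w'
  simp only [Fintype.sum_bool] at hn hn'
  rw [hlast] at h1x
  rw [hfirst] at hx1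
  cases a <;> cases b <;> omega

def markovPathProb {R : Type*} [CommMonoid R] (π : Bool → R) (P : Bool → Bool → R)
    (w : Fin (n + 1) → Bool) : R :=
  π (w 0) * ∏ i : Fin n, P (w i.castSucc) (w i.succ)

lemma markovPathProb_eq_of_markovStat_eq {R : Type*} [CommMonoid R] (π : Bool → R)
    (P : Bool → Bool → R) {w w' : Fin (n + 1) → Bool} (h : markovStat w = markovStat w') :
    markovPathProb π P w = markovPathProb π P w' := by
  have hfirst : w 0 = w' 0 := congrArg (·.2.2.1) h
  simp only [markovPathProb, prod_eq_prod_pow_transitionCount,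
    transitionCount_eq_of_markovStat_eq h, hfirst]

noncomputable def logitTransition (α γ : ℝ) (a b : Bool) : ℝ :=
  if b then Real.exp (α + γ * (if a then 1 else 0)) / (1 + Real.exp (α + γ * (if a then 1 else 0)))
  else 1 / (1 + Real.exp (α + γ * (if a then 1 else 0)))

end MarkovPath

section Sufficiency

variable {Ω β γ V : Type*} {m mΩ : MeasurableSpace Ω} {μ : Measure Ω} [IsFiniteMeasure μ]

lemma measureReal_inter_eq_of_condExp_ae_eq (hm : m ≤ mΩ)
    {A B C : Set Ω} (hA : MeasurableSet A) (hB : MeasurableSet B) (hC : MeasurableSet[m] C)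
    (h : μ⟦A | m⟧ =ᵐ[μ] μ⟦B | m⟧) :
    μ.real (A ∩ C) = μ.real (B ∩ C) := by
  have key : ∀ {D : Set Ω}, MeasurableSet D → ∫ x in C, (μ⟦D | m⟧) x ∂μ = μ.real (D ∩ C) := by
    intro D hD
    rw [setIntegral_condExp hm ((integrable_const (1 : ℝ)).indicator hD) hC,
      integral_indicator_const _ hD, measureReal_restrict_apply hD, smul_eq_mul, mul_one]
  rw [← key hA, ← key hB]
  exact setIntegral_congr_ae (hm _ hC) (h.mono fun _ hx _ => hx)

variable [MeasurableSpace β] [MeasurableSingletonClass β] [Fintype β] [MeasurableSpace γ]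
  {W : Ω → β} {U : Ω → γ} {S : Ω → V} {f : β → V}

open Classical in
lemma measureReal_preimage_singleton_inter (hW : Measurable W) (hSW : ∀ ω, S ω = f (W ω))
    (hfib : ∀ w w', f w = f w' → ∀ t, MeasurableSet t →
      μ.real (W ⁻¹' {w} ∩ U ⁻¹' t) = μ.real (W ⁻¹' {w'} ∩ U ⁻¹' t))
    (w₀ : β) (s : Set β) {t : Set γ} (ht : MeasurableSet t) :
    μ.real (S ⁻¹' {f w₀} ∩ (W ⁻¹' s ∩ U ⁻¹' t))
      = #{w | w ∈ s ∧ f w = f w₀} * μ.real (W ⁻¹' {w₀} ∩ U ⁻¹' t) := by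
  have hset : S ⁻¹' {f w₀} ∩ (W ⁻¹' s ∩ U ⁻¹' t)
      = W ⁻¹' ↑({w | w ∈ s ∧ f w = f w₀} : Finset β) ∩ U ⁻¹' t := by
    ext ω
    simp only [Set.mem_inter_iff, Set.mem_preimage, Set.mem_singleton_iff, hSW, coe_filter,
      mem_univ, true_and, Set.mem_ofPred_eq]
    tauto
  rw [hset]
  calc μ.real (W ⁻¹' ↑({w | w ∈ s ∧ f w = f w₀} : Finset β) ∩ U ⁻¹' t)
      = ∑ w ∈ {w | w ∈ s ∧ f w = f w₀}, (μ.restrict (U ⁻¹' t)).real (W ⁻¹' {w}) := by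
        rw [sum_measureReal_preimage_singleton _ fun w _ => hW (measurableSet_singleton w),
          measureReal_restrict_apply (hW (Finset.measurableSet _))]
    _ = ∑ w ∈ {w | w ∈ s ∧ f w = f w₀}, μ.real (W ⁻¹' {w₀} ∩ U ⁻¹' t) :=
        sum_congr rfl fun w hw => by
          rw [measureReal_restrict_apply (hW (measurableSet_singleton w))]
          exact hfib _ _ (mem_filter.1 hw).2.2 t ht
    _ = _ := by rw [sum_const, nsmul_eq_mul]

variable [MeasurableSpace V] [MeasurableSingletonClass V] [Countable V]

lemma ae_measureReal_preimage_singleton_ne_zero (hS : Measurable S) :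
    ∀ᵐ ω ∂μ, μ.real (S ⁻¹' {S ω}) ≠ 0 := by
  have h : ∀ᵐ v ∂μ.map S, μ.map S {v} ≠ 0 := ae_iff_of_countable.2 fun _ h => h
  filter_upwards [ae_of_ae_map hS.aemeasurable h] with ω hω
  rw [Measure.map_apply hS (measurableSet_singleton _)] at hω
  exact (measureReal_ne_zero_iff (measure_ne_top _ _)).2 hω

lemma condExp_comap_ae_eq_measureReal_div [StandardBorelSpace Ω] [Nonempty Ω] (hS : Measurable S)
    {A : Set Ω} (hA : MeasurableSet A) :
    μ⟦A | MeasurableSpace.comap S inferInstance⟧ =ᵐ[μ]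
      fun ω => μ.real (S ⁻¹' {S ω} ∩ A) / μ.real (S ⁻¹' {S ω}) := by
  filter_upwards [(condDistrib_ae_eq_condExp hS measurable_id hA).symm,
    ae_measureReal_preimage_singleton_ne_zero hS] with ω hcond hatom
  rw [Set.preimage_id] at hcond
  rw [hcond, measureReal_def, condDistrib_apply_of_ne_zero measurable_id,
    Measure.map_apply hS (measurableSet_singleton _),
    Measure.map_apply (hS.prodMk measurable_id) ((measurableSet_singleton _).prod hA)]
  · rw [Set.mk_preimage_prod, Set.preimage_id, ENNReal.toReal_mul, ENNReal.toReal_inv,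
      div_eq_inv_mul, measureReal_def, measureReal_def]
  · rwa [Measure.map_apply hS (measurableSet_singleton _), ← measureReal_ne_zero_iff]

theorem condIndepFun_of_measureReal_fiber_eq [StandardBorelSpace Ω] [Nonempty Ω]
    (hW : Measurable W) (hU : Measurable U) (hS : Measurable S) (hSW : ∀ ω, S ω = f (W ω))
    (hfib : ∀ w w', f w = f w' → ∀ t, MeasurableSet t →
      μ.real (W ⁻¹' {w} ∩ U ⁻¹' t) = μ.real (W ⁻¹' {w'} ∩ U ⁻¹' t)) :
    CondIndepFun (MeasurableSpace.comap S inferInstance) hS.comap_le W U μ := by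
  rw [condIndepFun_iff_condExp_inter_preimage_eq_mul hW hU]
  intro s t hs ht
  filter_upwards [condExp_comap_ae_eq_measureReal_div hS ((hW hs).inter (hU ht)),
    condExp_comap_ae_eq_measureReal_div hS (hW hs), condExp_comap_ae_eq_measureReal_div hS (hU ht),
    ae_measureReal_preimage_singleton_ne_zero hS] with ω h₁ h₂ h₃ hatom
  rw [h₁, h₂, h₃]
  have hfiber := measureReal_preimage_singleton_inter hW hSW hfib (W ω)
  have e₁ := hfiber s ht
  have e₂ := hfiber s MeasurableSet.univ
  have e₃ := hfiber Set.univ ht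
  have e₄ := hfiber Set.univ MeasurableSet.univ
  simp only [Set.preimage_univ, Set.inter_univ, Set.univ_inter] at e₂ e₃ e₄
  rw [hSW ω] at hatom ⊢
  rw [e₄] at hatom
  rw [e₁, e₂, e₃, e₄]
  field_simp

end Sufficiency

theorem markov_logit_sufficiency_general
    {Ωs 𝓤 : Type*} [MeasurableSpace Ωs] [StandardBorelSpace Ωs] [Nonempty Ωs]
    [MeasurableSpace 𝓤]
    (μ : Measure Ωs) [IsProbabilityMeasure μ]
    (n : ℕ)
    (W : Ωs → Fin (n + 1) → Bool) (hW : Measurable W)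
    (U : Ωs → 𝓤) (hU : Measurable U)
    (a g : 𝓤 → ℝ)
    -- the conditional probability of the (arbitrary) initial condition given U
    (p1 : 𝓤 → ℝ)
    -- the Markov-logit factorization of the conditional pmf of W given U
    (hpmf : ∀ w : Fin (n + 1) → Bool,
      μ[(fun ω => if W ω = w then (1 : ℝ) else 0) |
          MeasurableSpace.comap U inferInstance]
        =ᵐ[μ] fun ω =>
          (if w 0 then p1 (U ω) else 1 - p1 (U ω)) *
          ∏ i : Fin n,
            (if w i.succ then
              Real.exp (a (U ω) + g (U ω) * (if w i.castSucc then 1 else 0)) /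
                (1 + Real.exp (a (U ω) + g (U ω) * (if w i.castSucc then 1 else 0)))
            else
              1 / (1 + Real.exp (a (U ω) + g (U ω) * (if w i.castSucc then 1 else 0)))))
    -- the sufficient statistic S
    (S : Ωs → ℕ × ℕ × Bool × Bool)
    (hSdef : ∀ ω, S ω =
      (∑ t : Fin (n + 1), (if t ≠ 0 ∧ t ≠ Fin.last n ∧ W ω t then 1 else 0),
       ∑ i : Fin n, (if W ω i.succ ∧ W ω i.castSucc then 1 else 0),
       W ω 0, W ω (Fin.last n)))
    (hS : Measurable S) :
    CondIndepFun (MeasurableSpace.comap S inferInstance) hS.comap_le W U μ := by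
  refine condIndepFun_of_measureReal_fiber_eq (f := markovStat) hW hU hS hSdef
    fun w w' hww t ht => measureReal_inter_eq_of_condExp_ae_eq hU.comap_le
      (hW (measurableSet_singleton w)) (hW (measurableSet_singleton w')) ⟨t, ht, rfl⟩ ?_
  have hind : ∀ v, (W ⁻¹' {v}).indicator (fun _ => (1 : ℝ)) = fun ω => if W ω = v then 1 else 0 :=
    fun v => by ext ω; by_cases h : W ω = v <;> simp [h]
  rw [hind, hind]
  filter_upwards [hpmf w, hpmf w'] with ω h h'
  rw [h, h']
  exact markovPathProb_eq_of_markovStat_eq (fun b => if b then p1 (U ω) else 1 - p1 (U ω))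
    (logitTransition (a (U ω)) (g (U ω))) hww

/-- **Markov logit model sufficiency.**
In the time-homogeneous first-order Markov logit model given `U` — where the
initial value `W_1` has an arbitrary conditional distribution given `U` and, for
`t ≥ 2`, `ℙ(W_t = 1 | U, W_1,…,W_{t−1}) = exp(α(U) + γ(U)·W_{t−1})/(1 + exp(α(U) + γ(U)·W_{t−1}))`
(equivalently, the conditional pmf of `W` given `U` factorizes as below) — the
statistic `S = (Σ_{t=2}^{T−1} W_t, Σ_{t=2}^T W_t·W_{t−1}, W_1, W_T)` is
sufficient: `W ⫫ U | S`. Here time is indexed by `Fin (n+1)` with `T = n+1 ≥ 3`. -/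
theorem markov_logit_sufficiency
    {Ωs 𝓤 : Type*} [MeasurableSpace Ωs] [StandardBorelSpace Ωs] [Nonempty Ωs]
    [MeasurableSpace 𝓤]
    (μ : Measure Ωs) [IsProbabilityMeasure μ]
    (n : ℕ) (hn : 2 ≤ n)  -- T = n + 1 ≥ 3 periods
    (W : Ωs → Fin (n + 1) → Bool) (hW : Measurable W)
    (U : Ωs → 𝓤) (hU : Measurable U)
    (a g : 𝓤 → ℝ)
    -- the conditional probability of the (arbitrary) initial condition given U
    (p1 : 𝓤 → ℝ)
    -- the Markov-logit factorization of the conditional pmf of W given U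
    (hpmf : ∀ w : Fin (n + 1) → Bool,
      μ[(fun ω => if W ω = w then (1 : ℝ) else 0) |
          MeasurableSpace.comap U inferInstance]
        =ᵐ[μ] fun ω =>
          (if w 0 then p1 (U ω) else 1 - p1 (U ω)) *
          ∏ i : Fin n,
            (if w i.succ then
              Real.exp (a (U ω) + g (U ω) * (if w i.castSucc then 1 else 0)) /
                (1 + Real.exp (a (U ω) + g (U ω) * (if w i.castSucc then 1 else 0)))
            else
              1 / (1 + Real.exp (a (U ω) + g (U ω) * (if w i.castSucc then 1 else 0)))))
    -- the sufficient statistic S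
    (S : Ωs → ℕ × ℕ × Bool × Bool)
    (hSdef : ∀ ω, S ω =
      (∑ t : Fin (n + 1), (if t ≠ 0 ∧ t ≠ Fin.last n ∧ W ω t then 1 else 0),
       ∑ i : Fin n, (if W ω i.succ ∧ W ω i.castSucc then 1 else 0),
       W ω 0, W ω (Fin.last n)))
    (hS : Measurable S) :
    CondIndepFun (MeasurableSpace.comap S inferInstance) hS.comap_le W U μ :=
  markov_logit_sufficiency_general μ n W hW U hU a g p1 hpmf S hSdef hS
end

section
/- The set 𝕎_outc is non-empty if and only if the support matrix 𝐖 contains, up to permutation of the two selected rows and the two selected columns, at least one of the following 2×2 submatrices: W₁ = [[0,1],[0,0]], W₂ = [[1,1],[0,1]], W₃ = [[0,1],[1,0]]. That is, 𝕎_outc ≠ ∅ iff there exist row indices k₁ ≠ k₂ and time indices t₁ ≠ t₂ such that the 2×2 submatrix (𝐖_{k_a t_b})_{a,b∈{1,2}} equals one of W₁, W₂, W₃ after possibly permuting its rows and columns. -/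
/-!
If `w` has zero row sums and zero `π`-weighted column sums, then `∑ π_k w_kt W_kt` vanishes
whenever `W_kt = a_k + b_t`, so `𝕎_outc ≠ ∅` forces some 2×2 minor of `W` to be non-additive:
`W_{k₁t₁} - W_{k₁t₂} ≠ W_{k₂t₁} - W_{k₂t₂}`. Conversely, such a minor yields the rank-one element
`(e_{k₁}/π_{k₁} - e_{k₂}/π_{k₂}) ⊗ c (e_{t₁} - e_{t₂})` of `𝕎_outc` for a suitable `c`; the sign
constraints hold because for a `0/1` matrix the two row differences `W_{kt₁} - W_{kt₂}` of a
non-additive minor never share a strict sign. Finally, up to swapping rows and columns, the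
non-additive `0/1` matrices of size 2×2 are exactly `W₁`, `W₂`, `W₃`.
-/

/-- `𝕎_outc` over arbitrary finite index types, with normalising constant `T`. -/
def outcomeWeights {ι κ : Type*} [Fintype ι] [Fintype κ] (T : ℝ) (π : ι → ℝ) (W : ι → κ → ℝ) :
    Set (ι → κ → ℝ) :=
  {w | (1 / T) * ∑ k, ∑ t, π k * w k t * W k t = 1 ∧
    (∀ k, 0 ≤ (1 / T) * ∑ t, w k t * W k t) ∧
    (∀ k, ∑ t, w k t = 0) ∧
    (∀ t, ∑ k, π k * w k t = 0)}

/-- The 2×2 matrix `[[a, b], [c, d]]` is one of the paper's `W₁`, `W₂`, `W₃`. -/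
def IsOutcPattern (a b c d : ℝ) : Prop :=
  (a = 0 ∧ b = 1 ∧ c = 0 ∧ d = 0) ∨
  (a = 1 ∧ b = 1 ∧ c = 0 ∧ d = 1) ∨
  (a = 0 ∧ b = 1 ∧ c = 1 ∧ d = 0)

section ZeroOne

variable {a b c d : ℝ}

lemma IsOutcPattern.sub_ne (h : IsOutcPattern a b c d) : a - b ≠ c - d := by
  rcases h with ⟨rfl, rfl, rfl, rfl⟩ | ⟨rfl, rfl, rfl, rfl⟩ | ⟨rfl, rfl, rfl, rfl⟩ <;> norm_num

lemma isOutcPattern_of_sub_ne (ha : a = 0 ∨ a = 1) (hb : b = 0 ∨ b = 1) (hc : c = 0 ∨ c = 1)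
    (hd : d = 0 ∨ d = 1) (h : a - b ≠ c - d) :
    IsOutcPattern a b c d ∨ IsOutcPattern b a d c ∨ IsOutcPattern c d a b ∨
      IsOutcPattern d c b a := by
  rcases ha with rfl | rfl <;> rcases hb with rfl | rfl <;> rcases hc with rfl | rfl <;>
    rcases hd with rfl | rfl <;> revert h <;> norm_num [IsOutcPattern]

lemma sub_mul_sub_nonpos_of_sub_ne (ha : a = 0 ∨ a = 1) (hb : b = 0 ∨ b = 1)
    (hc : c = 0 ∨ c = 1) (hd : d = 0 ∨ d = 1) (h : a - b ≠ c - d) : (a - b) * (c - d) ≤ 0 := by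
  rcases ha with rfl | rfl <;> rcases hb with rfl | rfl <;> rcases hc with rfl | rfl <;>
    rcases hd with rfl | rfl <;> revert h <;> norm_num

end ZeroOne

section Pattern

variable {ι κ : Type*}

lemma exists_eq_add_of_sub_eq {W : ι → κ → ℝ}
    (hW : ∀ k₁ k₂ t₁ t₂, W k₁ t₁ - W k₁ t₂ = W k₂ t₁ - W k₂ t₂) :
    ∃ (a : ι → ℝ) (b : κ → ℝ), ∀ k t, W k t = a k + b t := by
  by_cases h : Nonempty (ι × κ)
  · obtain ⟨k₀, t₀⟩ := h
    exact ⟨fun k => W k t₀ - W k₀ t₀, fun t => W k₀ t, fun k t => by linarith [hW k k₀ t t₀]⟩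
  · exact ⟨0, 0, fun k t => (h ⟨(k, t)⟩).elim⟩

lemma exists_isOutcPattern_iff {W : ι → κ → ℝ} (hW : ∀ k t, W k t = 0 ∨ W k t = 1) :
    (∃ k₁ k₂ t₁ t₂, k₁ ≠ k₂ ∧ t₁ ≠ t₂ ∧
        IsOutcPattern (W k₁ t₁) (W k₁ t₂) (W k₂ t₁) (W k₂ t₂)) ↔
      ∃ k₁ k₂ t₁ t₂, W k₁ t₁ - W k₁ t₂ ≠ W k₂ t₁ - W k₂ t₂ := by
  constructor
  · rintro ⟨k₁, k₂, t₁, t₂, -, -, h⟩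
    exact ⟨k₁, k₂, t₁, t₂, h.sub_ne⟩
  · rintro ⟨k₁, k₂, t₁, t₂, h⟩
    have hk : k₁ ≠ k₂ := by rintro rfl; exact h rfl
    have ht : t₁ ≠ t₂ := by rintro rfl; simp at h
    rcases isOutcPattern_of_sub_ne (hW ..) (hW ..) (hW ..) (hW ..) h with h | h | h | h
    · exact ⟨k₁, k₂, t₁, t₂, hk, ht, h⟩
    · exact ⟨k₁, k₂, t₂, t₁, hk, ht.symm, h⟩
    · exact ⟨k₂, k₁, t₁, t₂, hk.symm, ht, h⟩
    · exact ⟨k₂, k₁, t₂, t₁, hk.symm, ht.symm, h⟩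

end Pattern

section Matrix

variable {ι κ : Type*} [Fintype ι] [Fintype κ]

lemma sum_sum_mul_eq_zero_of_eq_add {π : ι → ℝ} {w W : ι → κ → ℝ} {a : ι → ℝ} {b : κ → ℝ}
    (hrow : ∀ k, ∑ t, w k t = 0) (hcol : ∀ t, ∑ k, π k * w k t = 0)
    (hW : ∀ k t, W k t = a k + b t) :
    ∑ k, ∑ t, π k * w k t * W k t = 0 :=
  calc ∑ k, ∑ t, π k * w k t * W k t
      = ∑ k, π k * a k * ∑ t, w k t + ∑ t, b t * ∑ k, π k * w k t := by
        simp only [hW, mul_add, Finset.sum_add_distrib, Finset.mul_sum]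
        rw [Finset.sum_comm (f := fun k t => π k * w k t * b t)]
        congr 1 <;> refine Finset.sum_congr rfl fun _ _ => Finset.sum_congr rfl fun _ _ => ?_ <;> ring
    _ = 0 := by simp [hrow, hcol]

lemma outcomeWeights_eq_empty_of_eq_add {T : ℝ} {π : ι → ℝ} {W : ι → κ → ℝ}
    {a : ι → ℝ} {b : κ → ℝ} (hW : ∀ k t, W k t = a k + b t) :
    outcomeWeights T π W = ∅ := by
  refine Set.eq_empty_of_forall_notMem ?_
  rintro w ⟨hobj, -, hrow, hcol⟩
  rw [sum_sum_mul_eq_zero_of_eq_add hrow hcol hW] at hobj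
  simp at hobj

lemma outcomeWeights_nonempty_of_sub_mul_sub_nonpos {T : ℝ} (hT : T ≠ 0) {π : ι → ℝ}
    {W : ι → κ → ℝ} {k₁ k₂ : ι} {t₁ t₂ : κ} (hπ₁ : 0 < π k₁) (hπ₂ : 0 < π k₂)
    (hne : W k₁ t₁ - W k₁ t₂ ≠ W k₂ t₁ - W k₂ t₂)
    (hsign : (W k₁ t₁ - W k₁ t₂) * (W k₂ t₁ - W k₂ t₂) ≤ 0) :
    (outcomeWeights T π W).Nonempty := by
  classical
  have hk : k₁ ≠ k₂ := by rintro rfl; exact hne rfl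
  set d : ι → ℝ := fun k => W k t₁ - W k t₂
  set δ := d k₁ - d k₂
  have hδ : δ ≠ 0 := sub_ne_zero.2 hne
  set ρ : ι → ℝ := Pi.single k₁ (π k₁)⁻¹ - Pi.single k₂ (π k₂)⁻¹
  set u : κ → ℝ := Pi.single t₁ (T / δ) - Pi.single t₂ (T / δ)
  have hu : ∀ k, ∑ t, u t * W k t = T / δ * d k := by
    intro k; simp [u, d, sub_mul, Finset.sum_sub_distrib, Pi.single_apply, mul_sub]
  have hρ : ∀ x : ι → ℝ, ∑ k, π k * (ρ k * x k) = x k₁ - x k₂ := by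
    intro x; simp [ρ, mul_sub, sub_mul, Finset.sum_sub_distrib, Pi.single_apply, hπ₁.ne', hπ₂.ne']
  refine ⟨fun k t => ρ k * u t, ?_, fun k => ?_, fun k => ?_, fun t => ?_⟩
  · simp only [mul_assoc, ← Finset.mul_sum, hu, hρ]
    field_simp
    rfl
  · simp only [mul_assoc, ← Finset.mul_sum, hu]
    rw [show 1 / T * (ρ k * (T / δ * d k)) = ρ k * d k * δ / δ ^ 2 by field_simp]
    refine div_nonneg ?_ (sq_nonneg δ)
    have hd : d k₁ * d k₂ ≤ 0 := hsign
    by_cases h₁ : k = k₁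
    · have : 0 ≤ d k₁ * δ := by
        show 0 ≤ d k₁ * (d k₁ - d k₂); nlinarith [sq_nonneg (d k₁)]
      simpa [ρ, h₁, hk, mul_assoc] using mul_nonneg (inv_nonneg.2 hπ₁.le) this
    by_cases h₂ : k = k₂
    · have : 0 ≤ -(d k₂ * δ) := by
        show 0 ≤ -(d k₂ * (d k₁ - d k₂)); nlinarith [sq_nonneg (d k₂)]
      simpa [ρ, h₂, hk.symm, mul_assoc] using mul_nonneg (inv_nonneg.2 hπ₂.le) this
    simp [ρ, h₁, h₂]
  · simp [u, ← Finset.mul_sum]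
  · simpa using hρ (fun _ => u t)

end Matrix

theorem Woutc_nonempty_iff_general
    (T K : ℕ)
    (Wmat : Fin K → Fin T → ℝ)
    (hW01 : ∀ k t, Wmat k t = 0 ∨ Wmat k t = 1)
    (π : Fin K → ℝ) (hπpos : ∀ k, 0 < π k) :
    {w : Fin K → Fin T → ℝ |
        (1 / (T : ℝ)) * ∑ k, ∑ t, π k * w k t * Wmat k t = 1 ∧
        (∀ k, 0 ≤ (1 / (T : ℝ)) * ∑ t, w k t * Wmat k t) ∧
        (∀ k, ∑ t, w k t = 0) ∧
        (∀ t, ∑ k, π k * w k t = 0)}.Nonempty ↔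
      ∃ (k₁ k₂ : Fin K) (t₁ t₂ : Fin T), k₁ ≠ k₂ ∧ t₁ ≠ t₂ ∧
        ((Wmat k₁ t₁ = 0 ∧ Wmat k₁ t₂ = 1 ∧ Wmat k₂ t₁ = 0 ∧ Wmat k₂ t₂ = 0) ∨
         (Wmat k₁ t₁ = 1 ∧ Wmat k₁ t₂ = 1 ∧ Wmat k₂ t₁ = 0 ∧ Wmat k₂ t₂ = 1) ∨
         (Wmat k₁ t₁ = 0 ∧ Wmat k₁ t₂ = 1 ∧ Wmat k₂ t₁ = 1 ∧ Wmat k₂ t₂ = 0)) := by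
  change (outcomeWeights (T : ℝ) π Wmat).Nonempty ↔ ∃ k₁ k₂ t₁ t₂, k₁ ≠ k₂ ∧ t₁ ≠ t₂ ∧
    IsOutcPattern (Wmat k₁ t₁) (Wmat k₁ t₂) (Wmat k₂ t₁) (Wmat k₂ t₂)
  rw [exists_isOutcPattern_iff hW01]
  constructor
  · intro hne
    by_contra! hadd
    obtain ⟨a, b, hab⟩ := exists_eq_add_of_sub_eq hadd
    rw [outcomeWeights_eq_empty_of_eq_add hab] at hne
    exact Set.not_nonempty_empty hne
  · rintro ⟨k₁, k₂, t₁, t₂, h⟩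
    have hT : (T : ℝ) ≠ 0 := Nat.cast_ne_zero.2 (Fin.pos t₁).ne'
    exact outcomeWeights_nonempty_of_sub_mul_sub_nonpos hT (hπpos k₁) (hπpos k₂) h
      (sub_mul_sub_nonpos_of_sub_ne (hW01 ..) (hW01 ..) (hW01 ..) (hW01 ..) h)

/-- **Non-emptiness of 𝕎_outc.**
The set `𝕎_outc` of outcome-model weights is non-empty if and only if the
support matrix `𝐖` contains, up to permutations of the two selected rows and
the two selected columns, one of the 2×2 submatrices
`[[0,1],[0,0]]`, `[[1,1],[0,1]]`, `[[0,1],[1,0]]`.  (Permutations of the rows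
and columns of the 2×2 submatrix are captured by the ordered choices of the
indices `k₁ ≠ k₂` and `t₁ ≠ t₂`.) -/
theorem Woutc_nonempty_iff
    (T K : ℕ) (hT : 0 < T) (hK : 0 < K)
    (Wmat : Fin K → Fin T → ℝ)
    (hW01 : ∀ k t, Wmat k t = 0 ∨ Wmat k t = 1)
    (hWdistinct : Function.Injective Wmat)
    (π : Fin K → ℝ) (hπpos : ∀ k, 0 < π k) (hπsum : ∑ k, π k = 1) :
    {w : Fin K → Fin T → ℝ |
        (1 / (T : ℝ)) * ∑ k, ∑ t, π k * w k t * Wmat k t = 1 ∧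
        (∀ k, 0 ≤ (1 / (T : ℝ)) * ∑ t, w k t * Wmat k t) ∧
        (∀ k, ∑ t, w k t = 0) ∧
        (∀ t, ∑ k, π k * w k t = 0)}.Nonempty ↔
      ∃ (k₁ k₂ : Fin K) (t₁ t₂ : Fin T), k₁ ≠ k₂ ∧ t₁ ≠ t₂ ∧
        ((Wmat k₁ t₁ = 0 ∧ Wmat k₁ t₂ = 1 ∧ Wmat k₂ t₁ = 0 ∧ Wmat k₂ t₂ = 0) ∨
         (Wmat k₁ t₁ = 1 ∧ Wmat k₁ t₂ = 1 ∧ Wmat k₂ t₁ = 0 ∧ Wmat k₂ t₂ = 1) ∨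
         (Wmat k₁ t₁ = 0 ∧ Wmat k₁ t₂ = 1 ∧ Wmat k₂ t₁ = 1 ∧ Wmat k₂ t₂ = 0)) :=
  Woutc_nonempty_iff_general T K Wmat hW01 π hπpos
end

section
/- The set 𝕎_dr is non-empty if and only if there exists a value σ of the sufficient statistic such that the submatrix 𝐖^σ of rows k with s(k) = σ contains, up to permutation of the two selected rows and the two selected columns, at least one of the 2×2 submatrices [[0,1],[1,0]] or [[0,1],[0,0]]. -/
/-!
Call `(a, b, t₁, t₂)` a switch if `W a t₁ = 0`, `W a t₂ = 1`, `W b t₂ = 0` and `s a = s b`; for a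
0/1 matrix the two 2×2 patterns of the statement say exactly this, whatever `W b t₁` is.

Given a switch, the rank-one weight `(e_a / π_a - e_b / π_b) ⊗ (e_{t₂} - e_{t₁})` has zero row
sums and zero class sums, satisfies the sign constraints, and has treated mass `1 + W b t₁ > 0`,
so it rescales into `𝕎_dr`. Conversely, on a row without a zero the sign constraint makes `ω`
nonnegative, so its zero row sum forces it to vanish. If no class had two distinct rows with a
zero, the class constraint would then kill the remaining row of each class, and `ω = 0` violates
the normalization; two distinct 0/1 rows with a zero differ in some column, which gives a switch.
-/

open Finset

theorem nonneg_of_eq_zero_or_eq_one {x : ℝ} (h : x = 0 ∨ x = 1) : 0 ≤ x :=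
  h.elim (·.ge) (· ▸ zero_le_one)

theorem switch_iff_submatrix {ι τ : Type*} {W : ι → τ → ℝ} {k₁ k₂ : ι} {t₁ t₂ : τ}
    (h : W k₂ t₁ = 0 ∨ W k₂ t₁ = 1) :
    (k₁ ≠ k₂ ∧ t₁ ≠ t₂ ∧
      ((W k₁ t₁ = 0 ∧ W k₁ t₂ = 1 ∧ W k₂ t₁ = 1 ∧ W k₂ t₂ = 0) ∨
       (W k₁ t₁ = 0 ∧ W k₁ t₂ = 1 ∧ W k₂ t₁ = 0 ∧ W k₂ t₂ = 0))) ↔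
      W k₁ t₁ = 0 ∧ W k₁ t₂ = 1 ∧ W k₂ t₂ = 0 := by
  constructor
  · rintro ⟨-, -, ⟨h₁₁, h₁₂, -, h₂₂⟩ | ⟨h₁₁, h₁₂, -, h₂₂⟩⟩ <;> exact ⟨h₁₁, h₁₂, h₂₂⟩
  · rintro ⟨h₁₁, h₁₂, h₂₂⟩
    refine ⟨?_, ?_, h.symm.imp (⟨h₁₁, h₁₂, ·, h₂₂⟩) (⟨h₁₁, h₁₂, ·, h₂₂⟩)⟩
    · rintro rfl; simp [h₂₂] at h₁₂
    · rintro rfl; simp [h₁₁] at h₁₂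

section

variable {ι τ 𝕊 : Type*} [Fintype ι] [Fintype τ] [DecidableEq 𝕊]

/-- The homogeneous constraints of `𝕎_dr`; `𝕎_dr` is its slice `(1/T) ∑ π w W = 1`. -/
def drCone (π : ι → ℝ) (W : ι → τ → ℝ) (s : ι → 𝕊) : Set (ι → τ → ℝ) :=
  {w | (∀ k, ∑ t, w k t = 0) ∧
    (∀ (σ : 𝕊) (t : τ), ∑ k ∈ univ.filter (fun k => s k = σ), π k * w k t = 0) ∧
    (∀ k t, 0 ≤ w k t * W k t)}

variable {π : ι → ℝ} {W : ι → τ → ℝ} {s : ι → 𝕊} {w : ι → τ → ℝ}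

theorem smul_mem_drCone {c : ℝ} (hc : 0 ≤ c) (hw : w ∈ drCone π W s) :
    c • w ∈ drCone π W s := by
  obtain ⟨hrow, hclass, hsign⟩ := hw
  refine ⟨fun k => ?_, fun σ t => ?_, fun k t => ?_⟩
  · simp [← mul_sum, hrow k]
  · simp [mul_left_comm (π _) c, ← mul_sum, hclass σ t]
  · simpa [mul_assoc] using mul_nonneg hc (hsign k t)

theorem rankOne_mem_drCone {u : ι → ℝ} {v : τ → ℝ} (hv : ∑ t, v t = 0)
    (hu : ∀ σ, ∑ k ∈ univ.filter (fun k => s k = σ), π k * u k = 0)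
    (hsign : ∀ k t, 0 ≤ u k * v t * W k t) :
    (fun k t => u k * v t) ∈ drCone π W s := by
  refine ⟨fun k => ?_, fun σ t => ?_, hsign⟩
  · simp [← mul_sum, hv]
  · simp [← mul_assoc, ← sum_mul, hu σ]

theorem sum_smul_weight (c : ℝ) (w : ι → τ → ℝ) :
    ∑ k, ∑ t, π k * (c • w) k t * W k t = c * ∑ k, ∑ t, π k * w k t * W k t := by
  simp only [mul_sum, Pi.smul_apply, smul_eq_mul]
  exact sum_congr rfl fun k _ => sum_congr rfl fun t _ => by ring

theorem drCone_row_eq_zero (hw : w ∈ drCone π W s) {k : ι} (hk : ∀ t, 0 < W k t) (t : τ) :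
    w k t = 0 := by
  have hnonneg : ∀ t ∈ univ, 0 ≤ w k t := fun t _ =>
    nonneg_of_mul_nonneg_left (hw.2.2 k t) (hk t)
  exact (sum_eq_zero_iff_of_nonneg hnonneg).mp (hw.1 k) t (mem_univ t)

theorem exists_rows_with_zero_of_mem_drCone (hπ : ∀ k, 0 < π k) (hW : ∀ k t, 0 ≤ W k t)
    (hw : w ∈ drCone π W s) (hw0 : w ≠ 0) :
    ∃ k₁ k₂, s k₁ = s k₂ ∧ k₁ ≠ k₂ ∧ (∃ t, W k₁ t = 0) ∧ ∃ t, W k₂ t = 0 := by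
  by_contra! hsub
  have hpos : ∀ k, (∀ t, W k t ≠ 0) → ∀ t, 0 < W k t := fun k hk t =>
    (hW k t).lt_of_ne' (hk t)
  refine hw0 (funext fun k => funext fun t => ?_)
  by_cases hk : ∃ t, W k t = 0
  · have hothers : ∀ b ∈ univ.filter (fun b => s b = s k), b ≠ k → π b * w b t = 0 := by
      intro b hb hbk
      have hb0 := hsub k b (mem_filter.mp hb).2.symm (Ne.symm hbk) hk
      rw [drCone_row_eq_zero hw (hpos b hb0) t, mul_zero]
    have hclass := hw.2.1 (s k) t
    rw [sum_eq_single_of_mem k (by simp) hothers] at hclass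
    exact (mul_eq_zero.mp hclass).resolve_left (hπ k).ne'
  · push Not at hk
    exact drCone_row_eq_zero hw (hpos k hk) t

theorem exists_switch_of_mem_drCone (hπ : ∀ k, 0 < π k)
    (hW01 : ∀ k t, W k t = 0 ∨ W k t = 1) (hinj : Function.Injective W)
    (hw : w ∈ drCone π W s) (hw0 : w ≠ 0) :
    ∃ a b t₁ t₂, s a = s b ∧ W a t₁ = 0 ∧ W a t₂ = 1 ∧ W b t₂ = 0 := by
  obtain ⟨k₁, k₂, hs, hne, ⟨u₁, hu₁⟩, ⟨u₂, hu₂⟩⟩ := exists_rows_with_zero_of_mem_drCone hπ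
    (fun k t => nonneg_of_eq_zero_or_eq_one (hW01 k t)) hw hw0
  obtain ⟨t, ht⟩ := Function.ne_iff.mp (hinj.ne hne)
  rcases hW01 k₁ t with h₁ | h₁ <;> rcases hW01 k₂ t with h₂ | h₂
  · exact absurd (h₁.trans h₂.symm) ht
  · exact ⟨k₂, k₁, u₂, t, hs.symm, hu₂, h₂, h₁⟩
  · exact ⟨k₁, k₂, u₁, t, hs, hu₁, h₁, h₂⟩
  · exact absurd (h₁.trans h₂.symm) ht

theorem exists_mem_drCone_sum_pos [DecidableEq ι] [DecidableEq τ] (hπ : ∀ k, 0 < π k)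
    (hW : ∀ k t, 0 ≤ W k t) {k₁ k₂ : ι} {t₁ t₂ : τ} (hs : s k₁ = s k₂)
    (h₁₁ : W k₁ t₁ = 0) (h₁₂ : W k₁ t₂ = 1) (h₂₂ : W k₂ t₂ = 0) :
    ∃ w ∈ drCone π W s, 0 < ∑ k, ∑ t, π k * w k t * W k t := by
  have ht : t₁ ≠ t₂ := by rintro rfl; simp [h₁₁] at h₁₂
  have hk : k₁ ≠ k₂ := by rintro rfl; simp [h₂₂] at h₁₂
  set e : ι → ℝ := Pi.single k₁ 1 - Pi.single k₂ 1 with he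
  set u : ι → ℝ := fun k => e k / π k with hu
  set v : τ → ℝ := Pi.single t₂ 1 - Pi.single t₁ 1 with hv
  have hπu : ∀ k, π k * u k = e k := fun k => mul_div_cancel₀ _ (hπ k).ne'
  refine ⟨fun k t => u k * v t, rankOne_mem_drCone ?_ (fun σ => ?_) (fun k t => ?_), ?_⟩
  · simp [hv]
  · simp [hπu, he, sum_sub_distrib, hs]
  · simp only [hu, he, hv, Pi.sub_apply, Pi.single_apply]
    split_ifs <;> simp_all [neg_div, (hπ _).le]
  · have hsum : ∑ k, ∑ t, π k * (u k * v t) * W k t = 1 + W k₂ t₁ := by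
      simp only [mul_assoc, ← mul_sum, ← mul_assoc (π _), hπu]
      simp [he, hv, sub_mul, mul_sub, sum_sub_distrib, Pi.single_apply, h₁₁, h₁₂, h₂₂]
    linarith [hW k₂ t₁]

end

theorem Wdr_nonempty_iff_general
    {𝕊 : Type*} [DecidableEq 𝕊]
    (T K : ℕ)
    (Wmat : Fin K → Fin T → ℝ)
    (hW01 : ∀ k t, Wmat k t = 0 ∨ Wmat k t = 1)
    (hWdistinct : Function.Injective Wmat)
    (π : Fin K → ℝ) (hπpos : ∀ k, 0 < π k)
    (s : Fin K → 𝕊) :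
    {w : Fin K → Fin T → ℝ |
        (1 / (T : ℝ)) * ∑ k, ∑ t, π k * w k t * Wmat k t = 1 ∧
        (∀ k, ∑ t, w k t = 0) ∧
        (∀ (σ : 𝕊) (t : Fin T),
          ∑ k ∈ Finset.univ.filter (fun k => s k = σ), π k * w k t = 0) ∧
        (∀ k t, 0 ≤ w k t * Wmat k t)}.Nonempty ↔
      ∃ (σ : 𝕊) (k₁ k₂ : Fin K) (t₁ t₂ : Fin T),
        s k₁ = σ ∧ s k₂ = σ ∧ k₁ ≠ k₂ ∧ t₁ ≠ t₂ ∧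
        ((Wmat k₁ t₁ = 0 ∧ Wmat k₁ t₂ = 1 ∧ Wmat k₂ t₁ = 1 ∧ Wmat k₂ t₂ = 0) ∨
         (Wmat k₁ t₁ = 0 ∧ Wmat k₁ t₂ = 1 ∧ Wmat k₂ t₁ = 0 ∧ Wmat k₂ t₂ = 0)) := by
  simp only [switch_iff_submatrix (hW01 _ _)]
  constructor
  · rintro ⟨w, hnorm, hw⟩
    have hw0 : w ≠ 0 := by rintro rfl; simp at hnorm
    obtain ⟨a, b, t₁, t₂, hs, hswitch⟩ :=
      exists_switch_of_mem_drCone hπpos hW01 hWdistinct hw hw0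
    exact ⟨s a, a, b, t₁, t₂, rfl, hs.symm, hswitch⟩
  · rintro ⟨σ, k₁, k₂, t₁, t₂, rfl, hs, h₁₁, h₁₂, h₂₂⟩
    obtain ⟨w, hw, hpos⟩ := exists_mem_drCone_sum_pos hπpos
      (fun k t => nonneg_of_eq_zero_or_eq_one (hW01 k t)) hs.symm h₁₁ h₁₂ h₂₂
    have hT : (T : ℝ) ≠ 0 := by have := t₁.pos; positivity
    refine ⟨(T / ∑ k, ∑ t, π k * w k t * Wmat k t) • w, ?_, smul_mem_drCone (by positivity) hw⟩
    rw [sum_smul_weight]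
    field_simp

/-- **Non-emptiness of 𝕎_dr.**
The set `𝕎_dr` of doubly robust weights is non-empty if and only if there is a
value `σ` of the sufficient statistic such that the submatrix `𝐖^σ` of rows `k`
with `s(k) = σ` contains, up to permutations of the two selected rows and the
two selected columns, one of the 2×2 submatrices `[[0,1],[1,0]]` or
`[[0,1],[0,0]]`.  (Permutations are captured by the ordered choices of the
indices `k₁ ≠ k₂` and `t₁ ≠ t₂`.) -/
theorem Wdr_nonempty_iff
    {𝕊 : Type*} [Fintype 𝕊] [DecidableEq 𝕊]
    (T K : ℕ) (hT : 0 < T) (hK : 0 < K)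
    (Wmat : Fin K → Fin T → ℝ)
    (hW01 : ∀ k t, Wmat k t = 0 ∨ Wmat k t = 1)
    (hWdistinct : Function.Injective Wmat)
    (π : Fin K → ℝ) (hπpos : ∀ k, 0 < π k) (hπsum : ∑ k, π k = 1)
    (s : Fin K → 𝕊) :
    {w : Fin K → Fin T → ℝ |
        (1 / (T : ℝ)) * ∑ k, ∑ t, π k * w k t * Wmat k t = 1 ∧
        (∀ k, ∑ t, w k t = 0) ∧
        (∀ (σ : 𝕊) (t : Fin T),
          ∑ k ∈ Finset.univ.filter (fun k => s k = σ), π k * w k t = 0) ∧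
        (∀ k t, 0 ≤ w k t * Wmat k t)}.Nonempty ↔
      ∃ (σ : 𝕊) (k₁ k₂ : Fin K) (t₁ t₂ : Fin T),
        s k₁ = σ ∧ s k₂ = σ ∧ k₁ ≠ k₂ ∧ t₁ ≠ t₂ ∧
        ((Wmat k₁ t₁ = 0 ∧ Wmat k₁ t₂ = 1 ∧ Wmat k₂ t₁ = 1 ∧ Wmat k₂ t₂ = 0) ∨
         (Wmat k₁ t₁ = 0 ∧ Wmat k₁ t₂ = 1 ∧ Wmat k₂ t₁ = 0 ∧ Wmat k₂ t₂ = 0)) :=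
  Wdr_nonempty_iff_general T K Wmat hW01 hWdistinct π hπpos s
end

section
/- Suppose the assignments {W_it} are such that there exist no (α, β, γ) ∈ ℝ^N × ℝ^T × ℝ^p with α_i + β_t + ψ_itᵀγ ≥ 0 for all (i,t) and W_it = 1{α_i + β_t + ψ_itᵀγ > 0} for all (i,t). Then the feasible set of the primal weighting problem is non-empty, closed and convex, and the problem of minimizing (1/(NT)²)·Σ_{i,t} ω_it² over this feasible set has a unique solution. -/
/-!
Nonemptiness is a Farkas alternative. The weights `ω_it` are sign-constrained where `W_it = 1`
and free where `W_it = 0`; if no such `ω` met the linear constraints, a certificate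
`(λ, α, β, γ)` would have `λ < 0`, `α_i + β_t + ψ_itᵀγ = 0` where `W_it = 0` and
`α_i + β_t + ψ_itᵀγ ≥ -λ > 0` where `W_it = 1`: exactly the excluded `(α, β, γ)`.
The constraints are linear (in)equalities, so the feasible set is closed and convex, and the
objective is continuous, coercive and strictly convex, hence has exactly one minimiser on it.
-/

open Finset

theorem sum_insert_update_smul {R κ M : Type*} [Semiring R] [AddCommMonoid M] [Module R M]
    [DecidableEq κ] {k₀ : κ} {s : Finset κ} (hk₀ : k₀ ∉ s) (l : κ → R) (μ : R) (a : κ → M) :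
    ∑ k ∈ insert k₀ s, Function.update l k₀ μ k • a k = μ • a k₀ + ∑ k ∈ s, l k • a k := by
  rw [sum_insert hk₀, Function.update_self]
  congr 1
  exact sum_congr rfl fun k hk => by rw [Function.update_of_ne (ne_of_mem_of_not_mem hk hk₀)]

section Farkas

variable {𝕜 ι κ : Type*} [Field 𝕜] [LinearOrder 𝕜] [IsStrictOrderedRing 𝕜] [Fintype ι]

theorem sub_smul_dotProduct_eq_dotProduct_sub_smul (v a y z : ι → 𝕜) (c : 𝕜) :
    (v - (v ⬝ᵥ y / c) • a) ⬝ᵥ z = v ⬝ᵥ (z - (a ⬝ᵥ z / c) • y) := by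
  simp only [sub_dotProduct, dotProduct_sub, smul_dotProduct, dotProduct_smul, smul_eq_mul]
  ring

theorem farkas (a : κ → ι → 𝕜) (b : ι → 𝕜) (s : Finset κ) :
    (∃ l : κ → 𝕜, (∀ k, 0 ≤ l k) ∧ ∑ k ∈ s, l k • a k = b) ∨
      ∃ y, (∀ k ∈ s, 0 ≤ a k ⬝ᵥ y) ∧ b ⬝ᵥ y < 0 := by
  classical
  induction s using Finset.induction_on generalizing a b with
  | empty =>
    by_cases hb : b = 0
    · exact .inl ⟨0, fun _ => le_rfl, by simp [hb]⟩
    · have hbb : 0 < b ⬝ᵥ b := (sum_nonneg fun i _ => mul_self_nonneg (b i)).lt_of_ne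
        (Ne.symm (dotProduct_self_eq_zero.not.mpr hb))
      exact .inr ⟨-b, by simp, by simpa using hbb⟩
  | insert k₀ s hk₀ ih =>
    rcases ih a b with ⟨l, hl, hlb⟩ | ⟨y, hy, hby⟩
    · refine .inl ⟨Function.update l k₀ 0, fun k => ?_,
        by rw [sum_insert_update_smul hk₀, hlb, zero_smul, zero_add]⟩
      rcases eq_or_ne k k₀ with rfl | hk <;> simp [*]
    by_cases hk₀y : 0 ≤ a k₀ ⬝ᵥ y
    · exact .inr ⟨y, forall_mem_insert _ _ _ |>.mpr ⟨hk₀y, hy⟩, hby⟩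
    rw [not_le] at hk₀y
    set c := a k₀ ⬝ᵥ y
    -- `P` projects along `a k₀` onto the hyperplane `y⊥`, where the induction hypothesis is applied
    let P : (ι → 𝕜) → ι → 𝕜 := fun v => v - (v ⬝ᵥ y / c) • a k₀
    rcases ih (fun k => P (a k)) (P b) with ⟨l, hl, hlb⟩ | ⟨z, hz, hbz⟩
    · set v := ∑ k ∈ s, l k • a k
      have hvy : 0 ≤ v ⬝ᵥ y := by
        rw [sum_dotProduct]
        exact sum_nonneg fun k hk => by rw [smul_dotProduct]; exact smul_nonneg (hl k) (hy k hk)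
      have hPv : ∑ k ∈ s, l k • P (a k) = P v := by
        simp only [P, v, smul_sub, sum_sub_distrib, smul_smul, ← sum_smul, sum_dotProduct,
          smul_dotProduct, smul_eq_mul, sum_div, mul_div_assoc]
      set μ := (b ⬝ᵥ y - v ⬝ᵥ y) / c
      have hμ : 0 ≤ μ := div_nonneg_of_nonpos (by linarith) hk₀y.le
      refine .inl ⟨Function.update l k₀ μ, fun k => ?_, ?_⟩
      · rcases eq_or_ne k k₀ with rfl | hk <;> simp [*]
      · rw [sum_insert_update_smul hk₀]
        rw [hPv] at hlb
        simp only [P, μ, sub_div, sub_smul] at hlb ⊢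
        linear_combination (norm := module) hlb
    · refine .inr ⟨z - (a k₀ ⬝ᵥ z / c) • y, forall_mem_insert _ _ _ |>.mpr ⟨?_, fun k hk => ?_⟩, ?_⟩
      · simp [dotProduct_sub, dotProduct_smul, div_mul_cancel₀ _ hk₀y.ne, c]
      · simpa only [← sub_smul_dotProduct_eq_dotProduct_sub_smul] using hz k hk
      · simpa only [← sub_smul_dotProduct_eq_dotProduct_sub_smul] using hbz

theorem farkas_of_signConstrained [Fintype κ] (S : κ → Prop) [DecidablePred S]
    (a : κ → ι → 𝕜) (b : ι → 𝕜) :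
    (∃ x : κ → 𝕜, (∀ k, S k → 0 ≤ x k) ∧ ∑ k, x k • a k = b) ∨
      ∃ y, (∀ k, S k → 0 ≤ a k ⬝ᵥ y) ∧ (∀ k, ¬ S k → a k ⬝ᵥ y = 0) ∧ b ⬝ᵥ y < 0 := by
  -- an unconstrained variable is the difference of two nonnegative ones
  let g : Bool × κ → ι → 𝕜 := fun ⟨σ, k⟩ => if σ then a k else if S k then 0 else -a k
  rcases farkas g b univ with ⟨l, hl, hlb⟩ | ⟨y, hy, hby⟩
  · refine .inl ⟨fun k => l (true, k) - if S k then 0 else l (false, k),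
      fun k hk => by simp [hk, hl], ?_⟩
    rw [← hlb, Fintype.sum_prod_type, Fintype.sum_bool, ← sum_add_distrib]
    refine sum_congr rfl fun k _ => ?_
    by_cases hk : S k
    · simp [g, hk]
    · simp only [g, hk, if_true, if_false, Bool.false_eq_true, smul_neg]
      module
  · refine .inr ⟨y, fun k _ => by simpa [g] using hy (true, k) (mem_univ _), fun k hk => ?_, hby⟩
    have h₁ := hy (true, k) (mem_univ _)
    have h₂ := hy (false, k) (mem_univ _)
    simp only [g, hk, if_true, if_false, Bool.false_eq_true, neg_dotProduct] at h₁ h₂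
    linarith

end Farkas

theorem norm_sq_le_sum_norm_sq {ι E : Type*} [Fintype ι] [SeminormedAddCommGroup E] (x : ι → E) :
    ‖x‖ ^ 2 ≤ ∑ i, ‖x i‖ ^ 2 := by
  have h : ‖x‖ ≤ √(∑ i, ‖x i‖ ^ 2) :=
    (pi_norm_le_iff_of_nonneg (Real.sqrt_nonneg _)).mpr fun i =>
      Real.le_sqrt_of_sq_le (single_le_sum (f := fun i => ‖x i‖ ^ 2)
        (fun i _ => sq_nonneg _) (mem_univ i))
  calc ‖x‖ ^ 2 ≤ √(∑ i, ‖x i‖ ^ 2) ^ 2 := by gcongr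
    _ = ∑ i, ‖x i‖ ^ 2 := Real.sq_sqrt (sum_nonneg fun i _ => sq_nonneg _)

theorem strictConvexOn_univ_sum_apply {𝕜 ι E β : Type*} [Field 𝕜] [LinearOrder 𝕜]
    [IsStrictOrderedRing 𝕜] [Fintype ι] [AddCommGroup E] [Module 𝕜 E]
    [AddCommGroup β] [PartialOrder β] [IsOrderedAddMonoid β] [Module 𝕜 β]
    {f : ι → E → β} (hf : ∀ i, StrictConvexOn 𝕜 Set.univ (f i)) :
    StrictConvexOn 𝕜 Set.univ fun x : ι → E => ∑ i, f i (x i) := by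
  refine ⟨convex_univ, fun x _ y _ hxy a b ha hb hab => ?_⟩
  obtain ⟨i₀, hi₀⟩ := Function.ne_iff.mp hxy
  simp only [smul_sum, ← sum_add_distrib, Pi.add_apply, Pi.smul_apply]
  exact sum_lt_sum (fun i _ => (hf i).convexOn.2 trivial trivial ha.le hb.le hab)
    ⟨i₀, mem_univ _, (hf i₀).2 trivial trivial hi₀ ha hb hab⟩

theorem StrictConvexOn.existsUnique_forall_le {E : Type*} [NormedAddCommGroup E] [NormedSpace ℝ E]
    [ProperSpace E] {f : E → ℝ} {s : Set E} (hf : StrictConvexOn ℝ s f) (hfc : Continuous f)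
    (hf_coercive : Filter.Tendsto f (Filter.cocompact E) Filter.atTop) (hs : IsClosed s)
    (hne : s.Nonempty) :
    ∃! x, x ∈ s ∧ ∀ y ∈ s, f x ≤ f y := by
  obtain ⟨x₀, hx₀⟩ := hne
  obtain ⟨x, hx, hmin⟩ := hfc.continuousOn.exists_isMinOn' hs hx₀
    ((hf_coercive.eventually_ge_atTop (f x₀)).filter_mono inf_le_left)
  exact ⟨x, ⟨hx, isMinOn_iff.mp hmin⟩, fun y ⟨hy, hymin⟩ =>
    hf.eq_of_isMinOn (isMinOn_iff.mpr hymin) hmin hy hx⟩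

theorem strictConvexOn_univ_sum_sum_sq {ι κ : Type*} [Fintype ι] [Fintype κ] :
    StrictConvexOn ℝ Set.univ fun ω : ι → κ → ℝ => ∑ i, ∑ t, ω i t ^ 2 :=
  strictConvexOn_univ_sum_apply fun _ => strictConvexOn_univ_sum_apply fun _ =>
    Even.strictConvexOn_pow even_two two_ne_zero

theorem tendsto_sum_sum_sq_cocompact {ι κ : Type*} [Fintype ι] [Fintype κ] :
    Filter.Tendsto (fun ω : ι → κ → ℝ => ∑ i, ∑ t, ω i t ^ 2) (Filter.cocompact _)
      Filter.atTop := by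
  refine Filter.tendsto_atTop_mono (fun ω => ?_)
    ((Filter.tendsto_pow_atTop two_ne_zero).comp tendsto_norm_cocompact_atTop)
  calc ‖ω‖ ^ 2 ≤ ∑ i, ‖ω i‖ ^ 2 := norm_sq_le_sum_norm_sq ω
    _ ≤ ∑ i, ∑ t, ‖ω i t‖ ^ 2 := sum_le_sum fun i _ => norm_sq_le_sum_norm_sq (ω i)
    _ = ∑ i, ∑ t, ω i t ^ 2 := by simp only [Real.norm_eq_abs, sq_abs]

section PrimalProblem

variable {N T p : ℕ}

def primalFeasibleSet (W : Fin N → Fin T → ℝ) (ψ : Fin N → Fin T → Fin p → ℝ) :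
    Set (Fin N → Fin T → ℝ) := {ω |
  1 ≤ (1 / ((N : ℝ) * T)) * ∑ i, ∑ t, ω i t * W i t ∧
  (∀ t, ∑ i, ω i t = 0) ∧
  (∀ i, ∑ t, ω i t = 0) ∧
  (∀ j, (1 / ((N : ℝ) * T)) * ∑ i, ∑ t, ω i t * ψ i t j = 0) ∧
  (∀ i t, 0 ≤ ω i t * W i t)}

theorem isClosed_primalFeasibleSet (W : Fin N → Fin T → ℝ) (ψ : Fin N → Fin T → Fin p → ℝ) :
    IsClosed (primalFeasibleSet W ψ) := by
  simp only [primalFeasibleSet, Set.ofPred_and, Set.ofPred_forall]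
  refine (isClosed_le (by fun_prop) (by fun_prop)).inter
    ((isClosed_iInter fun t => isClosed_eq (by fun_prop) (by fun_prop)).inter
    ((isClosed_iInter fun i => isClosed_eq (by fun_prop) (by fun_prop)).inter
    ((isClosed_iInter fun j => isClosed_eq (by fun_prop) (by fun_prop)).inter
    (isClosed_iInter fun i => isClosed_iInter fun t => isClosed_le (by fun_prop) (by fun_prop)))))

theorem convex_primalFeasibleSet (W : Fin N → Fin T → ℝ) (ψ : Fin N → Fin T → Fin p → ℝ) :
    Convex ℝ (primalFeasibleSet W ψ) := by
  simp only [primalFeasibleSet, Set.ofPred_and, Set.ofPred_forall]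
  refine (convex_halfSpace_ge ?_ 1).inter
    ((convex_iInter fun t => convex_hyperplane ?_ 0).inter
    ((convex_iInter fun i => convex_hyperplane ?_ 0).inter
    ((convex_iInter fun j => convex_hyperplane ?_ 0).inter
    (convex_iInter fun i => convex_iInter fun t => convex_halfSpace_ge ?_ 0))))
  all_goals exact ⟨fun x y => by simp [add_mul, sum_add_distrib, mul_add],
    fun c x => by simp [mul_sum, mul_assoc, mul_left_comm]⟩

def primalConstraintVec (W : Fin N → Fin T → ℝ) (ψ : Fin N → Fin T → Fin p → ℝ)
    (k : Fin N × Fin T) : Unit ⊕ Fin N ⊕ Fin T ⊕ Fin p → ℝ :=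
  Sum.elim (fun _ => W k.1 k.2)
    (Sum.elim (Pi.single k.1 1) (Sum.elim (Pi.single k.2 1) (ψ k.1 k.2)))

theorem sum_smul_primalConstraintVec (W : Fin N → Fin T → ℝ) (ψ : Fin N → Fin T → Fin p → ℝ)
    (x : Fin N × Fin T → ℝ) :
    ∑ k, x k • primalConstraintVec W ψ k =
      Sum.elim (fun _ => ∑ i, ∑ t, x (i, t) * W i t)
        (Sum.elim (fun i => ∑ t, x (i, t))
          (Sum.elim (fun t => ∑ i, x (i, t)) fun j => ∑ i, ∑ t, x (i, t) * ψ i t j)) := by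
  ext (_ | i | t | j) <;>
    simp only [Fintype.sum_prod_type, Finset.sum_apply, Pi.smul_apply] <;>
    simp [primalConstraintVec, Pi.single_apply]

theorem primalConstraintVec_dotProduct (W : Fin N → Fin T → ℝ) (ψ : Fin N → Fin T → Fin p → ℝ)
    (i : Fin N) (t : Fin T) (y : Unit ⊕ Fin N ⊕ Fin T ⊕ Fin p → ℝ) :
    primalConstraintVec W ψ (i, t) ⬝ᵥ y = W i t * y (.inl ()) +
      (y (.inr (.inl i)) + y (.inr (.inr (.inl t))) + ∑ j, ψ i t j * y (.inr (.inr (.inr j)))) := by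
  simp [primalConstraintVec, dotProduct, Fintype.sum_sum_type, Pi.single_apply, add_assoc]

theorem mem_primalFeasibleSet_of_sum_smul_eq (hN : 0 < N) (hT : 0 < T)
    (W : Fin N → Fin T → ℝ) (hW01 : ∀ i t, W i t = 0 ∨ W i t = 1)
    (ψ : Fin N → Fin T → Fin p → ℝ) (x : Fin N × Fin T → ℝ)
    (hx : ∀ k : Fin N × Fin T, W k.1 k.2 = 1 → 0 ≤ x k)
    (hxb : ∑ k, x k • primalConstraintVec W ψ k = Sum.elim (fun _ => (N : ℝ) * T) 0) :
    (fun i t => x (i, t)) ∈ primalFeasibleSet W ψ := by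
  rw [sum_smul_primalConstraintVec] at hxb
  refine ⟨?_, fun t => ?_, fun i => ?_, fun j => ?_, fun i t => ?_⟩
  · have h : ∑ i, ∑ t, x (i, t) * W i t = N * T := congrFun hxb (.inl ())
    rw [h, one_div, inv_mul_cancel₀ (by positivity)]
  · simpa using congrFun hxb (.inr (.inr (.inl t)))
  · simpa using congrFun hxb (.inr (.inl i))
  · have h : ∑ i, ∑ t, x (i, t) * ψ i t j = 0 := congrFun hxb (.inr (.inr (.inr j)))
    rw [h, mul_zero]
  · rcases hW01 i t with h | h
    · simp [h]
    · simpa [h] using hx (i, t) h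

theorem exists_separation_of_primalCertificate (W : Fin N → Fin T → ℝ)
    (hW01 : ∀ i t, W i t = 0 ∨ W i t = 1) (ψ : Fin N → Fin T → Fin p → ℝ)
    (y : Unit ⊕ Fin N ⊕ Fin T ⊕ Fin p → ℝ) (hy₀ : y (.inl ()) < 0)
    (hy : ∀ k : Fin N × Fin T, W k.1 k.2 = 1 → 0 ≤ primalConstraintVec W ψ k ⬝ᵥ y)
    (hy' : ∀ k : Fin N × Fin T, ¬ W k.1 k.2 = 1 → primalConstraintVec W ψ k ⬝ᵥ y = 0) :
    ∃ (α : Fin N → ℝ) (β : Fin T → ℝ) (γ : Fin p → ℝ),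
      (∀ i t, 0 ≤ α i + β t + ∑ j, ψ i t j * γ j) ∧
      (∀ i t, W i t = if 0 < α i + β t + ∑ j, ψ i t j * γ j then 1 else 0) := by
  let α : Fin N → ℝ := fun i => y (.inr (.inl i))
  let β : Fin T → ℝ := fun t => y (.inr (.inr (.inl t)))
  let γ : Fin p → ℝ := fun j => y (.inr (.inr (.inr j)))
  have hsep : ∀ i t, (W i t = 1 → 0 < α i + β t + ∑ j, ψ i t j * γ j) ∧
      (W i t = 0 → α i + β t + ∑ j, ψ i t j * γ j = 0) := by
    refine fun i t => ⟨fun h => ?_, fun h => ?_⟩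
    · have := hy (i, t) h
      rw [primalConstraintVec_dotProduct, h] at this
      linarith
    · have := hy' (i, t) (by simp [h])
      rwa [primalConstraintVec_dotProduct, h, zero_mul, zero_add] at this
  refine ⟨α, β, γ, fun i t => ?_, fun i t => ?_⟩ <;> rcases hW01 i t with h | h
  · exact ((hsep i t).2 h).ge
  · exact ((hsep i t).1 h).le
  · simp [h, (hsep i t).2 h]
  · simp [h, (hsep i t).1 h]

theorem primalFeasibleSet_nonempty (hN : 0 < N) (hT : 0 < T)
    (W : Fin N → Fin T → ℝ) (hW01 : ∀ i t, W i t = 0 ∨ W i t = 1)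
    (ψ : Fin N → Fin T → Fin p → ℝ)
    (hnosep : ¬ ∃ (α : Fin N → ℝ) (β : Fin T → ℝ) (γ : Fin p → ℝ),
      (∀ i t, 0 ≤ α i + β t + ∑ j, ψ i t j * γ j) ∧
      (∀ i t, W i t = if 0 < α i + β t + ∑ j, ψ i t j * γ j then 1 else 0)) :
    (primalFeasibleSet W ψ).Nonempty := by
  let b : Unit ⊕ Fin N ⊕ Fin T ⊕ Fin p → ℝ := Sum.elim (fun _ => (N : ℝ) * T) 0
  rcases farkas_of_signConstrained (fun k => W k.1 k.2 = 1) (primalConstraintVec W ψ) b with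
    ⟨x, hx, hxb⟩ | ⟨y, hy, hy', hyb⟩
  · exact ⟨_, mem_primalFeasibleSet_of_sum_smul_eq hN hT W hW01 ψ x hx hxb⟩
  · have hby : b ⬝ᵥ y = N * T * y (.inl ()) := by simp [b, dotProduct, Fintype.sum_sum_type]
    have hy₀ : y (.inl ()) < 0 := neg_of_mul_neg_right (hby ▸ hyb) (by positivity)
    exact absurd (exists_separation_of_primalCertificate W hW01 ψ y hy₀ hy hy') hnosep

end PrimalProblem

/-- **Lemma 1(a) (Existence and uniqueness of the primal solution).**
If there is no `(α, β, γ)` with `α_i + β_t + ψ_itᵀγ ≥ 0` for all `(i,t)` and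
`W_it = 1{α_i + β_t + ψ_itᵀγ > 0}`, then the feasible set of the primal
weighting problem is non-empty, closed and convex, and the problem of
minimizing `(1/(NT)²)·Σ_{i,t} ω_it²` over it has a unique solution. -/
theorem primal_problem_unique_solution
    (N T p : ℕ) (hN : 0 < N) (hT : 0 < T)
    (W : Fin N → Fin T → ℝ) (hW01 : ∀ i t, W i t = 0 ∨ W i t = 1)
    (ψ : Fin N → Fin T → Fin p → ℝ)
    (hnosep : ¬ ∃ (α : Fin N → ℝ) (β : Fin T → ℝ) (γ : Fin p → ℝ),
      (∀ i t, 0 ≤ α i + β t + ∑ j, ψ i t j * γ j) ∧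
      (∀ i t, W i t = if 0 < α i + β t + ∑ j, ψ i t j * γ j then 1 else 0)) :
    let F : Set (Fin N → Fin T → ℝ) := {ω |
      1 ≤ (1 / ((N : ℝ) * T)) * ∑ i, ∑ t, ω i t * W i t ∧
      (∀ t, ∑ i, ω i t = 0) ∧
      (∀ i, ∑ t, ω i t = 0) ∧
      (∀ j, (1 / ((N : ℝ) * T)) * ∑ i, ∑ t, ω i t * ψ i t j = 0) ∧
      (∀ i t, 0 ≤ ω i t * W i t)}
    F.Nonempty ∧ IsClosed F ∧ Convex ℝ F ∧
      (∃! ω, ω ∈ F ∧ ∀ ω' ∈ F,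
        (1 / (((N : ℝ) * T) ^ 2)) * ∑ i, ∑ t, (ω i t) ^ 2 ≤
          (1 / (((N : ℝ) * T) ^ 2)) * ∑ i, ∑ t, (ω' i t) ^ 2) := by
  intro F
  have hne : F.Nonempty := primalFeasibleSet_nonempty hN hT W hW01 ψ hnosep
  have hclosed : IsClosed F := isClosed_primalFeasibleSet W ψ
  have hconvex : Convex ℝ F := convex_primalFeasibleSet W ψ
  have hc : (0 : ℝ) < 1 / ((N : ℝ) * T) ^ 2 := by positivity
  refine ⟨hne, hclosed, hconvex, ?_⟩
  simp only [mul_le_mul_iff_right₀ hc]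
  exact (strictConvexOn_univ_sum_sum_sq.subset F.subset_univ hconvex).existsUnique_forall_le
    (by fun_prop) tendsto_sum_sum_sq_cocompact hclosed hne
end

section
/- Suppose the no-separation condition holds, so the primal weighting problem has a unique solution. Let (λ̂^{(t)}, λ̂^{(i)}, γ̂) minimize (1/N)·Σ_i (1/T)·Σ_t ρ_{W_it}(W_it − λ^{(t)}_t − λ^{(i)}_i − γᵀψ_it) over λ^{(t)} ∈ ℝ^T, λ^{(i)} ∈ ℝ^N, γ ∈ ℝ^p. Define the unnormalized weights ω̂^{un}_it := r_it·(1 − W_it) + max(r_it, 0)·W_it with r_it := W_it − λ̂^{(t)}_t − λ̂^{(i)}_i − γ̂ᵀψ_it. Then (1/(NT))·Σ_{i,t} ω̂^{un}_it W_it > 0, and the normalized weights ω̂_it := ω̂^{un}_it / ((1/(NT))·Σ_{j,s} ω̂^{un}_js W_js) are the unique solution of the primal weighting problem. -/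
open scoped BigOperators

/-- The loss `ρ_z(x) = x²·(1−z) + (max(x,0))²·z`. -/
noncomputable def drRho (z x : ℝ) : ℝ := x ^ 2 * (1 - z) + (max x 0) ^ 2 * z

namespace DRaux


lemma rho_upper {z : ℝ} (hz : z = 0 ∨ z = 1) (x d : ℝ) :
    drRho z (x + d) ≤ drRho z x + 2 * (x * (1 - z) + max x 0 * z) * d + d ^ 2 := by
  rcases hz with hz | hz <;> subst hz <;> unfold drRho
  · ring_nf
    nlinarith [sq_nonneg d]
  · have h1 : x ≤ max x 0 := le_max_left x 0
    have h0 : (0:ℝ) ≤ max x 0 := le_max_right x 0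
    rcases le_total (x + d) 0 with hxd | hxd
    · rw [max_eq_right hxd]
      nlinarith [sq_nonneg (max x 0 + d)]
    · rw [max_eq_left hxd]
      nlinarith [sq_nonneg (max x 0 + d), sq_nonneg (x + d)]

lemma g_mul_self {z : ℝ} (hz : z = 0 ∨ z = 1) (x : ℝ) :
    (x * (1 - z) + max x 0 * z) * x = (x * (1 - z) + max x 0 * z) ^ 2 := by
  rcases hz with hz | hz <;> subst hz
  · ring
  · rcases le_total x 0 with hx | hx
    · rw [max_eq_right hx]; ring
    · rw [max_eq_left hx]; ring

lemma g_mul_z_nonneg {z : ℝ} (hz : z = 0 ∨ z = 1) (x : ℝ) :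
    0 ≤ (x * (1 - z) + max x 0 * z) * z := by
  rcases hz with hz | hz <;> subst hz
  · simp
  · simp

lemma mul_g_ge {z : ℝ} (hz : z = 0 ∨ z = 1) (x w : ℝ) (hw : 0 ≤ w * z) :
    w * x ≤ w * (x * (1 - z) + max x 0 * z) := by
  rcases hz with hz | hz <;> subst hz
  · ring_nf; exact le_refl _
  · simp only [mul_one] at hw
    have h1 : x ≤ max x 0 := le_max_left x 0
    simp only [sub_self, mul_zero, zero_add, mul_one]
    exact mul_le_mul_of_nonneg_left h1 hw


/-- at the minimizer, the "gradient" pairing with any direction vanishes -/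
lemma lin_zero (N T p : ℕ) (hN : 0 < N) (hT : 0 < T)
    (W : Fin N → Fin T → ℝ) (hW01 : ∀ i t, W i t = 0 ∨ W i t = 1)
    (ψ : Fin N → Fin T → Fin p → ℝ)
    (lamT : Fin T → ℝ) (lamI : Fin N → ℝ) (γhat : Fin p → ℝ)
    (hmin : ∀ (lT : Fin T → ℝ) (lI : Fin N → ℝ) (γ : Fin p → ℝ),
      (1 / (N : ℝ)) * ∑ i, (1 / (T : ℝ)) * ∑ t,
          drRho (W i t) (W i t - lamT t - lamI i - ∑ j, γhat j * ψ i t j)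
        ≤ (1 / (N : ℝ)) * ∑ i, (1 / (T : ℝ)) * ∑ t,
          drRho (W i t) (W i t - lT t - lI i - ∑ j, γ j * ψ i t j))
    (aT : Fin T → ℝ) (aI : Fin N → ℝ) (aG : Fin p → ℝ) :
    ∑ i, ∑ t,
      ((W i t - lamT t - lamI i - ∑ j, γhat j * ψ i t j) * (1 - W i t)
        + max (W i t - lamT t - lamI i - ∑ j, γhat j * ψ i t j) 0 * W i t)
      * (aT t + aI i + ∑ j, aG j * ψ i t j) = 0 := by
  set r : Fin N → Fin T → ℝ := fun i t => W i t - lamT t - lamI i - ∑ j, γhat j * ψ i t j with hr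
  set g : Fin N → Fin T → ℝ := fun i t => r i t * (1 - W i t) + max (r i t) 0 * W i t with hg
  set c : Fin N → Fin T → ℝ := fun i t => aT t + aI i + ∑ j, aG j * ψ i t j with hc
  show ∑ i, ∑ t, g i t * c i t = 0
  set S : ℝ := ∑ i, ∑ t, g i t * c i t with hS
  set K : ℝ := ∑ i, ∑ t, (c i t) ^ 2 with hK
  have hKnn : 0 ≤ K := Finset.sum_nonneg fun i _ =>
    Finset.sum_nonneg fun t _ => sq_nonneg _
  have hNpos : (0:ℝ) < N := by exact_mod_cast hN
  have hTpos : (0:ℝ) < T := by exact_mod_cast hT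
  have key : ∀ h : ℝ, 0 ≤ -(2*h) * S + h^2 * K := by
    intro h
    have hle := hmin (fun t => lamT t + h * aT t) (fun i => lamI i + h * aI i)
      (fun j => γhat j + h * aG j)
    have harg : ∀ i t, W i t - (lamT t + h * aT t) - (lamI i + h * aI i)
        - ∑ j, (γhat j + h * aG j) * ψ i t j = r i t + (-h) * c i t := by
      intro i t
      simp only [hr, hc]
      rw [show (∑ j, (γhat j + h * aG j) * ψ i t j)
          = (∑ j, γhat j * ψ i t j) + h * ∑ j, aG j * ψ i t j by
        rw [Finset.mul_sum, ← Finset.sum_add_distrib]; congr 1; ext j; ring]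
      ring
    have hstep : ∀ i t, drRho (W i t) (W i t - (lamT t + h * aT t) - (lamI i + h * aI i)
        - ∑ j, (γhat j + h * aG j) * ψ i t j)
        ≤ drRho (W i t) (r i t) + 2 * g i t * ((-h) * c i t) + ((-h) * c i t)^2 := by
      intro i t
      rw [harg i t]
      exact rho_upper (hW01 i t) (r i t) _
    -- chain the inequalities
    have h2 : (1 / (N : ℝ)) * ∑ i, (1 / (T : ℝ)) * ∑ t, drRho (W i t) (r i t)
        ≤ (1 / (N : ℝ)) * ∑ i, (1 / (T : ℝ)) * ∑ t,
            (drRho (W i t) (r i t) + 2 * g i t * ((-h) * c i t) + ((-h) * c i t)^2) := by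
      refine le_trans (hle) ?_
      refine mul_le_mul_of_nonneg_left ?_ (by positivity)
      refine Finset.sum_le_sum fun i _ => ?_
      refine mul_le_mul_of_nonneg_left ?_ (by positivity)
      exact Finset.sum_le_sum fun t _ => hstep i t
    have h3 : 0 ≤ (1 / (N : ℝ)) * ∑ i, (1 / (T : ℝ)) * ∑ t,
        (2 * g i t * ((-h) * c i t) + ((-h) * c i t)^2) := by
      have e : ∀ i : Fin N, (1 / (T : ℝ)) * ∑ t,
          (drRho (W i t) (r i t) + 2 * g i t * ((-h) * c i t) + ((-h) * c i t)^2)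
          = (1 / (T : ℝ)) * ∑ t, drRho (W i t) (r i t)
            + (1 / (T : ℝ)) * ∑ t, (2 * g i t * ((-h) * c i t) + ((-h) * c i t)^2) := by
        intro i
        rw [← mul_add, ← Finset.sum_add_distrib]
        congr 1; apply Finset.sum_congr rfl; intro t _; ring
      rw [show (∑ i, (1 / (T : ℝ)) * ∑ t,
          (drRho (W i t) (r i t) + 2 * g i t * ((-h) * c i t) + ((-h) * c i t)^2))
          = (∑ i, (1 / (T : ℝ)) * ∑ t, drRho (W i t) (r i t))
            + ∑ i, (1 / (T : ℝ)) * ∑ t, (2 * g i t * ((-h) * c i t) + ((-h) * c i t)^2) by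
        rw [← Finset.sum_add_distrib]; exact Finset.sum_congr rfl fun i _ => e i] at h2
      rw [mul_add] at h2
      linarith
    have hsum : (∑ i, ∑ t, (2 * g i t * ((-h) * c i t) + ((-h) * c i t)^2))
        = -(2*h) * S + h^2 * K := by
      rw [hS, hK]
      simp only [Finset.mul_sum]
      rw [← Finset.sum_add_distrib]
      apply Finset.sum_congr rfl; intro i _
      rw [← Finset.sum_add_distrib]
      apply Finset.sum_congr rfl; intro t _; ring
    have h4 : (1 / (N : ℝ)) * ∑ i, (1 / (T : ℝ)) * ∑ t,
        (2 * g i t * ((-h) * c i t) + ((-h) * c i t)^2)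
        = (1 / (N:ℝ)) * (1 / (T:ℝ)) * (-(2*h) * S + h^2 * K) := by
      rw [show (∑ i, (1 / (T:ℝ)) * ∑ t, (2 * g i t * ((-h) * c i t) + ((-h) * c i t)^2))
          = (1 / (T:ℝ)) * ∑ i, ∑ t, (2 * g i t * ((-h) * c i t) + ((-h) * c i t)^2) from
        (Finset.mul_sum _ _ _).symm]
      rw [hsum, mul_assoc]
    rw [h4] at h3
    have hpos : (0:ℝ) < (1/(N:ℝ)) * (1/(T:ℝ)) := by positivity
    nlinarith [h3]
  -- conclude S = 0
  rcases eq_or_lt_of_le hKnn with hK0 | hKpos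
  · have h1 := key S
    have h2 := key (-S)
    rw [← hK0] at h1 h2
    nlinarith
  · have hKne : K ≠ 0 := ne_of_gt hKpos
    set u : ℝ := S / K with hu
    have huS : S = K * u := by rw [hu]; field_simp
    have h1 := key u
    rw [huS] at h1 ⊢
    have hu2 : u ^ 2 ≤ 0 := by nlinarith
    have : u = 0 := by
      have := le_antisymm hu2 (sq_nonneg u)
      exact pow_eq_zero_iff (by norm_num) |>.mp this
    rw [this, mul_zero]

end DRaux

/-- **Dual representation of the balancing weights.**
Under the no-separation condition, if `(λ̂^{(t)}, λ̂^{(i)}, γ̂)` minimizes the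
dual loss `(1/N)·Σ_i (1/T)·Σ_t ρ_{W_it}(W_it − λ^{(t)}_t − λ^{(i)}_i − γᵀψ_it)`,
then with `r_it = W_it − λ̂^{(t)}_t − λ̂^{(i)}_i − γ̂ᵀψ_it` and unnormalized
weights `ω̂^{un}_it = r_it·(1−W_it) + max(r_it,0)·W_it`, the normalization
`(1/(NT))·Σ ω̂^{un}_it W_it` is strictly positive, and the normalized weights
`ω̂_it = ω̂^{un}_it / ((1/(NT))·Σ ω̂^{un} W)` are the unique solution of the
primal weighting problem. -/
theorem dual_representation_of_weights
    (N T p : ℕ) (hN : 0 < N) (hT : 0 < T)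
    (W : Fin N → Fin T → ℝ) (hW01 : ∀ i t, W i t = 0 ∨ W i t = 1)
    (ψ : Fin N → Fin T → Fin p → ℝ)
    (hnosep : ¬ ∃ (α : Fin N → ℝ) (β : Fin T → ℝ) (γ : Fin p → ℝ),
      (∀ i t, 0 ≤ α i + β t + ∑ j, ψ i t j * γ j) ∧
      (∀ i t, W i t = if 0 < α i + β t + ∑ j, ψ i t j * γ j then 1 else 0))
    -- the minimizer of the dual problem
    (lamT : Fin T → ℝ) (lamI : Fin N → ℝ) (γhat : Fin p → ℝ)
    (hmin : ∀ (lT : Fin T → ℝ) (lI : Fin N → ℝ) (γ : Fin p → ℝ),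
      (1 / (N : ℝ)) * ∑ i, (1 / (T : ℝ)) * ∑ t,
          drRho (W i t) (W i t - lamT t - lamI i - ∑ j, γhat j * ψ i t j)
        ≤ (1 / (N : ℝ)) * ∑ i, (1 / (T : ℝ)) * ∑ t,
          drRho (W i t) (W i t - lT t - lI i - ∑ j, γ j * ψ i t j)) :
    let r : Fin N → Fin T → ℝ := fun i t =>
      W i t - lamT t - lamI i - ∑ j, γhat j * ψ i t j
    let ωun : Fin N → Fin T → ℝ := fun i t =>
      r i t * (1 - W i t) + max (r i t) 0 * W i t
    let D : ℝ := (1 / ((N : ℝ) * T)) * ∑ i, ∑ t, ωun i t * W i t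
    let ωhat : Fin N → Fin T → ℝ := fun i t => ωun i t / D
    let F : Set (Fin N → Fin T → ℝ) := {ω |
      1 ≤ (1 / ((N : ℝ) * T)) * ∑ i, ∑ t, ω i t * W i t ∧
      (∀ t, ∑ i, ω i t = 0) ∧
      (∀ i, ∑ t, ω i t = 0) ∧
      (∀ j, (1 / ((N : ℝ) * T)) * ∑ i, ∑ t, ω i t * ψ i t j = 0) ∧
      (∀ i t, 0 ≤ ω i t * W i t)}
    0 < D ∧ ωhat ∈ F ∧
      (∀ ω' ∈ F, (1 / (((N : ℝ) * T) ^ 2)) * ∑ i, ∑ t, (ωhat i t) ^ 2 ≤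
          (1 / (((N : ℝ) * T) ^ 2)) * ∑ i, ∑ t, (ω' i t) ^ 2) ∧
      (∀ ω' ∈ F, (∀ ω'' ∈ F, (1 / (((N : ℝ) * T) ^ 2)) * ∑ i, ∑ t, (ω' i t) ^ 2 ≤
          (1 / (((N : ℝ) * T) ^ 2)) * ∑ i, ∑ t, (ω'' i t) ^ 2) → ω' = ωhat) := by
  intro r ωun D ωhat F
  have hNpos : (0:ℝ) < N := by exact_mod_cast hN
  have hTpos : (0:ℝ) < T := by exact_mod_cast hT
  have hNT : (0:ℝ) < (N:ℝ) * T := by positivity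
  have hrdef : ∀ i t, r i t = W i t - lamT t - lamI i - ∑ j, γhat j * ψ i t j :=
    fun _ _ => rfl
  have hwdef : ∀ i t, ωun i t = r i t * (1 - W i t) + max (r i t) 0 * W i t :=
    fun _ _ => rfl
  have hDdef : D = (1 / ((N : ℝ) * T)) * ∑ i, ∑ t, ωun i t * W i t := rfl
  -- the gradient conditions
  have LIN : ∀ (aT : Fin T → ℝ) (aI : Fin N → ℝ) (aG : Fin p → ℝ),
      ∑ i, ∑ t, ωun i t * (aT t + aI i + ∑ j, aG j * ψ i t j) = 0 := by
    intro aT aI aG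
    exact DRaux.lin_zero N T p hN hT W hW01 ψ lamT lamI γhat hmin aT aI aG
  have hcol : ∀ t0, ∑ i, ωun i t0 = 0 := by
    intro t0
    have h := LIN (fun t => if t = t0 then 1 else 0) (fun _ => 0) (fun _ => 0)
    simpa [mul_ite] using h
  have hrow : ∀ i0, ∑ t, ωun i0 t = 0 := by
    intro i0
    have h := LIN (fun _ => 0) (fun i => if i = i0 then 1 else 0) (fun _ => 0)
    simpa [mul_ite] using h
  have hpsi : ∀ j0, ∑ i, ∑ t, ωun i t * ψ i t j0 = 0 := by
    intro j0
    have h := LIN (fun _ => 0) (fun _ => 0) (fun j => if j = j0 then 1 else 0)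
    simpa [ite_mul] using h
  -- ∑ ωun W = ∑ ωun²
  have hWr : ∑ i, ∑ t, ωun i t * W i t = ∑ i, ∑ t, (ωun i t)^2 := by
    have hs := LIN lamT lamI γhat
    have hrw : ∀ i t, ωun i t * W i t
        = ωun i t * (lamT t + lamI i + ∑ j, γhat j * ψ i t j) + ωun i t * r i t := by
      intro i t; rw [hrdef i t]; ring
    calc ∑ i, ∑ t, ωun i t * W i t
        = ∑ i, ∑ t, (ωun i t * (lamT t + lamI i + ∑ j, γhat j * ψ i t j)
            + ωun i t * r i t) := by
          exact Finset.sum_congr rfl fun i _ => Finset.sum_congr rfl fun t _ => hrw i t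
      _ = (∑ i, ∑ t, ωun i t * (lamT t + lamI i + ∑ j, γhat j * ψ i t j))
            + ∑ i, ∑ t, ωun i t * r i t := by
          rw [← Finset.sum_add_distrib]
          exact Finset.sum_congr rfl fun i _ => Finset.sum_add_distrib
      _ = ∑ i, ∑ t, ωun i t * r i t := by rw [hs, zero_add]
      _ = ∑ i, ∑ t, (ωun i t)^2 := by
          refine Finset.sum_congr rfl fun i _ => Finset.sum_congr rfl fun t _ => ?_
          exact DRaux.g_mul_self (hW01 i t) (r i t)
  have hsq_nonneg : (0:ℝ) ≤ ∑ i, ∑ t, (ωun i t)^2 :=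
    Finset.sum_nonneg fun i _ => Finset.sum_nonneg fun t _ => sq_nonneg _
  have hNTD : ((N:ℝ) * T) * D = ∑ i, ∑ t, (ωun i t)^2 := by
    rw [hDdef, hWr]; field_simp
  -- positivity of D
  have hDpos : 0 < D := by
    have hDnn : 0 ≤ D := by nlinarith
    rcases lt_or_eq_of_le hDnn with h | h
    · exact h
    · exfalso
      have hzero : ∑ i, ∑ t, (ωun i t)^2 = 0 := by rw [← hNTD, ← h, mul_zero]
      have hptzero : ∀ i t, ωun i t = 0 := by
        intro i t
        have h1 := (Finset.sum_eq_zero_iff_of_nonneg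
          (fun i _ => Finset.sum_nonneg fun t _ => sq_nonneg (ωun i t))).mp hzero i
          (Finset.mem_univ i)
        have h2 := (Finset.sum_eq_zero_iff_of_nonneg
          (fun t _ => sq_nonneg (ωun i t))).mp h1 t (Finset.mem_univ t)
        exact pow_eq_zero_iff (two_ne_zero) |>.mp h2
      apply hnosep
      have hkey : ∀ i t, (W i t = 0 ∧ lamI i + lamT t + ∑ j, ψ i t j * γhat j = 0)
          ∨ (W i t = 1 ∧ 1 ≤ lamI i + lamT t + ∑ j, ψ i t j * γhat j) := by
        intro i t
        have hcomm : ∑ j, ψ i t j * γhat j = ∑ j, γhat j * ψ i t j :=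
          Finset.sum_congr rfl fun j _ => mul_comm _ _
        have hz := hptzero i t
        rw [hwdef i t, hrdef i t] at hz
        rcases hW01 i t with hw | hw <;> rw [hw] at hz <;> [left; right] <;>
            refine ⟨hw, ?_⟩ <;> rw [hcomm]
        · -- W = 0 case : hz gives the linear part is 0
          have : (0 : ℝ) - lamT t - lamI i - ∑ j, γhat j * ψ i t j = 0 := by
            have h0 := hz
            simp only [sub_zero, mul_one, mul_zero, add_zero] at h0
            linarith [h0]
          linarith
        · -- W = 1 case : max (1 - s) 0 = 0 hence s ≥ 1
          have hmx : max ((1 : ℝ) - lamT t - lamI i - ∑ j, γhat j * ψ i t j) 0 = 0 := by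
            have h0 := hz
            simp only [sub_self, mul_zero, mul_one, zero_add] at h0
            exact h0
          have hle : (1 : ℝ) - lamT t - lamI i - ∑ j, γhat j * ψ i t j ≤ 0 := by
            have := le_max_left ((1 : ℝ) - lamT t - lamI i - ∑ j, γhat j * ψ i t j) 0
            rw [hmx] at this; exact this
          linarith
      refine ⟨lamI, lamT, γhat, fun i t => ?_, fun i t => ?_⟩
      · rcases hkey i t with ⟨_, h0⟩ | ⟨_, h1⟩
        · rw [h0]
        · linarith
      · rcases hkey i t with ⟨hw, h0⟩ | ⟨hw, h1⟩
        · rw [hw, h0]; simp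
        · rw [hw, if_pos (by linarith)]
  have hDne : D ≠ 0 := ne_of_gt hDpos
  have hhatdef : ∀ i t, ωhat i t = ωun i t / D := fun _ _ => rfl
  have hgWnn : ∀ i t, 0 ≤ ωun i t * W i t := by
    intro i t
    rw [hwdef i t]
    exact DRaux.g_mul_z_nonneg (hW01 i t) (r i t)
  -- feasibility
  have hfeas : ωhat ∈ F := by
    refine ⟨?_, fun t0 => ?_, fun i0 => ?_, fun j0 => ?_, fun i t => ?_⟩
    · have e : ∑ i, ∑ t, ωhat i t * W i t = (∑ i, ∑ t, ωun i t * W i t) / D := by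
        simp only [hhatdef, div_mul_eq_mul_div, Finset.sum_div]
      have e2 : (1 / ((N:ℝ)*T)) * ∑ i, ∑ t, ωhat i t * W i t = 1 := by
        rw [e, ← mul_div_assoc, ← hDdef, div_self hDne]
      exact le_of_eq e2.symm
    · simp only [hhatdef, ← Finset.sum_div, hcol t0, zero_div]
    · simp only [hhatdef, ← Finset.sum_div, hrow i0, zero_div]
    · simp only [hhatdef, div_mul_eq_mul_div, ← Finset.sum_div, hpsi j0, zero_div, mul_zero]
    · rw [hhatdef i t, div_mul_eq_mul_div]
      exact div_nonneg (hgWnn i t) hDpos.le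
  -- the core quadratic inequality
  have hcore : ∀ ω' ∈ F,
      (∑ i, ∑ t, (ωhat i t)^2) + (∑ i, ∑ t, (ω' i t - ωhat i t)^2)
        ≤ ∑ i, ∑ t, (ω' i t)^2 := by
    rintro ω' ⟨hF1, hF2, hF3, hF4, hF5⟩
    have e1 : ∑ i, ∑ t, ω' i t * lamT t = 0 := by
      rw [Finset.sum_comm]
      refine Finset.sum_eq_zero fun t _ => ?_
      rw [← Finset.sum_mul, hF2 t, zero_mul]
    have e2 : ∑ i, ∑ t, ω' i t * lamI i = 0 := by
      refine Finset.sum_eq_zero fun i _ => ?_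
      rw [← Finset.sum_mul, hF3 i, zero_mul]
    have e3 : ∑ i, ∑ t, ω' i t * (∑ j, γhat j * ψ i t j) = 0 := by
      have hx : ∀ j, ∑ i, ∑ t, ω' i t * ψ i t j = 0 := by
        intro j
        have h := hF4 j
        rcases mul_eq_zero.mp h with h' | h'
        · exact absurd h' (by positivity)
        · exact h'
      calc ∑ i, ∑ t, ω' i t * (∑ j, γhat j * ψ i t j)
          = ∑ i, ∑ t, ∑ j, γhat j * (ω' i t * ψ i t j) := by
            refine Finset.sum_congr rfl fun i _ => Finset.sum_congr rfl fun t _ => ?_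
            rw [Finset.mul_sum]
            exact Finset.sum_congr rfl fun j _ => by ring
        _ = ∑ i, ∑ j, ∑ t, γhat j * (ω' i t * ψ i t j) := by
            exact Finset.sum_congr rfl fun i _ => Finset.sum_comm
        _ = ∑ j, ∑ i, ∑ t, γhat j * (ω' i t * ψ i t j) := Finset.sum_comm
        _ = ∑ j, γhat j * (∑ i, ∑ t, ω' i t * ψ i t j) := by
            refine Finset.sum_congr rfl fun j _ => ?_
            simp only [Finset.mul_sum]
        _ = 0 := Finset.sum_eq_zero fun j _ => by rw [hx j, mul_zero]
    have hA : ∑ i, ∑ t, ω' i t * r i t = ∑ i, ∑ t, ω' i t * W i t := by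
      have hpt : ∀ i t, ω' i t * r i t
          = ω' i t * W i t - ω' i t * lamT t - ω' i t * lamI i
            - ω' i t * (∑ j, γhat j * ψ i t j) := by
        intro i t; rw [hrdef i t]; ring
      calc ∑ i, ∑ t, ω' i t * r i t
          = ∑ i, ∑ t, (ω' i t * W i t - ω' i t * lamT t - ω' i t * lamI i
              - ω' i t * (∑ j, γhat j * ψ i t j)) :=
            Finset.sum_congr rfl fun i _ => Finset.sum_congr rfl fun t _ => hpt i t
        _ = (∑ i, ∑ t, ω' i t * W i t) - (∑ i, ∑ t, ω' i t * lamT t)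
              - (∑ i, ∑ t, ω' i t * lamI i)
              - ∑ i, ∑ t, ω' i t * (∑ j, γhat j * ψ i t j) := by
            simp only [Finset.sum_sub_distrib]
        _ = ∑ i, ∑ t, ω' i t * W i t := by rw [e1, e2, e3]; ring
    have hB : ∑ i, ∑ t, ω' i t * r i t ≤ ∑ i, ∑ t, ω' i t * ωun i t := by
      refine Finset.sum_le_sum fun i _ => Finset.sum_le_sum fun t _ => ?_
      rw [hwdef i t]
      exact DRaux.mul_g_ge (hW01 i t) (r i t) (ω' i t) (hF5 i t)
    have hC : ((N:ℝ)*T) ≤ ∑ i, ∑ t, ω' i t * W i t := by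
      have hmul := mul_le_mul_of_nonneg_left hF1 hNT.le
      have hid : ((N:ℝ)*T) * ((1 / ((N:ℝ)*T)) * ∑ i, ∑ t, ω' i t * W i t)
          = ∑ i, ∑ t, ω' i t * W i t := by
        field_simp
      rw [mul_one, hid] at hmul
      exact hmul
    have hcross : ((N:ℝ)*T) ≤ ∑ i, ∑ t, ω' i t * ωun i t := by
      rw [hA] at hB; linarith
    have hhat2 : ∑ i, ∑ t, (ωhat i t)^2 = ((N:ℝ)*T) / D := by
      have ept : ∀ i t, (ωhat i t)^2 = (ωun i t)^2 / D^2 := fun i t => by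
        rw [hhatdef i t, div_pow]
      calc ∑ i, ∑ t, (ωhat i t)^2 = ∑ i, ∑ t, (ωun i t)^2 / D^2 :=
            Finset.sum_congr rfl fun i _ => Finset.sum_congr rfl fun t _ => ept i t
        _ = (∑ i, ∑ t, (ωun i t)^2) / D^2 := by simp only [← Finset.sum_div]
        _ = (((N:ℝ)*T) * D) / D^2 := by rw [← hNTD]
        _ = ((N:ℝ)*T) / D := by
            rw [pow_two, mul_div_assoc, div_mul_eq_div_div, div_self hDne, one_div,
              div_eq_mul_inv]
    have hcross2 : ((N:ℝ)*T)/D ≤ ∑ i, ∑ t, ω' i t * ωhat i t := by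
      have e : ∑ i, ∑ t, ω' i t * ωhat i t = (∑ i, ∑ t, ω' i t * ωun i t)/D := by
        simp only [hhatdef, ← mul_div_assoc, ← Finset.sum_div]
      rw [e]
      gcongr
    have hdiffnn : 0 ≤ ∑ i, ∑ t, (ω' i t - ωhat i t)^2 :=
      Finset.sum_nonneg fun i _ => Finset.sum_nonneg fun t _ => sq_nonneg _
    have hiden : ∑ i, ∑ t, (ω' i t)^2
        = (∑ i, ∑ t, (ω' i t - ωhat i t)^2) + 2*(∑ i, ∑ t, ω' i t * ωhat i t)
          - ∑ i, ∑ t, (ωhat i t)^2 := by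
      simp only [Finset.mul_sum, ← Finset.sum_add_distrib, ← Finset.sum_sub_distrib]
      refine Finset.sum_congr rfl fun i _ => Finset.sum_congr rfl fun t _ => ?_
      ring
    linarith
  have hdiffnn' : ∀ ω' : Fin N → Fin T → ℝ,
      0 ≤ ∑ i, ∑ t, (ω' i t - ωhat i t)^2 := fun ω' =>
    Finset.sum_nonneg fun i _ => Finset.sum_nonneg fun t _ => sq_nonneg _
  have hfac : (0:ℝ) < 1 / (((N : ℝ) * T) ^ 2) := by positivity
  refine ⟨hDpos, hfeas, fun ω' hω' => ?_, fun ω' hω' hminω' => ?_⟩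
  · have h := hcore ω' hω'
    have h2 : ∑ i, ∑ t, (ωhat i t)^2 ≤ ∑ i, ∑ t, (ω' i t)^2 := by
      have := hdiffnn' ω'; linarith
    exact mul_le_mul_of_nonneg_left h2 hfac.le
  · have h1 := hminω' ωhat hfeas
    have h2 : ∑ i, ∑ t, (ω' i t)^2 ≤ ∑ i, ∑ t, (ωhat i t)^2 :=
      le_of_mul_le_mul_left h1 hfac
    have h3 := hcore ω' hω'
    have heq : ∑ i, ∑ t, (ω' i t - ωhat i t)^2 = 0 :=
      le_antisymm (by linarith) (hdiffnn' ω')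
    funext i
    funext t
    have hin := (Finset.sum_eq_zero_iff_of_nonneg
      (fun i _ => Finset.sum_nonneg fun t _ => sq_nonneg (ω' i t - ωhat i t))).mp
      heq i (Finset.mem_univ i)
    have hpt := (Finset.sum_eq_zero_iff_of_nonneg
      (fun t _ => sq_nonneg (ω' i t - ωhat i t))).mp hin t (Finset.mem_univ t)
    have := pow_eq_zero_iff (two_ne_zero) |>.mp hpt
    exact sub_eq_zero.mp this
end
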